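/- arXiv:1308.5167 — 13 statements merged into one kernel-verified Lean document; each statement's English description precedes it below -/
import Mathlib

section
/- Let X be a nonempty Tychonoff (completely regular Hausdorff) topological space that is locally connected. Then X has a Tychonoff one-point connectification if and only if no connected component of X is compact. That is, there exist a connected Tychonoff space Y and a dense embedding e : X → Y whose complement Y \ e(X) is a singleton, if and only if every connected component of X (as a subspace) is non-compact. -/
universe u

open Set Topology Filter unitInterval

noncomputable section OnePointConnAux

variable {α : Type*} [TopologicalSpace α]

lemma opc_isInducing_stoneCechUnit [T35Space α] :
    Topology.IsInducing (stoneCechUnit : α → StoneCech α) := by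
  rw [isInducing_iff_nhds]
  intro x
  refine le_antisymm continuous_stoneCechUnit.continuousAt.le_comap ?_
  intro U hU
  obtain ⟨U', hsub, hopen, hx⟩ := mem_nhds_iff.mp hU
  obtain ⟨f, hf, hfx, hfK⟩ := CompletelyRegularSpace.completely_regular x U'ᶜ
    hopen.isClosed_compl (by simpa using hx)
  refine mem_comap.mpr ⟨stoneCechExtend hf ⁻¹' {(1 : I)}ᶜ, ?_, ?_⟩
  · refine ((continuous_stoneCechExtend hf).isOpen_preimage _ isOpen_compl_singleton).mem_nhds ?_
    have h1 : stoneCechExtend hf (stoneCechUnit x) = f x := congrFun (stoneCechExtend_extends hf) x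
    simp only [mem_preimage, mem_compl_iff, mem_singleton_iff, h1, hfx]
    exact zero_ne_one
  · intro z hz
    simp only [mem_preimage, mem_compl_iff, mem_singleton_iff] at hz
    have hz' : f z ≠ 1 := fun h => hz (by rw [show stoneCechExtend hf (stoneCechUnit z) = f z from congrFun (stoneCechExtend_extends hf) z]; exact h)
    have hzU' : z ∈ U' := by
      by_contra h
      exact hz' (hfK h)
    exact hsub hzU'

lemma opc_isEmbedding_stoneCechUnit [T35Space α] :
    Topology.IsEmbedding (stoneCechUnit : α → StoneCech α) :=
  ⟨opc_isInducing_stoneCechUnit, injective_stoneCechUnit_of_t35Space⟩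

lemma opc_exists_not_mem_range [T35Space α] (h : ¬ CompactSpace α) :
    ∃ q : StoneCech α, q ∉ Set.range (stoneCechUnit : α → StoneCech α) := by
  by_contra hq
  push_neg at hq
  have hr : Set.range (stoneCechUnit : α → StoneCech α) = univ := eq_univ_iff_forall.mpr hq
  refine h (isCompact_univ_iff.mp ?_)
  rw [opc_isEmbedding_stoneCechUnit.isCompact_iff, image_univ, hr]
  exact isCompact_univ

instance opc_completelyRegular_subtype [CompletelyRegularSpace α] (s : Set α) :
    CompletelyRegularSpace s := by
  constructor
  intro x K hK hx
  obtain ⟨F, hF, hFs⟩ := isClosed_induced_iff.mp hK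
  have hxF : (x : α) ∉ F := fun h => hx (by rw [← hFs]; exact h)
  obtain ⟨f, hf, hfx, hfK⟩ := CompletelyRegularSpace.completely_regular (x : α) F hF hxF
  exact ⟨f ∘ Subtype.val, hf.comp continuous_subtype_val, hfx,
    fun k hk => hfK (by rw [← hFs] at hk; exact hk)⟩

instance opc_t35_subtype [T35Space α] (s : Set α) : T35Space s := {}

end OnePointConnAux

noncomputable section OPC

variable {X : Type u} [TopologicalSpace X]

/-- The connected component corresponding to an element of `ConnectedComponents X`. -/
def opcS (i : ConnectedComponents X) : Set X := ConnectedComponents.mk ⁻¹' {i}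

lemma opcS_mk (x : X) : opcS (ConnectedComponents.mk x) = connectedComponent x :=
  connectedComponents_preimage_singleton

lemma mem_opcS_iff {x : X} {i : ConnectedComponents X} :
    x ∈ opcS i ↔ ConnectedComponents.mk x = i := Iff.rfl

lemma mem_opcS_self (x : X) : x ∈ opcS (ConnectedComponents.mk x) := rfl

lemma isOpen_opcS [LocallyConnectedSpace X] (i : ConnectedComponents X) : IsOpen (opcS i) := by
  obtain ⟨x, rfl⟩ := ConnectedComponents.surjective_coe i
  rw [opcS_mk]
  exact isOpen_connectedComponent

lemma isPreconnected_opcS (i : ConnectedComponents X) : IsPreconnected (opcS i) := by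
  obtain ⟨x, rfl⟩ := ConnectedComponents.surjective_coe i
  rw [opcS_mk]
  exact isPreconnected_connectedComponent

variable (q : ∀ i : ConnectedComponents X, StoneCech ↥(opcS i))

/-- The topology of the one-point connectification. -/
def opcTopo : TopologicalSpace (Option X) where
  IsOpen A := IsOpen (some ⁻¹' A) ∧
    (none ∈ A → ∀ i, q i ∉ closure (stoneCechUnit '' {z : ↥(opcS i) | (z : X) ∉ some ⁻¹' A}))
  isOpen_univ := by
    refine ⟨by simpa using isOpen_univ, fun _ i => ?_⟩
    have : {z : ↥(opcS i) | (z : X) ∉ some ⁻¹' (univ : Set (Option X))} = ∅ := by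
      ext z; simp
    simp [this]
  isOpen_inter := by
    rintro A B ⟨hA1, hA2⟩ ⟨hB1, hB2⟩
    refine ⟨by rw [preimage_inter]; exact hA1.inter hB1, fun hn i => ?_⟩
    have hset : {z : ↥(opcS i) | (z : X) ∉ some ⁻¹' (A ∩ B)} =
        {z : ↥(opcS i) | (z : X) ∉ some ⁻¹' A} ∪ {z : ↥(opcS i) | (z : X) ∉ some ⁻¹' B} := by
      ext z; simp [mem_preimage, not_and_or]; tauto
    rw [hset, image_union, closure_union]
    rintro (h | h)
    · exact hA2 hn.1 i h
    · exact hB2 hn.2 i h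
  isOpen_sUnion := by
    intro c hc
    constructor
    · rw [preimage_sUnion]
      exact isOpen_biUnion fun A hA => (hc A hA).1
    · rintro ⟨A, hAc, hnA⟩ i
      have hsub : {z : ↥(opcS i) | (z : X) ∉ some ⁻¹' ⋃₀ c} ⊆
          {z : ↥(opcS i) | (z : X) ∉ some ⁻¹' A} := by
        intro z hz hA
        exact hz ⟨A, hAc, hA⟩
      intro h
      exact (hc A hAc).2 hnA i (closure_mono (image_mono hsub) h)

lemma opc_isOpen_iff {A : Set (Option X)} :
    IsOpen[opcTopo q] A ↔ IsOpen (some ⁻¹' A) ∧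
      (none ∈ A → ∀ i, q i ∉ closure (stoneCechUnit '' {z : ↥(opcS i) | (z : X) ∉ some ⁻¹' A})) :=
  Iff.rfl

end OPC

section Main

variable {X : Type u} [TopologicalSpace X] [Nonempty X] [T35Space X] [LocallyConnectedSpace X]

theorem opc_backward (hnc : ∀ x : X, ¬ IsCompact (connectedComponent x)) :
    ∃ (Y : Type u) (_ : TopologicalSpace Y), ConnectedSpace Y ∧ T35Space Y ∧
      ∃ e : X → Y, IsDenseEmbedding e ∧ ∃ p : Y, (Set.range e)ᶜ = {p} := by
  classical
  have hq' : ∀ i : ConnectedComponents X,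
      ∃ qq : StoneCech ↥(opcS i), qq ∉ Set.range stoneCechUnit := by
    intro i
    apply opc_exists_not_mem_range
    intro hcs
    obtain ⟨x, rfl⟩ := ConnectedComponents.surjective_coe i
    refine hnc x ?_
    rw [← opcS_mk]
    exact isCompact_iff_compactSpace.mpr hcs
  choose q hq using hq'
  letI t : TopologicalSpace (Option X) := opcTopo q
  have hopen : ∀ A : Set (Option X), IsOpen A ↔ IsOpen (some ⁻¹' A) ∧
      (none ∈ A → ∀ i, q i ∉ closure (stoneCechUnit '' {z : ↥(opcS i) | (z : X) ∉ some ⁻¹' A})) :=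
    fun A => opc_isOpen_iff q
  -- `some` is inducing
  have hind : Topology.IsInducing (some : X → Option X) := by
    refine ⟨TopologicalSpace.ext_iff.mpr fun U => ?_⟩
    rw [isOpen_induced_iff]
    constructor
    · intro hU
      refine ⟨some '' U, ?_, preimage_image_eq U (Option.some_injective X)⟩
      rw [hopen]
      refine ⟨by rwa [preimage_image_eq U (Option.some_injective X)], fun hn => ?_⟩
      exact absurd hn (by rintro ⟨z, _, h⟩; exact Option.some_ne_none z h)
    · rintro ⟨A, hA, rfl⟩
      exact ((hopen A).mp hA).1
  have hcont_some : Continuous (some : X → Option X) := hind.continuous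
  -- none is in the closure of every component
  have hnonecl : ∀ i : ConnectedComponents X, (none : Option X) ∈ closure (some '' opcS i) := by
    intro i
    rw [mem_closure_iff]
    intro A hA hnA
    by_contra hemp
    rw [not_nonempty_iff_eq_empty] at hemp
    have hall : {z : ↥(opcS i) | (z : X) ∉ some ⁻¹' A} = univ := by
      ext z
      simp only [mem_setOf_eq, mem_univ, iff_true, mem_preimage]
      intro hz
      have : (some (z : X)) ∈ A ∩ some '' opcS i := ⟨hz, mem_image_of_mem _ z.2⟩
      rw [hemp] at this
      exact this
    have hcond := ((hopen A).mp hA).2 hnA i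
    rw [hall, image_univ] at hcond
    exact hcond (denseRange_stoneCechUnit (q i))
  -- dense range
  have hdense : DenseRange (some : X → Option X) := by
    intro y
    cases y with
    | none =>
        exact closure_mono (image_subset_range _ _)
          (hnonecl (ConnectedComponents.mk (Classical.arbitrary X)))
    | some x => exact subset_closure ⟨x, rfl⟩
  -- preconnectedness
  have hpc : IsPreconnected (univ : Set (Option X)) := by
    have huniv : ⋃₀ (Set.range fun i : ConnectedComponents X =>
        insert (none : Option X) (some '' opcS i)) = univ := by
      rw [sUnion_range]
      ext y
      simp only [mem_iUnion, mem_univ, iff_true]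
      cases y with
      | none => exact ⟨ConnectedComponents.mk (Classical.arbitrary X), mem_insert _ _⟩
      | some x =>
          exact ⟨ConnectedComponents.mk x,
            mem_insert_of_mem _ (mem_image_of_mem _ (mem_opcS_self x))⟩
    rw [← huniv]
    apply isPreconnected_sUnion (none : Option X)
    · rintro s ⟨i, rfl⟩; exact mem_insert _ _
    · rintro s ⟨i, rfl⟩
      refine IsPreconnected.subset_closure
        ((isPreconnected_opcS i).image _ hcont_some.continuousOn) (subset_insert _ _) ?_
      rintro y (rfl | hy)
      · exact hnonecl i
      · exact subset_closure hy
  -- T1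
  have hT1 : T1Space (Option X) := by
    constructor
    intro y
    rw [← isOpen_compl_iff]
    cases y with
    | none =>
        rw [hopen]
        constructor
        · have h1 : some ⁻¹' ({(none : Option X)}ᶜ) = univ := by ext z; simp
          rw [h1]; exact isOpen_univ
        · intro hn; simp at hn
    | some x =>
        rw [hopen]
        have hpre : some ⁻¹' ({some x}ᶜ) = {x}ᶜ := by
          ext z; simp [Option.some_injective X |>.eq_iff]
        refine ⟨by rw [hpre]; exact isOpen_compl_singleton, fun _ i => ?_⟩
        by_cases hx : x ∈ opcS i
        · have hset : {z : ↥(opcS i) | (z : X) ∉ some ⁻¹' ({some x}ᶜ)} = {⟨x, hx⟩} := by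
            ext z
            simp only [mem_setOf_eq, mem_preimage, mem_compl_iff, mem_singleton_iff, not_not]
            constructor
            · intro h; exact Subtype.ext (Option.some_injective X h)
            · rintro rfl; rfl
          rw [hset, image_singleton, closure_singleton]
          intro h
          exact hq i (by rw [mem_singleton_iff] at h; rw [h]; exact mem_range_self _)
        · have hset : {z : ↥(opcS i) | (z : X) ∉ some ⁻¹' ({some x}ᶜ)} = ∅ := by
            ext z
            simp only [mem_setOf_eq, mem_preimage, mem_compl_iff, not_not, mem_empty_iff_false,
              iff_false]
            intro h
            exact hx (Option.some_injective X h ▸ z.2)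
          rw [hset, image_empty, closure_empty]
          exact notMem_empty _
  -- completely regular
  have hCR : CompletelyRegularSpace (Option X) := by
    constructor
    intro y K hK hy
    cases y with
    | some x =>
        obtain ⟨i, hi⟩ : ∃ i, i = ConnectedComponents.mk x := ⟨_, rfl⟩
        have hx : x ∈ opcS i := by rw [hi]; exact mem_opcS_self x
        have hquneq : q i ≠ stoneCechUnit ⟨x, hx⟩ := fun h => hq i (h ▸ mem_range_self _)
        have hnq : ({q i}ᶜ : Set (StoneCech ↥(opcS i))) ∈ 𝓝 (stoneCechUnit ⟨x, hx⟩) :=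
          isOpen_compl_singleton.mem_nhds (by simpa using fun h => hquneq h.symm)
        obtain ⟨V, hVmem, hVc, hVsub⟩ := exists_mem_nhds_isClosed_subset hnq
        have huO : stoneCechUnit ⟨x, hx⟩ ∈ interior V := mem_interior_iff_mem_nhds.mpr hVmem
        have hqO : q i ∉ closure (interior V) := fun h =>
          (hVsub (closure_minimal interior_subset hVc h)) rfl
        set W : Set X :=
          (Subtype.val '' (stoneCechUnit ⁻¹' interior V)) ∩ (some ⁻¹' K)ᶜ with hW
        have hWopen : IsOpen W := by
          refine IsOpen.inter ?_ (isOpen_compl_iff.mpr (hK.preimage hcont_some))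
          exact (isOpen_opcS i).isOpenMap_subtype_val _
            (isOpen_interior.preimage continuous_stoneCechUnit)
        have hWS : W ⊆ opcS i := by
          rintro z ⟨⟨z', _, rfl⟩, _⟩
          exact z'.2
        have hxW : x ∈ W := ⟨⟨⟨x, hx⟩, huO, rfl⟩, fun h => hy h⟩
        obtain ⟨h, hc, hh0, hh1⟩ := CompletelyRegularSpace.completely_regular x Wᶜ
          (isClosed_compl_iff.mpr hWopen) (by simpa using hxW)
        refine ⟨fun o => Option.elim o 1 h, ?_, hh0, ?_⟩
        · rw [continuous_def]
          intro V' hV'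
          rw [hopen]
          constructor
          · exact hV'.preimage hc
          · intro hn j
            have h1V : (1 : I) ∈ V' := hn
            have hsub2 : {z : ↥(opcS j) |
                  (z : X) ∉ some ⁻¹' ((fun o => Option.elim o 1 h) ⁻¹' V')} ⊆
                {z : ↥(opcS j) | (z : X) ∈ W} := by
              intro z hz
              by_contra hzW
              refine hz ?_
              show h (z : X) ∈ V'
              have := hh1 hzW
              rw [this]
              exact h1V
            by_cases hij : j = i
            · subst hij
              have himg : stoneCechUnit '' {z : ↥(opcS j) |
                  (z : X) ∉ some ⁻¹' ((fun o => Option.elim o 1 h) ⁻¹' V')} ⊆ interior V := by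
                rintro _ ⟨z, hz, rfl⟩
                obtain ⟨⟨z', hz'O, hz'val⟩, _⟩ := hsub2 hz
                rwa [Subtype.ext hz'val] at hz'O
              exact fun hmem => hqO (closure_mono himg hmem)
            · have hemp : {z : ↥(opcS j) |
                  (z : X) ∉ some ⁻¹' ((fun o => Option.elim o 1 h) ⁻¹' V')} = ∅ := by
                ext z
                simp only [mem_empty_iff_false, iff_false]
                intro hz
                exact hij (z.2.symm.trans (hWS (hsub2 hz) : (z : X) ∈ opcS i))
              rw [hemp, image_empty, closure_empty]
              exact notMem_empty _
        · intro k hk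
          cases k with
          | none => rfl
          | some z =>
              show h z = 1
              have hzW : z ∈ Wᶜ := fun hzW => hzW.2 hk
              exact hh1 hzW
    | none =>
        have hcond := ((hopen Kᶜ).mp hK.isOpen_compl).2 (by simpa using hy)
        choose F hFc hF0 hF1 using fun i =>
          CompletelyRegularSpace.completely_regular (q i) _ isClosed_closure (hcond i)
        have hkey : ∀ (i : ConnectedComponents X) (z : ↥(opcS i)),
            F (ConnectedComponents.mk (z : X)) (stoneCechUnit ⟨(z : X), rfl⟩)
              = F i (stoneCechUnit z) := by
          rintro i ⟨z, hz⟩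
          have hz' : ConnectedComponents.mk z = i := hz
          subst hz'
          rfl
        refine ⟨fun o => Option.elim o 0
          (fun z => F (ConnectedComponents.mk z) (stoneCechUnit ⟨z, rfl⟩)), ?_, rfl, ?_⟩
        · rw [continuous_def]
          intro V hV
          rw [hopen]
          constructor
          · have heq : some ⁻¹' ((fun o => Option.elim o 0
                (fun z => F (ConnectedComponents.mk z) (stoneCechUnit ⟨z, rfl⟩))) ⁻¹' V) =
                ⋃ i, Subtype.val '' ((fun w : ↥(opcS i) => F i (stoneCechUnit w)) ⁻¹' V) := by
              ext z
              simp only [mem_preimage, mem_iUnion]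
              constructor
              · intro hzV
                exact ⟨ConnectedComponents.mk z, ⟨z, rfl⟩, hzV, rfl⟩
              · rintro ⟨i, w, hw, rfl⟩
                show F (ConnectedComponents.mk (w : X)) (stoneCechUnit ⟨(w : X), rfl⟩) ∈ V
                rw [hkey i w]
                exact hw
            rw [heq]
            exact isOpen_iUnion fun i => (isOpen_opcS i).isOpenMap_subtype_val _
              (hV.preimage ((hFc i).comp continuous_stoneCechUnit))
          · intro hn i
            have h0V : (0 : I) ∈ V := hn
            have himg : stoneCechUnit '' {z : ↥(opcS i) | (z : X) ∉ some ⁻¹' ((fun o =>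
                Option.elim o 0 (fun z => F (ConnectedComponents.mk z)
                  (stoneCechUnit ⟨z, rfl⟩))) ⁻¹' V)} ⊆ (F i) ⁻¹' Vᶜ := by
              rintro _ ⟨z, hz, rfl⟩
              simp only [mem_setOf_eq, mem_preimage] at hz ⊢
              intro hFz
              refine hz ?_
              show F (ConnectedComponents.mk (z : X)) (stoneCechUnit ⟨(z : X), rfl⟩) ∈ V
              rw [hkey i z]
              exact hFz
            intro hmem
            have hmem2 : q i ∈ (F i) ⁻¹' Vᶜ :=
              closure_minimal himg ((hV.isClosed_compl).preimage (hFc i)) hmem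
            exact hmem2 ((hF0 i) ▸ h0V)
        · intro k hk
          cases k with
          | none => exact absurd hk hy
          | some z =>
              show F (ConnectedComponents.mk z) (stoneCechUnit ⟨z, rfl⟩) = 1
              refine hF1 (ConnectedComponents.mk z) (subset_closure ?_)
              refine mem_image_of_mem _ ?_
              simp only [mem_setOf_eq, mem_preimage, mem_compl_iff, not_not]
              exact hk
  haveI := hT1
  haveI := hCR
  haveI : PreconnectedSpace (Option X) := ⟨hpc⟩
  haveI hCS : ConnectedSpace (Option X) := ⟨inferInstance⟩
  haveI hT35 : T35Space (Option X) := {}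
  refine ⟨Option X, t, hCS, hT35, some, ?_, none, ?_⟩
  · exact ⟨⟨hind, hdense⟩, Option.some_injective X⟩
  · ext y
    cases y with
    | none => simp
    | some x => simp

end Main

/-- A nonempty locally connected Tychonoff space has a Tychonoff one-point
connectification if and only if it contains no compact connected component. -/
theorem one_point_connectification_tfae
    (X : Type u) [TopologicalSpace X] [Nonempty X] [T35Space X]
    [LocallyConnectedSpace X] :
    (∃ (Y : Type u) (_ : TopologicalSpace Y), ConnectedSpace Y ∧ T35Space Y ∧
      ∃ e : X → Y, IsDenseEmbedding e ∧ ∃ p : Y, (Set.range e)ᶜ = {p}) ↔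
    (∀ x : X, ¬ IsCompact (connectedComponent x)) := by
  constructor
  · rintro ⟨Y, tY, hconn, hT35, e, hde, p, hp⟩ x hcomp
    haveI := hconn
    haveI := hT35
    have hrange : Set.range e = {p}ᶜ := by rw [← compl_compl (Set.range e), hp]
    have hpn : p ∉ Set.range e := by rw [hrange]; exact fun h => h rfl
    obtain ⟨A, hA, hAe⟩ :=
      (hde.toIsDenseInducing.toIsInducing.isOpen_iff).mp
        (isOpen_connectedComponent (x := x))
    have himg : e '' connectedComponent x = A ∩ Set.range e := by
      rw [← hAe, Set.image_preimage_eq_inter_range]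
    have hopen : IsOpen (e '' connectedComponent x) := by
      rw [himg, hrange]
      exact hA.inter isOpen_compl_singleton
    have hclosed : IsClosed (e '' connectedComponent x) :=
      (hcomp.image hde.toIsDenseInducing.toIsInducing.continuous).isClosed
    rcases isClopen_iff.mp ⟨hclosed, hopen⟩ with hemp | huniv
    · have : e x ∈ e '' connectedComponent x :=
        Set.mem_image_of_mem _ mem_connectedComponent
      rw [hemp] at this
      exact this
    · have : p ∈ e '' connectedComponent x := by rw [huniv]; trivial
      exact hpn (Set.image_subset_range _ _ this)
  · exact opc_backward
end

section
/- Let X be a nonempty Tychonoff (completely regular Hausdorff) topological space in which every connected component is open. Then X has a Tychonoff one-point connectification if and only if no connected component of X is compact. -/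
open Set Topology unitInterval

universe u

section Aux

variable {X : Type u} [TopologicalSpace X]

private lemma clopen_indicator {C : Set X} (hC : IsClopen C) :
    ∃ f : X → I, Continuous f ∧ (∀ x ∈ C, f x = 1) ∧ (∀ x ∉ C, f x = 0) := by
  classical
  refine ⟨fun x => if x ∈ C then 1 else 0, ?_, ?_, ?_⟩
  · apply Continuous.if
    · intro a ha
      have : frontier {a : X | a ∈ C} = (∅ : Set X) := hC.frontier_eq
      rw [this] at ha
      exact absurd ha (notMem_empty a)
    · exact continuous_const
    · exact continuous_const
  · intro x hx; simp [hx]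
  · intro x hx; simp [hx]

private lemma isEmbedding_stoneCechUnit' [T35Space X] :
    IsEmbedding (stoneCechUnit : X → StoneCech X) := by
  refine ⟨isInducing_iff_nhds.2 fun x => le_antisymm
    ((continuous_stoneCechUnit.tendsto x).le_comap) ?_, injective_stoneCechUnit_of_t35Space⟩
  intro s hs
  obtain ⟨U, hUs, hUo, hxU⟩ := mem_nhds_iff.1 hs
  obtain ⟨f, fc, fx, fU⟩ :=
    CompletelyRegularSpace.completely_regular x Uᶜ hUo.isClosed_compl (by simpa)
  refine Filter.mem_comap.2 ⟨stoneCechExtend fc ⁻¹' {y : I | (y : ℝ) < 1/2}, ?_, ?_⟩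
  · apply IsOpen.mem_nhds
    · exact (isOpen_lt continuous_subtype_val continuous_const).preimage
        (continuous_stoneCechExtend fc)
    · show ((stoneCechExtend fc (stoneCechUnit x) : I) : ℝ) < 1/2
      rw [show stoneCechExtend fc (stoneCechUnit x) = f x from
        congrFun (stoneCechExtend_extends fc) x, fx]
      norm_num
  · intro b hb
    simp only [mem_preimage, mem_setOf_eq,
      show stoneCechExtend fc (stoneCechUnit b) = f b from
        congrFun (stoneCechExtend_extends fc) b] at hb
    by_contra hbU
    have hb1 : f b = 1 := fU (by simpa using fun h => hbU (hUs h))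
    rw [hb1] at hb
    norm_num at hb

private lemma t35_subtype {K : Type*} [TopologicalSpace K] [T35Space K] (S : Set K) :
    T35Space S := by
  haveI : CompletelyRegularSpace S := by
    constructor
    intro x C hC hxC
    obtain ⟨D, hD, rfl⟩ := isClosed_induced_iff.1 hC
    obtain ⟨f, fc, fx, fD⟩ :=
      CompletelyRegularSpace.completely_regular (x : K) D hD (fun h => hxC h)
    exact ⟨f ∘ Subtype.val, fc.comp continuous_subtype_val, fx, fun y hy => fD hy⟩
  exact {}

end Aux

private lemma forward_dir {X : Type u} [TopologicalSpace X] [T35Space X]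
    (hopen : ∀ x : X, IsOpen (connectedComponent x))
    {Y : Type u} [TopologicalSpace Y] (hconn : ConnectedSpace Y) (ht : T35Space Y)
    {e : X → Y} (hde : IsDenseEmbedding e) {p : Y} (hp : (Set.range e)ᶜ = {p}) :
    ∀ x : X, ¬ IsCompact (connectedComponent x) := by
  intro x hcomp
  haveI := ht
  haveI : PreconnectedSpace Y := hconn.toPreconnectedSpace
  have hrange : IsOpen (range e) := by
    rw [← compl_compl (range e), hp]
    exact isClosed_singleton.isOpen_compl
  have hoe : IsOpenEmbedding e := ⟨hde.isEmbedding, hrange⟩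
  have hclopen : IsClopen (e '' connectedComponent x) :=
    ⟨(hcomp.image hde.toIsDenseInducing.continuous).isClosed, hoe.isOpenMap _ (hopen x)⟩
  rcases isClopen_iff.1 hclopen with h | h
  · have hmem : e x ∈ e '' connectedComponent x := ⟨x, mem_connectedComponent, rfl⟩
    rw [h] at hmem
    exact hmem
  · have hpmem : p ∈ e '' connectedComponent x := h ▸ mem_univ p
    have hpr : p ∈ range e := ⟨hpmem.choose, hpmem.choose_spec.2⟩
    have hpc : p ∈ (range e)ᶜ := hp ▸ mem_singleton p
    exact hpc hpr

private lemma reverse_dir {X : Type u} [TopologicalSpace X] [Nonempty X] [T35Space X]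
    (hopen : ∀ x : X, IsOpen (connectedComponent x))
    (hnc : ∀ x : X, ¬ IsCompact (connectedComponent x)) :
    ∃ (Y : Type u) (_ : TopologicalSpace Y), ConnectedSpace Y ∧ T35Space Y ∧
      ∃ e : X → Y, IsDenseEmbedding e ∧ ∃ p : Y, (Set.range e)ᶜ = {p} := by
  classical
  set β := StoneCech X with hβ
  set e : X → β := stoneCechUnit with he_def
  have he : IsEmbedding e := isEmbedding_stoneCechUnit'
  -- choose a remainder point for every connected component
  have hex : ∀ x : X, ∃ b : β,
      b ∈ closure (e '' connectedComponent x) ∧ b ∉ e '' connectedComponent x := by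
    intro x
    by_contra h
    push_neg at h
    have hcl : closure (e '' connectedComponent x) = e '' connectedComponent x :=
      Subset.antisymm (fun b hb => h b hb) subset_closure
    have : IsCompact (e '' connectedComponent x) := by
      rw [← hcl]; exact isClosed_closure.isCompact
    exact hnc x (he.isCompact_iff.2 this)
  have hex' : ∀ S : Set X, ∃ b : β,
      (∃ x, S = connectedComponent x) → b ∈ closure (e '' S) ∧ b ∉ e '' S := by
    intro S
    by_cases h : ∃ x, S = connectedComponent x
    · obtain ⟨x, rfl⟩ := h
      obtain ⟨b, hb1, hb2⟩ := hex x
      exact ⟨b, fun _ => ⟨hb1, hb2⟩⟩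
    · exact ⟨e (Classical.arbitrary X), fun hx => absurd hx h⟩
  choose r hr using hex'
  set q : X → β := fun x => r (connectedComponent x) with hq_def
  have hq : ∀ x : X, q x ∈ closure (e '' connectedComponent x) ∧
      q x ∉ e '' connectedComponent x := fun x => hr _ ⟨x, rfl⟩
  have hqeq : ∀ {x y : X}, y ∈ connectedComponent x → q y = q x := by
    intro x y hy
    simp only [hq_def]
    rw [connectedComponent_eq hy]
  set A : Set β := closure (range q) with hA_def
  have hAclosed : IsClosed A := isClosed_closure
  have hqA : ∀ x : X, q x ∈ A := fun x => subset_closure ⟨x, rfl⟩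
  -- the image of X misses A
  have keyA : ∀ x : X, e x ∉ A := by
    intro x hx
    obtain ⟨f, fc, f1, f0⟩ := clopen_indicator ⟨isClosed_connectedComponent, hopen x⟩
    set F : β → I := stoneCechExtend fc with hF
    have hFe : ∀ y : X, F (e y) = f y := fun y => congrFun (stoneCechExtend_extends fc) y
    set V : Set β := (F ⁻¹' {y : I | 1/2 < (y : ℝ)}) \ {q x} with hV
    have hVopen : IsOpen V :=
      IsOpen.sdiff ((isOpen_lt continuous_const continuous_subtype_val).preimage
        (continuous_stoneCechExtend fc)) isClosed_singleton
    have hxV : e x ∈ V := by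
      constructor
      · show (1:ℝ)/2 < ((F (e x) : I) : ℝ)
        rw [hFe x, f1 x mem_connectedComponent]
        norm_num
      · intro h
        exact (hq x).2 ((mem_singleton_iff.1 h) ▸ ⟨x, mem_connectedComponent, rfl⟩)
    have hVQ : ∀ y : X, q y ∉ V := by
      intro y hyV
      by_cases hy : y ∈ connectedComponent x
      · exact hyV.2 (mem_singleton_iff.2 (hqeq hy))
      · have hsub : e '' connectedComponent y ⊆ F ⁻¹' {0} := by
          rintro _ ⟨z, hz, rfl⟩
          have hzx : z ∉ connectedComponent x := by
            intro hzx
            have h1 := connectedComponent_eq hz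
            have h2 := connectedComponent_eq hzx
            exact hy (by rw [h2, ← h1]; exact mem_connectedComponent)
          simp only [mem_preimage, mem_singleton_iff, hFe, f0 z hzx]
        have hq0 : q y ∈ F ⁻¹' {0} :=
          closure_minimal hsub
            (isClosed_singleton.preimage (continuous_stoneCechExtend fc)) (hq y).1
        have h12 := hyV.1
        rw [mem_preimage, mem_singleton_iff] at hq0
        simp only [mem_preimage, mem_setOf_eq, hq0] at h12
        norm_num at h12
    obtain ⟨b, hbV, y, rfl⟩ := mem_closure_iff.1 hx V hVopen hxV
    exact hVQ y hbV
  -- the quotient collapsing A to a point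
  let rel : β → β → Prop := fun a b => a = b ∨ (a ∈ A ∧ b ∈ A)
  have requiv : Equivalence rel := by
    refine ⟨fun a => Or.inl rfl, ?_, ?_⟩
    · rintro a b (rfl | ⟨h1, h2⟩)
      · exact Or.inl rfl
      · exact Or.inr ⟨h2, h1⟩
    · rintro a b c (rfl | ⟨h1, h2⟩) (rfl | ⟨h3, h4⟩)
      · exact Or.inl rfl
      · exact Or.inr ⟨h3, h4⟩
      · exact Or.inr ⟨h1, h2⟩
      · exact Or.inr ⟨h1, h4⟩
  letI s : Setoid β := ⟨rel, requiv⟩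
  let K := Quotient s
  let π : β → K := Quotient.mk s
  have hπqm : IsQuotientMap π := isQuotientMap_quotient_mk'
  have πcont : Continuous π := hπqm.continuous
  have πeq : ∀ {a b : β}, π a = π b ↔ (a = b ∨ (a ∈ A ∧ b ∈ A)) := by
    intro a b
    exact ⟨fun h => Quotient.exact h, fun h => Quotient.sound h⟩
  have satOpen : ∀ V : Set β, IsOpen V → (A ∩ V = ∅ ∨ A ⊆ V) → IsOpen (π '' V) := by
    intro V hV hsat
    have hpre : π ⁻¹' (π '' V) = V := by
      apply Subset.antisymm
      · rintro b ⟨v, hvV, hveq⟩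
        rcases πeq.1 hveq with rfl | ⟨hvA, hbA⟩
        · exact hvV
        · rcases hsat with hdisj | hsub
          · exact absurd (mem_inter hvA hvV) (by simp [hdisj])
          · exact hsub hbA
      · exact fun b hb => ⟨b, hb, rfl⟩
    rw [← hπqm.isOpen_preimage, hpre]
    exact hV
  have imgDisj : ∀ u v : Set β, Disjoint u v → (A ∩ u = ∅ ∨ A ⊆ u) → (A ∩ v = ∅ ∨ A ⊆ v) →
      Disjoint (π '' u) (π '' v) := by
    intro u v huv hu hv
    rw [Set.disjoint_left]
    rintro k ⟨a, hau, rfl⟩ ⟨b, hbv, hba⟩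
    rcases πeq.1 hba with rfl | ⟨hbA, haA⟩
    · exact Set.disjoint_left.1 huv hau hbv
    · rcases hu with hu | hu
      · exact absurd (mem_inter haA hau) (by simp [hu])
      · rcases hv with hv | hv
        · exact absurd (mem_inter hbA hbv) (by simp [hv])
        · exact Set.disjoint_left.1 huv hau (hv haA)
  haveI : T2Space K := by
    constructor
    intro k1 k2 hne
    obtain ⟨b1, rfl⟩ := Quotient.exists_rep k1
    obtain ⟨b2, rfl⟩ := Quotient.exists_rep k2
    have hne' : ¬ rel b1 b2 := fun h => hne (Quotient.sound h)
    by_cases h1 : b1 ∈ A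
    · have h2 : b2 ∉ A := fun h2 => hne' (Or.inr ⟨h1, h2⟩)
      obtain ⟨u, v, hu, hv, hAu, hb2v, huv⟩ :=
        normal_separation hAclosed isClosed_singleton (disjoint_singleton_right.2 h2)
      have hAv : A ∩ v = ∅ := by
        rw [eq_empty_iff_forall_notMem]
        rintro a ⟨haA, hav⟩
        exact Set.disjoint_left.1 huv (hAu haA) hav
      exact ⟨π '' u, π '' v, satOpen u hu (Or.inr hAu), satOpen v hv (Or.inl hAv),
        ⟨b1, hAu h1, rfl⟩, ⟨b2, hb2v rfl, rfl⟩,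
        imgDisj u v huv (Or.inr hAu) (Or.inl hAv)⟩
    · by_cases h2 : b2 ∈ A
      · have h1' : b1 ∉ A := h1
        obtain ⟨u, v, hu, hv, hAu, hb1v, huv⟩ :=
          normal_separation hAclosed isClosed_singleton (disjoint_singleton_right.2 h1')
        have hAv : A ∩ v = ∅ := by
          rw [eq_empty_iff_forall_notMem]
          rintro a ⟨haA, hav⟩
          exact Set.disjoint_left.1 huv (hAu haA) hav
        exact ⟨π '' v, π '' u, satOpen v hv (Or.inl hAv), satOpen u hu (Or.inr hAu),
          ⟨b1, hb1v rfl, rfl⟩, ⟨b2, hAu h2, rfl⟩,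
          imgDisj v u huv.symm (Or.inl hAv) (Or.inr hAu)⟩
      · have hb12 : b1 ≠ b2 := fun h => hne' (Or.inl h)
        obtain ⟨u, v, hu, hv, hb1u, hBv, huv⟩ :=
          normal_separation isClosed_singleton (isClosed_singleton.union hAclosed)
            (by
              rw [Set.disjoint_union_right]
              exact ⟨by simpa using hb12, by simpa using h1⟩)
        have hAv : A ⊆ v := fun a ha => hBv (Or.inr ha)
        have hAu : A ∩ u = ∅ := by
          rw [eq_empty_iff_forall_notMem]
          rintro a ⟨haA, hau⟩
          exact Set.disjoint_left.1 huv hau (hAv haA)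
        exact ⟨π '' u, π '' v, satOpen u hu (Or.inl hAu), satOpen v hv (Or.inr hAv),
          ⟨b1, hb1u rfl, rfl⟩, ⟨b2, hBv (Or.inl rfl), rfl⟩,
          imgDisj u v huv (Or.inl hAu) (Or.inr hAv)⟩
  haveI : CompactSpace K := Quotient.compactSpace
  haveI : T35Space K := inferInstance
  set x₀ : X := Classical.arbitrary X with hx₀
  set p : K := π (q x₀) with hp_def
  set S : Set K := insert p (range (π ∘ e)) with hS_def
  haveI : T35Space S := t35_subtype S
  let E : X → S := fun x => ⟨π (e x), Or.inr ⟨x, rfl⟩⟩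
  have hpA : ∀ a ∈ A, π a = p := fun a ha => πeq.2 (Or.inr ⟨ha, hqA x₀⟩)
  have hpe : ∀ x : X, π (e x) ≠ p := by
    intro x h
    rcases πeq.1 h with h' | ⟨h', _⟩
    · exact keyA x (h' ▸ hqA x₀)
    · exact keyA x h'
  have contE : Continuous E := (πcont.comp he.continuous).subtype_mk _
  have injE : Function.Injective E := by
    intro a b hab
    have hab' : π (e a) = π (e b) := congrArg Subtype.val hab
    rcases πeq.1 hab' with h' | ⟨h', _⟩
    · exact injective_stoneCechUnit_of_t35Space h'
    · exact absurd h' (keyA a)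
  have pclos : ∀ x : X, (⟨p, mem_insert _ _⟩ : S) ∈ closure (E '' connectedComponent x) := by
    intro x
    rw [mem_closure_iff]
    intro o ho hpo
    obtain ⟨O, hO, rfl⟩ := isOpen_induced_iff.1 ho
    have hqO : q x ∈ π ⁻¹' O := by
      show π (q x) ∈ O
      rw [hpA _ (hqA x)]
      exact hpo
    obtain ⟨b, hbO, z, hzC, rfl⟩ :=
      mem_closure_iff.1 (hq x).1 (π ⁻¹' O) (hO.preimage πcont) hqO
    exact ⟨E z, hbO, ⟨z, hzC, rfl⟩⟩
  have denseE : DenseRange E := by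
    rintro ⟨k, hk⟩
    rcases Set.mem_insert_iff.1 hk with hk' | ⟨x, hx⟩
    · subst hk'
      exact closure_mono (image_subset_range E _) (pclos x₀)
    · exact subset_closure ⟨x, Subtype.ext hx⟩
  have hIDE : IsDenseEmbedding E := by
    refine IsDenseEmbedding.mk' E contE denseE injE ?_
    intro a t ht
    obtain ⟨U, hUs, hUo, haU⟩ := mem_nhds_iff.1 ht
    obtain ⟨V₀, hV₀o, hV₀e⟩ := he.toIsInducing.isOpen_iff.1 hUo
    have hAV : A ∩ (V₀ \ A) = ∅ := inter_diff_self A V₀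
    have hO : IsOpen (π '' (V₀ \ A)) := satOpen _ (hV₀o.sdiff hAclosed) (Or.inl hAV)
    refine ⟨Subtype.val ⁻¹' (π '' (V₀ \ A)), ?_, ?_⟩
    · apply IsOpen.mem_nhds (hO.preimage continuous_subtype_val)
      have haV₀ : e a ∈ V₀ := by
        have : a ∈ e ⁻¹' V₀ := by rw [hV₀e]; exact haU
        exact this
      exact ⟨e a, ⟨haV₀, keyA a⟩, rfl⟩
    · intro b hb
      obtain ⟨v, hvV, hveq⟩ := hb
      rcases πeq.1 hveq with h' | ⟨_, h'⟩
      · have : b ∈ e ⁻¹' V₀ := by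
          show e b ∈ V₀
          rw [← h']
          exact hvV.1
        rw [hV₀e] at this
        exact hUs this
      · exact absurd h' (keyA b)
  have hconn : ConnectedSpace S := by
    have key : ∀ w : Set S, IsClopen w → (⟨p, mem_insert _ _⟩ : S) ∈ w → w = univ := by
      intro w hw hPw
      rw [eq_univ_iff_forall]
      rintro ⟨k, hk⟩
      rcases Set.mem_insert_iff.1 hk with hk' | ⟨x, hx⟩
      · subst hk'
        exact hPw
      · by_contra hyw
        have hEx : E x ∈ wᶜ := by
          have hkE : (⟨k, hk⟩ : S) = E x := Subtype.ext hx.symm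
          rw [hkE] at hyw
          exact hyw
        have hpre : IsPreconnected (E '' connectedComponent x) :=
          isPreconnected_connectedComponent.image E contE.continuousOn
        have hsub : E '' connectedComponent x ⊆ wᶜ :=
          hpre.subset_isClopen hw.compl ⟨E x, ⟨x, mem_connectedComponent, rfl⟩, hEx⟩
        have hPc : (⟨p, mem_insert _ _⟩ : S) ∈ wᶜ :=
          closure_minimal hsub hw.compl.isClosed (pclos x)
        exact hPc hPw
    haveI : PreconnectedSpace S := by
      constructor
      intro u v hu hv hcov h1 h2
      obtain ⟨y1, -, hy1⟩ := h1
      obtain ⟨y2, -, hy2⟩ := h2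
      by_contra hne
      have huv : u ∩ v = ∅ := by
        rw [not_nonempty_iff_eq_empty, univ_inter] at hne
        exact hne
      have hcov' : ∀ y : S, y ∈ u ∨ y ∈ v := fun y => hcov (mem_univ y)
      have hucompl : uᶜ = v := by
        apply Subset.antisymm
        · intro y hy
          exact (hcov' y).resolve_left hy
        · intro y hyv hyu
          have : y ∈ u ∩ v := ⟨hyu, hyv⟩
          rw [huv] at this
          exact this
      have hvcompl : vᶜ = u := by
        apply Subset.antisymm
        · intro y hy
          exact (hcov' y).resolve_right hy
        · intro y hyu hyv
          have : y ∈ u ∩ v := ⟨hyu, hyv⟩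
          rw [huv] at this
          exact this
      have hcu : IsClopen u := ⟨by rw [← isOpen_compl_iff, hucompl]; exact hv, hu⟩
      have hcv : IsClopen v := ⟨by rw [← isOpen_compl_iff, hvcompl]; exact hu, hv⟩
      rcases hcov' ⟨p, mem_insert _ _⟩ with hP | hP
      · have : y2 ∈ u := by rw [key u hcu hP]; trivial
        have h0 : y2 ∈ u ∩ v := ⟨this, hy2⟩
        rw [huv] at h0
        exact h0
      · have : y1 ∈ v := by rw [key v hcv hP]; trivial
        have h0 : y1 ∈ u ∩ v := ⟨hy1, this⟩
        rw [huv] at h0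
        exact h0
    exact { toNonempty := ⟨E x₀⟩ }
  refine ⟨S, inferInstance, hconn, t35_subtype S, E, hIDE, ⟨p, mem_insert _ _⟩, ?_⟩
  ext ⟨k, hk⟩
  simp only [mem_compl_iff, mem_range, mem_singleton_iff]
  constructor
  · intro h
    rcases Set.mem_insert_iff.1 hk with hk' | ⟨x, hx⟩
    · exact Subtype.ext hk'
    · exact absurd ⟨x, Subtype.ext hx⟩ h
  · rintro h ⟨x, hEx⟩
    have : π (e x) = p := congrArg Subtype.val (hEx.trans h)
    exact hpe x this

/-- A nonempty Tychonoff space whose connected components are all open has a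
Tychonoff one-point connectification if and only if it contains no compact
connected component. -/
theorem one_point_connectification_of_open_components
    (X : Type u) [TopologicalSpace X] [Nonempty X] [T35Space X]
    (hopen : ∀ x : X, IsOpen (connectedComponent x)) :
    (∃ (Y : Type u) (_ : TopologicalSpace Y), ConnectedSpace Y ∧ T35Space Y ∧
      ∃ e : X → Y, IsDenseEmbedding e ∧ ∃ p : Y, (Set.range e)ᶜ = {p}) ↔
    (∀ x : X, ¬ IsCompact (connectedComponent x)) := by
  constructor
  · rintro ⟨Y, tY, hconn, ht, e, hde, p, hp⟩
    exact forward_dir hopen hconn ht hde hp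
  · exact reverse_dir hopen
end

section
/- Let X be a Hausdorff topological space containing a nonempty compact open subset K with K ≠ X. Then X has no Hausdorff connectification: there is no connected Hausdorff space Y admitting a dense embedding of X into Y. -/
/-- A Hausdorff space containing a nonempty proper compact open subset has no
Hausdorff connectification. -/
theorem no_connectification_of_compact_open
    (X : Type u) [TopologicalSpace X] [T2Space X]
    (K : Set X) (hKne : K.Nonempty) (hKc : IsCompact K) (hKo : IsOpen K)
    (hKproper : K ≠ Set.univ) :
    ∀ (Y : Type v) (_ : TopologicalSpace Y), T2Space Y → ConnectedSpace Y →
      ∀ e : X → Y, ¬ IsDenseEmbedding e := by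
  intro Y _ _ _ e he
  -- e '' K is compact, hence closed in Y
  have hcont : Continuous e := he.continuous
  have hclosed : IsClosed (e '' K) := (hKc.image hcont).isClosed
  -- K is open in the induced topology, so K = e ⁻¹' U for some open U
  have hKo' : IsOpen (e ⁻¹' (e '' K)) ∨ True := Or.inr trivial
  obtain ⟨U, hU, hKU⟩ : ∃ U : Set Y, IsOpen U ∧ K = e ⁻¹' U := by
    rw [he.toIsInducing.isOpen_iff] at hKo
    obtain ⟨U, hU, h⟩ := hKo
    exact ⟨U, hU, h.symm⟩
  have himg : e '' K = U ∩ Set.range e := by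
    rw [hKU, Set.image_preimage_eq_inter_range]
  -- density: U ⊆ closure (U ∩ range e) = closure (e '' K) = e '' K
  have hsub : U ⊆ e '' K := by
    have h1 : U ⊆ closure (U ∩ Set.range e) := he.dense.open_subset_closure_inter hU
    rw [← himg, hclosed.closure_eq] at h1
    exact h1
  have heq : e '' K = U := Set.Subset.antisymm (by rw [himg]; exact Set.inter_subset_left) hsub
  have hclopen : IsClopen (e '' K) := ⟨hclosed, heq ▸ hU⟩
  have huniv : e '' K = Set.univ :=
    hclopen.eq_univ (hKne.image e)
  apply hKproper
  ext x
  simp only [Set.mem_univ, iff_true]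
  have : e x ∈ e '' K := huniv ▸ Set.mem_univ _
  obtain ⟨y, hy, hxy⟩ := this
  rwa [← he.injective hxy]
end

section
/- Let X be a locally connected Tychonoff (completely regular Hausdorff) topological space. Then for every connected component C of X, the closure of (the image of) C in the Stone–Čech compactification βX is an open subset of βX. Consequently, the set δX defined as the union over all connected components C of X of the closures cl_{βX}(C) is open in βX. -/
lemma closure_image_clopen_isOpen_stoneCech
    {X : Type u} [TopologicalSpace X] [T35Space X] {C : Set X} (hC : IsClopen C) :
    IsOpen (closure (stoneCechUnit '' C)) := by
  have hf : Continuous C.boolIndicator :=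
    (continuous_boolIndicator_iff_isClopen C).mpr hC
  set g := stoneCechExtend hf with hg
  have hgc : Continuous g := continuous_stoneCechExtend hf
  have hext : ∀ x : X, g (stoneCechUnit x) = C.boolIndicator x := fun x =>
    congrFun (stoneCechExtend_extends hf) x
  have hU : IsOpen (g ⁻¹' {true}) := (isOpen_discrete _).preimage hgc
  have hkey : closure (stoneCechUnit '' C) = g ⁻¹' {true} := by
    apply Set.Subset.antisymm
    · apply closure_minimal
      · rintro _ ⟨x, hx, rfl⟩
        simpa [hext x] using (C.mem_iff_boolIndicator x).mp hx
      · exact (isClosed_discrete _).preimage hgc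
    · intro u hu
      have hdense : Dense (Set.range (stoneCechUnit : X → StoneCech X)) :=
        denseRange_stoneCechUnit
      have := hdense.open_subset_closure_inter hU hu
      refine closure_mono ?_ this
      rintro _ ⟨hmem, x, rfl⟩
      refine ⟨x, ?_, rfl⟩
      have : C.boolIndicator x = true := by simpa [hext x] using hmem
      exact (C.mem_iff_boolIndicator x).mpr this
  rw [hkey]; exact hU

/-- In a locally connected Tychonoff space `X`, the closure in the Stone–Čech
compactification `βX` of (the image of) any connected component of `X` is open
in `βX`; consequently the union `δX` of all these closures is open in `βX`. -/
theorem closure_component_isOpen_stoneCech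
    (X : Type u) [TopologicalSpace X] [T35Space X] [LocallyConnectedSpace X] :
    (∀ x : X, IsOpen (closure (stoneCechUnit '' connectedComponent x))) ∧
    IsOpen (⋃ x : X, closure (stoneCechUnit '' connectedComponent x)) := by
  have h : ∀ x : X, IsOpen (closure (stoneCechUnit '' connectedComponent x)) := fun x =>
    closure_image_clopen_isOpen_stoneCech ⟨isClosed_connectedComponent, isOpen_connectedComponent⟩
  exact ⟨h, isOpen_iUnion h⟩
end

section
/- Let X be a nonempty locally connected Tychonoff (completely regular Hausdorff) topological space with no compact connected component. For each connected component C of X choose a point t_C ∈ cl_{βX}(C) \ X (such a point exists since C is non-compact). Let δX be the union over all components C of the closures cl_{βX}(C), and let P = { t_C : C is a component of X } ∪ (βX \ δX). Then P is a nonempty closed subset of βX that is disjoint from X. -/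
open Set

lemma clopen_closure_image {X : Type u} [TopologicalSpace X] [T35Space X] {C : Set X}
    (hC : IsClopen C) :
    ∃ g : StoneCech X → Bool, Continuous g ∧
      (∀ x : X, g (stoneCechUnit x) = true ↔ x ∈ C) ∧
      closure (stoneCechUnit '' C) = g ⁻¹' {true} := by
  classical
  set f : X → Bool := fun x => if x ∈ C then true else false with hf
  have hfmem : ∀ x, f x = true ↔ x ∈ C := by
    intro x; simp [hf]
  have hfc : Continuous f := by
    rw [continuous_bool_rng true]
    convert hC using 1
    ext x
    simp [hfmem x]
  refine ⟨stoneCechExtend hfc, continuous_stoneCechExtend hfc, ?_, ?_⟩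
  · intro x
    rw [show stoneCechExtend hfc (stoneCechUnit x) = f x from
      congrFun (stoneCechExtend_extends hfc) x]
    exact hfmem x
  · set g := stoneCechExtend hfc with hg
    have hext : ∀ x : X, g (stoneCechUnit x) = f x := fun x =>
      congrFun (stoneCechExtend_extends hfc) x
    have hclosed : IsClosed (g ⁻¹' {true}) :=
      (isClosed_discrete _).preimage (continuous_stoneCechExtend hfc)
    have hopen : IsOpen (g ⁻¹' {true}) :=
      (isOpen_discrete _).preimage (continuous_stoneCechExtend hfc)
    apply subset_antisymm
    · apply closure_minimal _ hclosed
      rintro _ ⟨x, hx, rfl⟩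
      simp [hext x, hf, hx]
    · intro p hp
      -- every neighborhood of p meets unit '' C
      rw [mem_closure_iff]
      intro o ho hpo
      have := denseRange_stoneCechUnit (α := X)
      obtain ⟨x, hmem⟩ := this.exists_mem_open (ho.inter hopen) ⟨p, hpo, hp⟩
      refine ⟨stoneCechUnit x, hmem.1, x, ?_, rfl⟩
      have : f x = true := by rw [← hext x]; exact hmem.2
      exact (hfmem x).1 this

/-- Let `X` be a nonempty locally connected Tychonoff space with no compact
connected component, and for each component choose a point of its closure in
`βX` lying outside `X` (encoded by a function `t : X → βX` depending only on
the component).  Then `P = {t_C : C component} ∪ (βX \ δX)` is a nonempty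
closed subset of `βX` disjoint from `X`. -/
theorem contraction_set_closed
    (X : Type u) [TopologicalSpace X] [Nonempty X] [T35Space X]
    [LocallyConnectedSpace X]
    (hnc : ∀ x : X, ¬ IsCompact (connectedComponent x))
    (t : X → StoneCech X)
    (ht : ∀ x : X, t x ∈ closure (stoneCechUnit '' connectedComponent x) ∧
      t x ∉ Set.range (stoneCechUnit : X → StoneCech X))
    (hconst : ∀ x y : X, connectedComponent x = connectedComponent y → t x = t y) :
    (Set.range t ∪ (⋃ x : X, closure (stoneCechUnit '' connectedComponent x))ᶜ).Nonempty ∧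
    IsClosed (Set.range t ∪ (⋃ x : X, closure (stoneCechUnit '' connectedComponent x))ᶜ) ∧
    (Set.range t ∪ (⋃ x : X, closure (stoneCechUnit '' connectedComponent x))ᶜ) ∩
      Set.range (stoneCechUnit : X → StoneCech X) = ∅ := by
  classical
  -- choose the boolean test functions
  choose g hgc hgu hgcl using fun x : X =>
    clopen_closure_image (X := X) (isClopen_connectedComponent (x := x))
  -- key: closure of a component's image meets range t only at t x
  have key : ∀ x : X, ∀ y : X,
      t y ∈ closure (stoneCechUnit '' connectedComponent x) → t y = t x := by
    intro x y hy
    have hyx : connectedComponent y = connectedComponent x := by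
      by_contra hne
      have hdisj : y ∉ connectedComponent x := fun h => hne (connectedComponent_eq h).symm
      -- t y ∈ closure (unit '' C y) ⊆ g x ⁻¹' {false}
      have h1 : t y ∈ (g x) ⁻¹' {true} := by rw [← hgcl x]; exact hy
      have h2 : t y ∈ (g x) ⁻¹' {false} := by
        have hsub : closure (stoneCechUnit '' connectedComponent y) ⊆ (g x) ⁻¹' {false} := by
          apply closure_minimal _ ((isClosed_discrete _).preimage (hgc x))
          rintro _ ⟨z, hz, rfl⟩
          have hzx : z ∉ connectedComponent x := by
            intro h
            have e1 : connectedComponent y = connectedComponent z := connectedComponent_eq hz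
            have e2 : connectedComponent x = connectedComponent z := connectedComponent_eq h
            exact hne (e1.trans e2.symm)
          simp only [mem_preimage, mem_singleton_iff]
          rw [← Bool.not_eq_true, hgu x z]
          exact hzx
        exact hsub (ht y).1
      simp only [mem_preimage, mem_singleton_iff] at h1 h2
      rw [h1] at h2; exact Bool.noConfusion h2
    exact hconst y x hyx
  refine ⟨?_, ?_, ?_⟩
  · obtain ⟨x⟩ := ‹Nonempty X›
    exact ⟨t x, Or.inl ⟨x, rfl⟩⟩
  · rw [← isOpen_compl_iff]
    have hEq : (Set.range t ∪ (⋃ x : X, closure (stoneCechUnit '' connectedComponent x))ᶜ)ᶜ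
        = ⋃ x : X, (closure (stoneCechUnit '' connectedComponent x) \ {t x}) := by
      ext p
      simp only [compl_union, compl_compl, mem_inter_iff, mem_compl_iff, mem_range,
        mem_iUnion, mem_diff, mem_singleton_iff]
      constructor
      · rintro ⟨hnr, x, hx⟩
        exact ⟨x, hx, fun h => hnr ⟨x, h.symm⟩⟩
      · rintro ⟨x, hx, hne⟩
        refine ⟨?_, x, hx⟩
        rintro ⟨y, rfl⟩
        exact hne (key x y hx)
    rw [hEq]
    apply isOpen_iUnion
    intro x
    have hcl : IsOpen (closure (stoneCechUnit '' connectedComponent x)) := by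
      rw [hgcl x]; exact (isOpen_discrete _).preimage (hgc x)
    exact hcl.sdiff isClosed_singleton
  · ext p
    simp only [mem_inter_iff, mem_union, mem_compl_iff, mem_iUnion, mem_empty_iff_false,
      iff_false, not_and, mem_range]
    rintro (⟨y, rfl⟩ | hnot) hp
    · exact (ht y).2 hp
    · obtain ⟨z, rfl⟩ := hp
      exact hnot ⟨z, subset_closure ⟨z, mem_connectedComponent, rfl⟩⟩
end

section
/- Let X be a Tychonoff (completely regular Hausdorff) topological space and let Y = X ∪ {p} be a Tychonoff one-point extension of X (so X is a dense subspace of Y and Y \ X = {p}). Let φ : βX → βY be the continuous extension over the Stone–Čech compactifications of the identity (inclusion) map X → Y. Then φ is a surjective quotient map, and for every point y of βY with y ≠ p, the fiber φ^{-1}(y) is a singleton. In other words, βY is the quotient space obtained from βX by contracting the compact set φ^{-1}(p) to the point p, with φ the corresponding quotient mapping. -/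
open Set Function Topology

/-- Key uniqueness lemma: fibers of `φ` over points other than `p` have at most one point. -/
lemma stoneCech_one_point_extension_fiber_unique
    {X Y : Type*} [TopologicalSpace X] [TopologicalSpace Y] [T1Space Y]
    (e : X → Y) (he : IsDenseEmbedding e) (p : Y) (hp : (Set.range e)ᶜ = {p})
    (φ : StoneCech X → StoneCech Y) (hφ : Continuous φ)
    (hext : ∀ x : X, φ (stoneCechUnit x) = stoneCechUnit (e x))
    {y : StoneCech Y} (hy : y ≠ stoneCechUnit p)
    {z₁ z₂ : StoneCech X} (h1 : φ z₁ = y) (h2 : φ z₂ = y) : z₁ = z₂ := by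
  classical
  by_contra hne
  -- X is nonempty
  have hYne : Nonempty Y := ⟨p⟩
  have hXne : Nonempty X := by
    rcases isEmpty_or_nonempty X with hX | hX
    · exfalso
      have h0 : Set.range e = ∅ := Set.range_eq_empty e
      have hd := he.dense
      rw [DenseRange, h0] at hd
      exact Set.not_nonempty_empty hd.nonempty
    · exact hX
  -- separate `stoneCechUnit p` and `y` in `βY`
  obtain ⟨U, V, hU, hV, hpU, hyV, hUV⟩ := t2_separation hy.symm
  have hclU : closure U ⊆ Vᶜ :=
    closure_minimal (fun x hx hxV => Set.disjoint_left.mp hUV hx hxV)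
      (isClosed_compl_iff.mpr hV)
  have hyU : y ∉ closure U := fun hc => hclU hc hyV
  obtain ⟨h, hh0, hh1, hhI⟩ :=
    exists_continuous_zero_one_of_isClosed (isClosed_closure (s := U))
      (isClosed_singleton : IsClosed {y}) (Set.disjoint_singleton_right.mpr hyU)
  obtain ⟨g, hg0, hg1, hgI⟩ :=
    exists_continuous_zero_one_of_isClosed (isClosed_singleton : IsClosed {z₁})
      (isClosed_singleton : IsClosed {z₂}) (Set.disjoint_singleton.mpr hne)
  have hpe : Set.range e = {p}ᶜ := by rw [← hp, compl_compl]
  have hmemp : ∀ x : X, e x ≠ p := by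
    intro x hxp
    have hx : e x ∈ ({p} : Set Y) := by simp [hxp]
    rw [← hp] at hx
    exact hx (Set.mem_range_self x)
  -- the auxiliary function on Y
  set Fr : Y → ℝ := fun q =>
    if q = p then 0 else g (stoneCechUnit (Function.invFun e q)) * h (stoneCechUnit q) with hFrdef
  have hopen : IsOpen (Set.range e) := by rw [hpe]; exact isOpen_compl_singleton
  -- continuity of `Fr`
  have hcOn : ContinuousOn (fun q => g (stoneCechUnit (Function.invFun e q))) (Set.range e) := by
    rw [continuousOn_iff_continuous_restrict]
    have hrestrict : (Set.range e).domRestrict (fun q => g (stoneCechUnit (Function.invFun e q)))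
        = (fun x => g (stoneCechUnit x)) ∘ he.isEmbedding.toHomeomorph.symm := by
      funext q
      have hq : e (he.isEmbedding.toHomeomorph.symm q) = (q : Y) :=
        Equiv.apply_ofInjective_symm he.isEmbedding.injective q
      have hinv : Function.invFun e (q : Y) = he.isEmbedding.toHomeomorph.symm q :=
        he.injective (by rw [Function.invFun_eq ⟨_, hq⟩, hq])
      simp only [Set.domRestrict_apply, Function.comp_apply, hinv]
    rw [hrestrict]
    exact (g.continuous.comp continuous_stoneCechUnit).comp
      he.isEmbedding.toHomeomorph.symm.continuous
  have hFrOn : ContinuousOn Fr (Set.range e) := by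
    apply ContinuousOn.congr (hcOn.mul ((h.continuous.comp continuous_stoneCechUnit).continuousOn))
    intro q hq
    have hqp : q ≠ p := by rw [hpe] at hq; simpa using hq
    simp only [hFrdef, if_neg hqp, Function.comp_apply, Pi.mul_apply]
  have hFr : Continuous Fr := by
    rw [continuous_iff_continuousAt]
    intro q
    by_cases hqp : q = p
    · subst hqp
      have hU' : (stoneCechUnit ⁻¹' U : Set Y) ∈ nhds q :=
        (hU.preimage continuous_stoneCechUnit).mem_nhds hpU
      have hev : (fun _ : Y => (0 : ℝ)) =ᶠ[nhds q] Fr := by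
        filter_upwards [hU'] with w hw
        by_cases hwp : w = q
        · simp only [hFrdef, if_pos hwp]
        · have h0 : h (stoneCechUnit w) = 0 := hh0 (subset_closure hw)
          simp only [hFrdef, if_neg hwp, h0, mul_zero]
      exact continuousAt_const.congr hev
    · exact hFrOn.continuousAt (hopen.mem_nhds (by rw [hpe]; simpa using hqp))
  -- pass to [0,1]-valued functions
  set F : Y → Set.Icc (0 : ℝ) 1 := fun q => Set.projIcc 0 1 zero_le_one (Fr q) with hFdef
  have hF : Continuous F := continuous_projIcc.comp hFr
  set K : StoneCech X → Set.Icc (0 : ℝ) 1 :=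
    fun z => Set.projIcc 0 1 zero_le_one (g z * h (φ z)) with hKdef
  have hK : Continuous K :=
    continuous_projIcc.comp (g.continuous.mul (h.continuous.comp hφ))
  have heq : stoneCechExtend hF ∘ φ = K := by
    apply stoneCech_hom_ext ((continuous_stoneCechExtend hF).comp hφ) hK
    funext x
    have h2' : Fr (e x) = g (stoneCechUnit x) * h (stoneCechUnit (e x)) := by
      simp only [hFrdef]
      rw [if_neg (hmemp x), Function.leftInverse_invFun he.injective x]
    show (stoneCechExtend hF) (φ (stoneCechUnit x)) = K (stoneCechUnit x)
    have h3 : stoneCechExtend hF (stoneCechUnit (e x)) = F (e x) :=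
      congrFun (stoneCechExtend_extends hF) (e x)
    rw [hext x, h3]
    show Set.projIcc (0:ℝ) 1 zero_le_one (Fr (e x))
        = Set.projIcc (0:ℝ) 1 zero_le_one (g (stoneCechUnit x) * h (φ (stoneCechUnit x)))
    rw [h2', hext x]
  have e1 := congrFun heq z₁
  have e2 := congrFun heq z₂
  simp only [Function.comp_apply, h1, h2, hKdef] at e1 e2
  have hgz1 : g z₁ = 0 := hg0 rfl
  have hgz2 : g z₂ = 1 := hg1 rfl
  have hhy : h y = 1 := hh1 rfl
  rw [hgz1, hhy, zero_mul] at e1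
  rw [hgz2, hhy, one_mul] at e2
  have hcontra : Set.projIcc (0:ℝ) 1 zero_le_one 0 = Set.projIcc (0:ℝ) 1 zero_le_one 1 := by
    rw [← e1, ← e2]
  rw [Set.projIcc_left, Set.projIcc_right] at hcontra
  exact zero_ne_one (congrArg Subtype.val hcontra)

/-- If `Y = X ∪ {p}` is a Tychonoff one-point extension of a Tychonoff space `X`
and `φ : βX → βY` is the continuous extension of the inclusion `X → Y`, then `φ`
is a surjective quotient map whose fibers over points distinct from `p` are
singletons; that is, `βY` is obtained from `βX` by contracting the compact set
`φ⁻¹(p)` to the point `p`. -/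
theorem stoneCech_one_point_extension_quotient
    (X : Type u) [TopologicalSpace X] [T35Space X]
    (Y : Type u) [TopologicalSpace Y] [T35Space Y]
    (e : X → Y) (he : IsDenseEmbedding e) (p : Y) (hp : (Set.range e)ᶜ = {p})
    (φ : StoneCech X → StoneCech Y) (hφ : Continuous φ)
    (hext : ∀ x : X, φ (stoneCechUnit x) = stoneCechUnit (e x)) :
    Function.Surjective φ ∧ Topology.IsQuotientMap φ ∧ IsCompact (φ ⁻¹' {stoneCechUnit p}) ∧
    ∀ y : StoneCech Y, y ≠ stoneCechUnit p → ∃ z : StoneCech X, φ ⁻¹' {y} = {z} := by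
  have hsurj : Function.Surjective φ := by
    have hclosed : IsClosed (Set.range φ) := (isCompact_range hφ).isClosed
    have h1 : DenseRange (stoneCechUnit ∘ e : X → StoneCech Y) :=
      DenseRange.comp denseRange_stoneCechUnit he.dense continuous_stoneCechUnit
    have hsub : Set.range (stoneCechUnit ∘ e : X → StoneCech Y) ⊆ Set.range φ := by
      rintro _ ⟨x, rfl⟩
      exact ⟨stoneCechUnit x, hext x⟩
    have hdense : Dense (Set.range φ) := Dense.mono hsub h1
    have hall : Set.range φ = Set.univ := by
      rw [← hclosed.closure_eq]
      exact hdense.closure_eq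
    exact Set.range_eq_univ.mp hall
  refine ⟨hsurj, (hφ.isClosedMap).isQuotientMap hφ hsurj,
    (isClosed_singleton.preimage hφ).isCompact, ?_⟩
  intro y hy
  obtain ⟨z, hz⟩ := hsurj y
  refine ⟨z, ?_⟩
  ext w
  simp only [Set.mem_preimage, Set.mem_singleton_iff]
  constructor
  · intro hw
    exact stoneCech_one_point_extension_fiber_unique e he p hp φ hφ hext hy hw hz
  · rintro rfl
    exact hz
end

section
/- Let X be a locally connected Tychonoff (completely regular Hausdorff) topological space with no compact connected component. Let P be a nonempty compact subset of βX \ X such that P intersects the closure cl_{βX}(C) for every connected component C of X. Let T be the quotient space obtained from βX by contracting P to a single point p, and let Y = X ∪ {p} be the corresponding subspace of T (the image of X together with the point p). Then Y is a Tychonoff one-point connectification of X: Y is connected, Tychonoff, contains X as a dense subspace, and Y \ X = {p}. -/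
open Set Topology Filter

universe u

lemma aux_cr_subtype {Q : Type*} [TopologicalSpace Q] [CompletelyRegularSpace Q]
    (s : Set Q) : CompletelyRegularSpace s := by
  constructor
  intro x K hK hx
  obtain ⟨K', hK', rfl⟩ := isClosed_induced_iff.mp hK
  obtain ⟨f, fc, hf0, hf1⟩ :=
    CompletelyRegularSpace.completely_regular (x : Q) K' hK' hx
  exact ⟨f ∘ Subtype.val, fc.comp continuous_subtype_val, hf0, fun k hk => hf1 hk⟩

/-- The setoid on `Z` obtained by contracting the set `P` to a single point:
its only nontrivial equivalence class is `P`. -/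
def contractSetoid {Z : Type u} (P : Set Z) : Setoid Z where
  r a b := a = b ∨ (a ∈ P ∧ b ∈ P)
  iseqv := by
    refine ⟨fun _ => Or.inl rfl, fun h => ?_, fun h1 h2 => ?_⟩
    · exact h.elim (fun h => Or.inl h.symm) (fun h => Or.inr ⟨h.2, h.1⟩)
    · rcases h1 with rfl | h1
      · exact h2
      · rcases h2 with rfl | h2
        · exact Or.inr h1
        · exact Or.inr ⟨h1.1, h2.2⟩

/-- Let `X` be a locally connected Tychonoff space with no compact connected
component, and let `P` be a nonempty compact subset of `βX \ X` meeting the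
closure in `βX` of every component of `X`.  Contracting `P` to a single point
`p` and taking `Y = X ∪ {p}` inside the quotient yields a Tychonoff one-point
connectification of `X`. -/
theorem one_point_connectification_of_contraction
    (X : Type u) [TopologicalSpace X] [T35Space X] [LocallyConnectedSpace X]
    (hnc : ∀ x : X, ¬ IsCompact (connectedComponent x))
    (P : Set (StoneCech X)) (hPne : P.Nonempty) (hPc : IsCompact P)
    (hPX : P ∩ Set.range (stoneCechUnit : X → StoneCech X) = ∅)
    (hPcomp : ∀ x : X, (P ∩ closure (stoneCechUnit '' connectedComponent x)).Nonempty)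
    (t₀ : StoneCech X) (ht₀ : t₀ ∈ P) :
    ConnectedSpace
      ((Quotient.mk (contractSetoid P)) ''
        (Set.range (stoneCechUnit : X → StoneCech X) ∪ P) :
        Set (Quotient (contractSetoid P))) ∧
    T35Space
      ((Quotient.mk (contractSetoid P)) ''
        (Set.range (stoneCechUnit : X → StoneCech X) ∪ P) :
        Set (Quotient (contractSetoid P))) ∧
    IsDenseEmbedding
      (fun x : X =>
        (⟨Quotient.mk (contractSetoid P) (stoneCechUnit x),
          Set.mem_image_of_mem _ (Or.inl (Set.mem_range_self x))⟩ :
          ((Quotient.mk (contractSetoid P)) ''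
            (Set.range (stoneCechUnit : X → StoneCech X) ∪ P) :
            Set (Quotient (contractSetoid P))))) ∧
    (Set.range (fun x : X =>
        (⟨Quotient.mk (contractSetoid P) (stoneCechUnit x),
          Set.mem_image_of_mem _ (Or.inl (Set.mem_range_self x))⟩ :
          ((Quotient.mk (contractSetoid P)) ''
            (Set.range (stoneCechUnit : X → StoneCech X) ∪ P) :
            Set (Quotient (contractSetoid P))))))ᶜ =
      {⟨Quotient.mk (contractSetoid P) t₀, Set.mem_image_of_mem _ (Or.inr ht₀)⟩} := by
  classical
  set q : StoneCech X → Quotient (contractSetoid P) := Quotient.mk (contractSetoid P) with hqdef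
  have hqeq : ∀ a b : StoneCech X, q a = q b ↔ (a = b ∨ (a ∈ P ∧ b ∈ P)) :=
    fun a b => ⟨fun h => Quotient.exact h, fun h => Quotient.sound h⟩
  have hquot : IsQuotientMap q := isQuotientMap_quotient_mk'
  have hcont : Continuous q := hquot.continuous
  have hPcl : IsClosed P := hPc.isClosed
  have hnotP : ∀ x : X, stoneCechUnit x ∉ P := by
    intro x hx
    have : stoneCechUnit x ∈ P ∩ Set.range (stoneCechUnit : X → StoneCech X) :=
      ⟨hx, Set.mem_range_self x⟩
    rw [hPX] at this
    exact this
  -- saturation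
  have hsat₁ : ∀ U : Set (StoneCech X), Disjoint U P → q ⁻¹' (q '' U) = U := by
    intro U hUP
    refine Set.Subset.antisymm ?_ (Set.subset_preimage_image q U)
    rintro z ⟨w, hwU, hw⟩
    rcases (hqeq w z).mp hw with rfl | ⟨hw1, hz1⟩
    · exact hwU
    · exact absurd hw1 (Set.disjoint_left.mp hUP hwU)
  have hsat₂ : ∀ U : Set (StoneCech X), P ⊆ U → q ⁻¹' (q '' U) = U := by
    intro U hPU
    refine Set.Subset.antisymm ?_ (Set.subset_preimage_image q U)
    rintro z ⟨w, hwU, hw⟩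
    rcases (hqeq w z).mp hw with rfl | ⟨hw1, hz1⟩
    · exact hwU
    · exact hPU hz1
  have hopen : ∀ U : Set (StoneCech X), IsOpen U → (Disjoint U P ∨ P ⊆ U) →
      IsOpen (q '' U) := by
    intro U hUo h
    rw [← hquot.isOpen_preimage]
    rcases h with h | h
    · rwa [hsat₁ U h]
    · rwa [hsat₂ U h]
  have himdis : ∀ U V : Set (StoneCech X), Disjoint U P → Disjoint U V →
      Disjoint (q '' U) (q '' V) := by
    intro U V hUP hUV
    rw [Set.disjoint_left]
    rintro y ⟨z₁, hz₁, rfl⟩ ⟨z₂, hz₂, heq⟩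
    rcases (hqeq z₂ z₁).mp heq with rfl | ⟨h2, h1⟩
    · exact Set.disjoint_left.mp hUV hz₁ hz₂
    · exact Set.disjoint_left.mp hUP hz₁ h1
  -- Hausdorffness of the quotient
  haveI hT2 : T2Space (Quotient (contractSetoid P)) := by
    constructor
    intro a b hab
    obtain ⟨u, rfl⟩ := hquot.surjective a
    obtain ⟨v, rfl⟩ := hquot.surjective b
    by_cases hu : u ∈ P
    · have hv : v ∉ P := fun hv => hab ((hqeq u v).mpr (Or.inr ⟨hu, hv⟩))
      obtain ⟨V, U, hVo, hUo, hvV, hPU, hdis⟩ :=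
        normal_separation (isClosed_singleton (x := v)) hPcl
          (Set.disjoint_left.mpr (by rintro z rfl; exact hv))
      have hVP : Disjoint V P := ((hdis.mono_right hPU))
      exact ⟨q '' U, q '' V, hopen U hUo (Or.inr hPU), hopen V hVo (Or.inl hVP),
        ⟨u, hPU hu, rfl⟩, ⟨v, hvV rfl, rfl⟩,
        (himdis V U hVP hdis).symm⟩
    · by_cases hv : v ∈ P
      · have huP : u ∉ P := hu
        obtain ⟨U, V, hUo, hVo, huU, hPV, hdis⟩ :=
          normal_separation (isClosed_singleton (x := u)) hPcl
            (Set.disjoint_left.mpr (by rintro z rfl; exact huP))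
        have hUP : Disjoint U P := hdis.mono_right hPV
        exact ⟨q '' U, q '' V, hopen U hUo (Or.inl hUP), hopen V hVo (Or.inr hPV),
          ⟨u, huU rfl, rfl⟩, ⟨v, hPV hv, rfl⟩, himdis U V hUP hdis⟩
      · have huv : u ≠ v := fun h => hab (by rw [h])
        obtain ⟨A, B, hAo, hBo, huA, hvB, hAB⟩ := t2_separation huv
        obtain ⟨U₁, W₁, hU₁o, hW₁o, huU₁, hPW₁, hd₁⟩ :=
          normal_separation (isClosed_singleton (x := u)) hPcl
            (Set.disjoint_left.mpr (by rintro z rfl; exact hu))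
        obtain ⟨V₁, W₂, hV₁o, hW₂o, hvV₁, hPW₂, hd₂⟩ :=
          normal_separation (isClosed_singleton (x := v)) hPcl
            (Set.disjoint_left.mpr (by rintro z rfl; exact hv))
        have hUP : Disjoint (A ∩ U₁) P := ((hd₁.mono_right hPW₁).mono_left Set.inter_subset_right)
        have hVP : Disjoint (B ∩ V₁) P := ((hd₂.mono_right hPW₂).mono_left Set.inter_subset_right)
        refine ⟨q '' (A ∩ U₁), q '' (B ∩ V₁), hopen _ (hAo.inter hU₁o) (Or.inl hUP),
          hopen _ (hBo.inter hV₁o) (Or.inl hVP), ⟨u, ⟨huA, huU₁ rfl⟩, rfl⟩,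
          ⟨v, ⟨hvB, hvV₁ rfl⟩, rfl⟩, himdis _ _ hUP
            ((hAB.mono_left Set.inter_subset_left).mono_right Set.inter_subset_left)⟩
  haveI : T4Space (Quotient (contractSetoid P)) := ⟨⟩
  haveI : T35Space (Quotient (contractSetoid P)) := inferInstance
  -- abbreviations
  have hYmemp : q t₀ ∈ q '' (Set.range (stoneCechUnit : X → StoneCech X) ∪ P) :=
    Set.mem_image_of_mem _ (Or.inr ht₀)
  -- connectedness
  have hYconn : IsConnected
      (q '' (Set.range (stoneCechUnit : X → StoneCech X) ∪ P)) := by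
    refine ⟨⟨q t₀, hYmemp⟩, ?_⟩
    refine isPreconnected_of_forall (q t₀) ?_
    rintro y ⟨z, hz, rfl⟩
    rcases hz with ⟨x, rfl⟩ | hzP
    · refine ⟨insert (q t₀) ((fun x' : X => q (stoneCechUnit x')) '' connectedComponent x),
        ?_, Set.mem_insert _ _, ?_, ?_⟩
      · refine Set.insert_subset hYmemp ?_
        rintro w ⟨x', _, rfl⟩
        exact Set.mem_image_of_mem _ (Or.inl (Set.mem_range_self x'))
      · exact Set.mem_insert_iff.mpr (Or.inr ⟨x, mem_connectedComponent, rfl⟩)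
      · have hpre : IsPreconnected
            ((fun x' : X => q (stoneCechUnit x')) '' connectedComponent x) :=
          isPreconnected_connectedComponent.image _
            ((hcont.comp continuous_stoneCechUnit).continuousOn)
        refine hpre.subset_closure (Set.subset_insert _ _) ?_
        refine Set.insert_subset ?_ subset_closure
        obtain ⟨w, hwP, hwcl⟩ := hPcomp x
        have hqw : q w = q t₀ := (hqeq w t₀).mpr (Or.inr ⟨hwP, ht₀⟩)
        have : q w ∈ closure (q '' (stoneCechUnit '' connectedComponent x)) :=
          image_closure_subset_closure_image hcont ⟨w, hwcl, rfl⟩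
        rw [hqw, Set.image_image] at this
        exact this
    · refine ⟨{q t₀}, Set.singleton_subset_iff.mpr hYmemp, rfl, ?_, isPreconnected_singleton⟩
      exact Set.mem_singleton_iff.mpr ((hqeq z t₀).mpr (Or.inr ⟨hzP, ht₀⟩))
  -- the embedding
  have hind : Topology.IsInducing (fun x : X => q (stoneCechUnit x)) := by
    rw [isInducing_iff_nhds]
    intro x
    refine le_antisymm
      (tendsto_iff_comap.mp ((hcont.comp continuous_stoneCechUnit).tendsto x)) fun U hU => ?_
    obtain ⟨U', hU'su, hU'open, hxU'⟩ := mem_nhds_iff.mp hU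
    obtain ⟨f, fc, hfx, hfK⟩ := CompletelyRegularSpace.completely_regular x U'ᶜ
      hU'open.isClosed_compl (by simpa using hxU')
    set F := stoneCechExtend fc with hF
    set V : Set (StoneCech X) := F ⁻¹' {1}ᶜ with hV
    have hVo : IsOpen V := isClosed_singleton.isOpen_compl.preimage (continuous_stoneCechExtend fc)
    have hVP : Disjoint (V \ P) P := disjoint_sdiff_left
    refine Filter.mem_comap.mpr ⟨q '' (V \ P), ?_, ?_⟩
    · refine (hopen _ (hVo.sdiff hPcl) (Or.inl hVP)).mem_nhds ?_
      refine ⟨stoneCechUnit x, ⟨?_, hnotP x⟩, rfl⟩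
      have h0 : F (stoneCechUnit x) = f x := congrFun (stoneCechExtend_extends fc) x
      simp only [hV, Set.mem_preimage, Set.mem_compl_iff, Set.mem_singleton_iff, h0, hfx]
      exact zero_ne_one
    · intro z hz
      have hz2 : stoneCechUnit z ∈ V \ P := by
        rw [← hsat₁ (V \ P) hVP]; exact hz
      have hz' : F (stoneCechUnit z) = f z := congrFun (stoneCechExtend_extends fc) z
      have : f z ≠ 1 := by
        have := hz2.1
        simp only [hV, Set.mem_preimage, Set.mem_compl_iff, Set.mem_singleton_iff, hz'] at this
        exact this
      by_contra hzU
      exact this (hfK (fun h => hzU (hU'su h)))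
  have hinj : Function.Injective (fun x : X => q (stoneCechUnit x)) := by
    intro a b hab
    rcases (hqeq _ _).mp hab with h | ⟨h1, _⟩
    · exact injective_stoneCechUnit_of_t35Space h
    · exact absurd h1 (hnotP a)
  refine ⟨Subtype.connectedSpace hYconn, ?_, ?_, ?_⟩
  · haveI := aux_cr_subtype (q '' (Set.range (stoneCechUnit : X → StoneCech X) ∪ P))
    exact {}
  · refine ⟨⟨?_, ?_⟩, ?_⟩
    · exact hind.codRestrict _
    · -- dense range
      intro y
      rw [closure_subtype]
      obtain ⟨z, hz⟩ := hquot.surjective (y : Quotient (contractSetoid P))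
      have hzcl : z ∈ closure (Set.range (stoneCechUnit : X → StoneCech X)) :=
        denseRange_stoneCechUnit z
      have h1 : (y : Quotient (contractSetoid P)) ∈
          closure (q '' Set.range (stoneCechUnit : X → StoneCech X)) := by
        rw [← hz]
        exact image_closure_subset_closure_image hcont ⟨z, hzcl, rfl⟩
      refine closure_mono ?_ h1
      rintro w ⟨z', ⟨x, rfl⟩, rfl⟩
      exact ⟨⟨q (stoneCechUnit x), Set.mem_image_of_mem _ (Or.inl (Set.mem_range_self x))⟩,
        ⟨x, rfl⟩, rfl⟩
    · intro a b hab
      exact hinj (congrArg Subtype.val hab)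
  · ext y
    simp only [Set.mem_compl_iff, Set.mem_range, Set.mem_singleton_iff]
    constructor
    · intro h
      obtain ⟨z, hz, hzy⟩ := y.2
      rcases hz with ⟨x, rfl⟩ | hzP
      · exact absurd (Subtype.ext hzy) (fun he => h ⟨x, he⟩)
      · exact Subtype.ext (hzy ▸ (hqeq z t₀).mpr (Or.inr ⟨hzP, ht₀⟩))
    · rintro rfl ⟨x, hx⟩
      have : q (stoneCechUnit x) = q t₀ := congrArg Subtype.val hx
      rcases (hqeq _ _).mp this with h | ⟨h1, _⟩
      · exact hnotP x (h ▸ ht₀)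
      · exact hnotP x h1
end

section
/- Let X be a locally connected Tychonoff (completely regular Hausdorff) topological space, and let Y = X ∪ {p} be a Tychonoff one-point connectification of X (Y connected, Tychonoff, X dense in Y, Y \ X = {p}). Let φ : βX → βY be the continuous extension over the Stone–Čech compactifications of the identity (inclusion) map X → Y. Then φ^{-1}(p) is a nonempty compact subset of βX \ X which intersects the closure cl_{βX}(C) for every connected component C of X. -/
/-- If `Y = X ∪ {p}` is a Tychonoff one-point connectification of a locally
connected Tychonoff space `X` and `φ : βX → βY` is the continuous extension of
the inclusion `X → Y`, then `φ⁻¹(p)` is a nonempty compact subset of `βX \ X`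
meeting the closure in `βX` of every connected component of `X`. -/
theorem fiber_meets_component_closures
    (X : Type u) [TopologicalSpace X] [T35Space X] [LocallyConnectedSpace X]
    (Y : Type u) [TopologicalSpace Y] [T35Space Y] [ConnectedSpace Y]
    (e : X → Y) (he : IsDenseEmbedding e) (p : Y) (hp : (Set.range e)ᶜ = {p})
    (φ : StoneCech X → StoneCech Y) (hφ : Continuous φ)
    (hext : ∀ x : X, φ (stoneCechUnit x) = stoneCechUnit (e x)) :
    (φ ⁻¹' {stoneCechUnit p}).Nonempty ∧
    IsCompact (φ ⁻¹' {stoneCechUnit p}) ∧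
    φ ⁻¹' {stoneCechUnit p} ∩ Set.range (stoneCechUnit : X → StoneCech X) = ∅ ∧
    ∀ x : X,
      (φ ⁻¹' {stoneCechUnit p} ∩ closure (stoneCechUnit '' connectedComponent x)).Nonempty := by
  have hpne : p ∉ Set.range e := by
    have : p ∈ (Set.range e)ᶜ := by rw [hp]; exact rfl
    exact this
  -- main part: fiber meets closure of each component
  have key : ∀ x : X,
      (φ ⁻¹' {stoneCechUnit p} ∩ closure (stoneCechUnit '' connectedComponent x)).Nonempty := by
    intro x
    -- p ∈ closure (e '' connectedComponent x)
    have hopenrange : IsOpen (Set.range e) := by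
      rw [← isClosed_compl_iff, hp]; exact isClosed_singleton
    have hoe : Topology.IsOpenEmbedding e :=
      Topology.IsOpenEmbedding.of_isEmbedding_isOpenMap he.isEmbedding
        (he.isEmbedding.isOpenMap hopenrange)
    set C := connectedComponent x with hC
    have hpcl : p ∈ closure (e '' C) := by
      by_contra hpc
      have hUopen : IsOpen (e '' C) := hoe.isOpenMap _ isOpen_connectedComponent
      have hclsub : closure (e '' C) ⊆ Set.range e := by
        intro y hy
        by_contra hyr
        have : y ∈ ({p} : Set Y) := by rw [← hp]; exact hyr
        exact hpc (this ▸ hy)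
      have hUclosed : IsClosed (e '' C) := by
        rw [← closure_eq_iff_isClosed]
        refine Set.Subset.antisymm ?_ subset_closure
        intro y hy
        obtain ⟨x', rfl⟩ := hclsub hy
        have : x' ∈ closure C := by
          rw [he.isEmbedding.closure_eq_preimage_closure_image]
          exact hy
        rw [isClosed_connectedComponent.closure_eq] at this
        exact Set.mem_image_of_mem e this
      have hUuniv : e '' C = Set.univ :=
        (IsClopen.eq_univ ⟨hUclosed, hUopen⟩ ⟨e x, Set.mem_image_of_mem e mem_connectedComponent⟩)
      exact hpne (Set.image_subset_range e C (hUuniv ▸ Set.mem_univ p))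
    -- transfer to Stone-Čech
    have hq : stoneCechUnit p ∈ closure (φ '' closure (stoneCechUnit '' C)) := by
      apply closure_mono (Set.image_mono (subset_closure))
      have h1 : stoneCechUnit p ∈ closure (stoneCechUnit '' (e '' C)) :=
        image_closure_subset_closure_image continuous_stoneCechUnit
          (Set.mem_image_of_mem _ hpcl)
      have h2 : stoneCechUnit '' (e '' C) ⊆ φ '' (stoneCechUnit '' C) := by
        rintro _ ⟨_, ⟨c, hc, rfl⟩, rfl⟩
        exact ⟨stoneCechUnit c, Set.mem_image_of_mem _ hc, (hext c).symm ▸ rfl⟩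
      exact closure_mono h2 h1
    have hKc : IsCompact (closure (stoneCechUnit '' C)) := isClosed_closure.isCompact
    have himg : IsClosed (φ '' closure (stoneCechUnit '' C)) :=
      (hKc.image hφ).isClosed
    rw [himg.closure_eq] at hq
    obtain ⟨z, hz, hzq⟩ := hq
    exact ⟨z, by simpa using hzq, hz⟩
  refine ⟨?_, ?_, ?_, key⟩
  · -- nonempty: X is nonempty since range e is dense in the nonempty Y
    obtain ⟨y0⟩ := (inferInstance : Nonempty Y)
    have hXne : Nonempty X := he.dense.nonempty_iff.mpr ⟨y0⟩
    obtain ⟨x0⟩ := hXne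
    obtain ⟨z, hz, _⟩ := key x0
    exact ⟨z, hz⟩
  · exact (isClosed_singleton.preimage hφ).isCompact
  · ext z
    simp only [Set.mem_inter_iff, Set.mem_empty_iff_false, iff_false]
    rintro ⟨hz, x, rfl⟩
    have : stoneCechUnit (e x) = stoneCechUnit p := by
      rw [← hext x]; exact hz
    exact hpne ⟨x, injective_stoneCechUnit_of_t35Space this⟩
end

section
/- Let 𝒫 be a topological property (a class of topological spaces closed under homeomorphism) that is: (i) closed hereditary — every closed subspace of a space with 𝒫 has 𝒫; (ii) finitely additive — every space expressible as a finite disjoint union of closed subspaces each having 𝒫 has 𝒫; and (iii) co-local — a space Z has 𝒫 whenever Z contains a point q with an open neighborhood base ℬ at q such that Z \ B has 𝒫 for every B ∈ ℬ. Let X be a nonempty locally connected Tychonoff (completely regular Hausdorff) topological space with no compact connected component such that every connected component of X (as a subspace) has 𝒫. Then X has a Tychonoff one-point connectification Y which has 𝒫. -/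
open Set Topology Filter unitInterval

universe u

noncomputable section OPCsec

namespace OPC


variable {X : Type u} [TopologicalSpace X]

/-- completely regular is hereditary -/
instance instT35Subtype [T35Space X] (C : Set X) : T35Space ↥C := by
  refine { completely_regular := ?_ }
  intro x K hK hx
  obtain ⟨K', hK', hKK'⟩ := isClosed_induced_iff.1 hK
  have hxK' : (x : X) ∉ K' := fun h => hx (by rw [← hKK']; exact h)
  obtain ⟨f, hf, hf0, hf1⟩ :=
    CompletelyRegularSpace.completely_regular (x : X) K' hK' hxK'
  exact ⟨f ∘ Subtype.val, hf.comp continuous_subtype_val, hf0,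
    fun k hk => hf1 (by rw [← hKK'] at hk; exact hk)⟩

-- canonical "point at infinity" candidates for the component `C`
open scoped Classical in
noncomputable def SCset (C : Set X) : Set (StoneCech ↥C) :=
  if h : Nonempty (StoneCech ↥C) then
    {@Classical.epsilon _ h (fun q => q ∉ Set.range stoneCechUnit)} else ∅

lemma SCset_nonempty {C : Set X} (hC : C.Nonempty) : (SCset C).Nonempty := by
  obtain ⟨c, hc⟩ := hC
  have : Nonempty (StoneCech ↥C) := ⟨stoneCechUnit ⟨c, hc⟩⟩
  classical
  rw [SCset]
  rw [dif_pos this]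
  exact ⟨_, rfl⟩

lemma SCset_isClosed [T35Space X] (C : Set X) : IsClosed (SCset C) := by
  classical
  rw [SCset]
  split
  · exact isClosed_singleton
  · exact isClosed_empty

lemma SCset_spec {C : Set X}
    (h : ∃ q : StoneCech ↥C, q ∉ Set.range stoneCechUnit) :
    ∀ q ∈ SCset C, q ∉ Set.range stoneCechUnit := by
  intro q hq
  have hne : Nonempty (StoneCech ↥C) := Exists.nonempty h
  classical
  rw [SCset, dif_pos hne, mem_singleton_iff] at hq
  subst hq
  exact Classical.epsilon_spec h

/-- `A` is a "small" subset of the component `C`. -/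
def Small (C A : Set X) : Prop :=
  IsClosed A ∧ A ⊆ C ∧
    ∀ q ∈ SCset C, q ∉ closure (stoneCechUnit '' (Subtype.val ⁻¹' A : Set ↥C))

lemma Small.empty (C : Set X) : Small C (∅ : Set X) := by
  refine ⟨isClosed_empty, empty_subset _, ?_⟩
  intro q _
  simp

lemma Small.union {C A B : Set X} (hA : Small C A) (hB : Small C B) :
    Small C (A ∪ B) := by
  refine ⟨hA.1.union hB.1, union_subset hA.2.1 hB.2.1, ?_⟩
  intro q hq
  rw [preimage_union, image_union, closure_union]
  rintro (h | h)
  · exact hA.2.2 q hq h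
  · exact hB.2.2 q hq h

lemma Small.mono {C A B : Set X} (hA : Small C A) (hB : IsClosed B) (hBA : B ⊆ A) :
    Small C B := by
  refine ⟨hB, hBA.trans hA.2.1, fun q hq h => hA.2.2 q hq ?_⟩
  exact closure_mono (image_mono (preimage_mono hBA)) h

lemma not_small_self {C : Set X} (hC : C.Nonempty) : ¬ Small C C := by
  rintro ⟨-, -, h⟩
  obtain ⟨q, hq⟩ := SCset_nonempty hC
  apply h q hq
  have : (Subtype.val ⁻¹' C : Set ↥C) = univ := by
    ext c; simpa using c.2
  rw [this, image_univ, denseRange_stoneCechUnit.closure_eq]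
  trivial

/-- Admissible sets: the closed sets of the connectification missing the added point. -/
def Adm (A : Set X) : Prop :=
  IsClosed A ∧ (∃ s : Finset X, A ⊆ ⋃ x ∈ s, connectedComponent x) ∧
    ∀ x : X, Small (connectedComponent x) (A ∩ connectedComponent x)

lemma Adm.empty : Adm (∅ : Set X) :=
  ⟨isClosed_empty, ⟨∅, by simp⟩, fun x => by
    simpa using Small.empty (connectedComponent x)⟩

lemma Adm.union {A B : Set X} (hA : Adm A) (hB : Adm B) : Adm (A ∪ B) := by
  obtain ⟨hA1, ⟨s, hs⟩, hA3⟩ := hA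
  obtain ⟨hB1, ⟨t, ht⟩, hB3⟩ := hB
  classical
  refine ⟨hA1.union hB1, ⟨s ∪ t, ?_⟩, fun x => ?_⟩
  · refine union_subset (hs.trans ?_) (ht.trans ?_) <;>
    · intro a ha
      simp only [mem_iUnion, exists_prop] at ha ⊢
      obtain ⟨y, hy, hay⟩ := ha
      exact ⟨y, by simp [Finset.mem_union, hy], hay⟩
  · rw [union_inter_distrib_right]
    exact (hA3 x).union (hB3 x)

lemma Adm.mono {A B : Set X} (hA : Adm A) (hB : IsClosed B) (hBA : B ⊆ A) : Adm B := by
  obtain ⟨hA1, ⟨s, hs⟩, hA3⟩ := hA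
  exact ⟨hB, ⟨s, hBA.trans hs⟩, fun x =>
    (hA3 x).mono (hB.inter isClosed_connectedComponent)
      (inter_subset_inter_left _ hBA)⟩

lemma Adm.not_cc_subset {A : Set X} (hA : Adm A) (x : X)
    (h : connectedComponent x ⊆ A) : False := by
  have h1 : A ∩ connectedComponent x = connectedComponent x :=
    inter_eq_self_of_subset_right h
  have := hA.2.2 x
  rw [h1] at this
  exact not_small_self ⟨x, mem_connectedComponent⟩ this



/-- basic neighborhoods in the Stone–Čech compactification -/
lemma scu_basis {Z : Type u} [TopologicalSpace Z] [T35Space Z] (z : Z) (U : Set Z)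
    (hU : IsOpen U) (hz : z ∈ U) :
    ∃ W : Set (StoneCech Z), IsOpen W ∧ stoneCechUnit z ∈ W ∧
      stoneCechUnit ⁻¹' W ⊆ U := by
  obtain ⟨f, hf, hf0, hf1⟩ :=
    CompletelyRegularSpace.completely_regular z Uᶜ hU.isClosed_compl (by simpa using hz)
  have hcont : Continuous fun y => ((stoneCechExtend hf y : I) : ℝ) :=
    continuous_subtype_val.comp (continuous_stoneCechExtend hf)
  refine ⟨{y | ((stoneCechExtend hf y : I) : ℝ) < 1}, isOpen_lt hcont continuous_const, ?_, ?_⟩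
  · have : stoneCechExtend hf (stoneCechUnit z) = f z := congrFun (stoneCechExtend_extends hf) z
    simp only [mem_setOf_eq, this, hf0]
    norm_num
  · intro a ha
    simp only [mem_preimage, mem_setOf_eq] at ha
    have hext : stoneCechExtend hf (stoneCechUnit a) = f a := congrFun (stoneCechExtend_extends hf) a
    rw [hext] at ha
    by_contra hna
    have := hf1 (mem_compl hna)
    rw [this] at ha
    simp at ha

lemma isInducing_scu {Z : Type u} [TopologicalSpace Z] [T35Space Z] :
    Topology.IsInducing (stoneCechUnit : Z → StoneCech Z) := by
  rw [Topology.isInducing_iff_nhds]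
  intro z
  refine le_antisymm ((continuous_stoneCechUnit.tendsto z).le_comap) ?_
  intro s hs
  obtain ⟨U, hUs, hU, hzU⟩ := mem_nhds_iff.1 hs
  obtain ⟨W, hW, hzW, hWU⟩ := scu_basis z U hU hzU
  exact mem_comap.2 ⟨W, hW.mem_nhds hzW, hWU.trans hUs⟩

lemma rem_nonempty {Z : Type u} [TopologicalSpace Z] [T35Space Z]
    (hnc : ¬ IsCompact (univ : Set Z)) :
    ∃ q : StoneCech Z, q ∉ Set.range stoneCechUnit := by
  by_contra h
  push_neg at h
  have hr : Set.range (stoneCechUnit : Z → StoneCech Z) = univ :=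
    eq_univ_iff_forall.2 h
  apply hnc
  rw [isInducing_scu.isCompact_iff, image_univ, hr]
  exact isCompact_univ

-- extension by zero outside a clopen set is continuous
open scoped Classical in
lemma cont_extend0 {X : Type u} [TopologicalSpace X] {C : Set X} (hC : IsClopen C)
    {g : ↥C → ℝ} (hg : Continuous g) :
    Continuous (fun a => if h : a ∈ C then g ⟨a, h⟩ else 0) := by
  rw [continuous_def]
  intro V hV
  have : (fun a => if h : a ∈ C then g ⟨a, h⟩ else 0) ⁻¹' V =
      (Subtype.val '' (g ⁻¹' V)) ∪ (if (0:ℝ) ∈ V then Cᶜ else ∅) := by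
    ext a
    by_cases h : a ∈ C
    · simp only [mem_preimage, dif_pos h, mem_union, mem_image]
      constructor
      · intro hv; exact Or.inl ⟨⟨a, h⟩, hv, rfl⟩
      · rintro (⟨b, hb, rfl⟩ | hx)
        · simpa [Subtype.coe_eta] using hb
        · split at hx
          · exact absurd h hx
          · exact absurd hx (notMem_empty a)
    · simp only [mem_preimage, dif_neg h, mem_union, mem_image]
      constructor
      · intro hv
        right; rw [if_pos hv]; exact h
      · rintro (⟨b, hb, rfl⟩ | hx)
        · exact absurd b.2 h
        · split at hx
          · assumption
          · exact absurd hx (notMem_empty a)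
  rw [this]
  refine IsOpen.union (hC.isOpen.isOpenMap_subtype_val _ (hV.preimage hg)) ?_
  split
  · exact hC.isClosed.isOpen_compl
  · exact isOpen_empty



variable {X : Type u} [TopologicalSpace X]

lemma cc_clopen [LocallyConnectedSpace X] (x : X) : IsClopen (connectedComponent x) :=
  ⟨isClosed_connectedComponent, isOpen_connectedComponent⟩

lemma cc_not_compactSpace [T35Space X] {x : X} (hnc : ¬ IsCompact (connectedComponent x)) :
    ¬ IsCompact (univ : Set ↥(connectedComponent x)) := by
  intro h
  exact hnc (isCompact_iff_compactSpace.2 (isCompact_univ_iff.1 h))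

lemma cc_rem [T35Space X] {x : X} (hnc : ¬ IsCompact (connectedComponent x)) :
    ∃ q : StoneCech ↥(connectedComponent x), q ∉ Set.range stoneCechUnit :=
  rem_nonempty (cc_not_compactSpace hnc)

lemma adm_aux {x : X} {g : X → ℝ} (hg : Continuous g)
    (hout : ∀ a, a ∉ connectedComponent x → g a = 0)
    {H : StoneCech ↥(connectedComponent x) → ℝ} (hH : Continuous H)
    (hgle : ∀ c : ↥(connectedComponent x), g c.1 ≤ H (stoneCechUnit c))
    (hq0 : ∀ q ∈ SCset (connectedComponent x), H q ≤ 0) :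
    ∀ ε : ℝ, 0 < ε → Adm {a | ε ≤ g a} := by
  intro ε hε
  have hcl : IsClosed {a | ε ≤ g a} := isClosed_le continuous_const hg
  have hsub : {a | ε ≤ g a} ⊆ connectedComponent x := by
    intro a ha
    by_contra h
    rw [mem_setOf_eq, hout a h] at ha
    exact absurd (lt_of_lt_of_le hε ha) (lt_irrefl 0)
  refine ⟨hcl, ⟨{x}, ?_⟩, fun x' => ?_⟩
  · simpa using hsub
  · by_cases hx' : x' ∈ connectedComponent x
    · rw [← connectedComponent_eq hx']
      refine ⟨hcl.inter isClosed_connectedComponent, inter_subset_right, ?_⟩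
      intro q hq hmem
      have himg : stoneCechUnit '' (Subtype.val ⁻¹'
          ({a | ε ≤ g a} ∩ connectedComponent x) :
            Set ↥(connectedComponent x)) ⊆ {y | ε ≤ H y} := by
        rintro _ ⟨c, hc, rfl⟩
        exact le_trans hc.1 (hgle c)
      have hclosure := closure_minimal himg (isClosed_le continuous_const hH) hmem
      exact absurd (lt_of_lt_of_le hε (le_trans hclosure (hq0 q hq)))
        (lt_irrefl 0)
    · have hdis : {a | ε ≤ g a} ∩ connectedComponent x' = ∅ := by
        have h1 : connectedComponent x ≠ connectedComponent x' := by
          intro h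
          exact hx' (h ▸ mem_connectedComponent)
        have h2 := connectedComponent_disjoint h1
        rw [← subset_empty_iff]
        intro a ⟨ha1, ha2⟩
        exact (h2.le_bot ⟨hsub ha1, ha2⟩)
      rw [hdis]
      exact Small.empty _

open scoped Classical in
lemma R1 [T35Space X] [LocallyConnectedSpace X]
    (hnc : ∀ x : X, ¬ IsCompact (connectedComponent x))
    (x : X) (U : Set X) (hU : IsOpen U) (hxU : x ∈ U) :
    ∃ f : X → ℝ, Continuous f ∧ f x = 1 ∧ (∀ a, f a ∈ Icc (0:ℝ) 1) ∧
      (∀ a, f a ≠ 0 → a ∈ U) ∧ ∀ ε : ℝ, 0 < ε → Adm {a | ε ≤ f a} := by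
  set C := connectedComponent x with hC
  set κ := ↥C
  have hqspec : ∀ q ∈ SCset C, q ∉ Set.range stoneCechUnit := SCset_spec (cc_rem (hnc x))
  set c₀ : κ := ⟨x, mem_connectedComponent⟩ with hc₀
  have hV : IsOpen (Subtype.val ⁻¹' U : Set κ) := hU.preimage continuous_subtype_val
  obtain ⟨f₀, hf₀c, hf₀0, hf₀1⟩ := CompletelyRegularSpace.completely_regular c₀
    (Subtype.val ⁻¹' U)ᶜ hV.isClosed_compl (by simpa using hxU)
  set F := stoneCechExtend hf₀c with hF
  set W : Set (StoneCech κ) := {y | ((F y : I) : ℝ) < 1} \ SCset C with hW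
  have hWopen : IsOpen W :=
    (isOpen_lt (continuous_subtype_val.comp (continuous_stoneCechExtend hf₀c))
      continuous_const).sdiff (SCset_isClosed C)
  have hc₀W : stoneCechUnit c₀ ∈ W := by
    constructor
    · have h1 : F (stoneCechUnit c₀) = f₀ c₀ := congrFun (stoneCechExtend_extends hf₀c) c₀
      simp only [mem_setOf_eq, h1, hf₀0]
      norm_num
    · intro h
      exact hqspec _ h ⟨c₀, rfl⟩
  obtain ⟨G, hGc, hG0, hG1⟩ := CompletelyRegularSpace.completely_regular
    (stoneCechUnit c₀) Wᶜ hWopen.isClosed_compl (by simpa using hc₀W)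
  have hg₁ : Continuous (fun c : κ => 1 - ((G (stoneCechUnit c) : I) : ℝ)) :=
    continuous_const.sub (continuous_subtype_val.comp (hGc.comp continuous_stoneCechUnit))
  refine ⟨fun a => if h : a ∈ C then 1 - ((G (stoneCechUnit ⟨a, h⟩) : I) : ℝ) else 0,
    cont_extend0 (cc_clopen x) hg₁, ?_, ?_, ?_, ?_⟩
  · have hxC : x ∈ C := mem_connectedComponent
    simp only [hxC, dite_true]
    have : (⟨x, mem_connectedComponent⟩ : κ) = c₀ := rfl
    rw [this, hG0]
    norm_num
  · intro a
    by_cases h : a ∈ C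
    · simp only [dif_pos h]
      have := (G (stoneCechUnit ⟨a, h⟩)).2
      simp only [mem_Icc] at this ⊢
      constructor <;> linarith [this.1, this.2]
    · simp only [dif_neg h]; exact ⟨le_refl 0, zero_le_one⟩
  · intro a ha
    by_cases h : a ∈ C
    · simp only [dif_pos h] at ha
      have hGne : G (stoneCechUnit ⟨a, h⟩) ≠ 1 := by
        intro he
        rw [he] at ha
        simp at ha
      have hmemW : stoneCechUnit (⟨a, h⟩ : κ) ∈ W := by
        by_contra hc
        exact hGne (hG1 hc)
      have hlt : ((F (stoneCechUnit ⟨a, h⟩) : I) : ℝ) < 1 := hmemW.1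
      have hext : F (stoneCechUnit (⟨a, h⟩ : κ)) = f₀ ⟨a, h⟩ :=
        congrFun (stoneCechExtend_extends hf₀c) _
      rw [hext] at hlt
      by_contra hna
      have : (⟨a, h⟩ : κ) ∈ (Subtype.val ⁻¹' U : Set κ)ᶜ := by
        simpa using hna
      have := hf₀1 this
      rw [this] at hlt
      simp at hlt
    · simp only [dif_neg h] at ha
      exact absurd rfl ha
  · refine adm_aux (cont_extend0 (cc_clopen x) hg₁)
      (fun a ha => dif_neg ha) (H := fun y => 1 - ((G y : I) : ℝ))
      (continuous_const.sub (continuous_subtype_val.comp hGc)) ?_ ?_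
    · intro c
      have hc2 : (c : X) ∈ C := c.2
      simp only [hc2, dite_true]
      simp [Subtype.coe_eta]
    · intro q hq
      have hqW : q ∈ Wᶜ := fun hmem => hmem.2 hq
      have : G q = 1 := hG1 hqW
      simp only [this]
      norm_num


lemma R2single [T35Space X] [LocallyConnectedSpace X] (x : X) {A : Set X}
    (hA : Small (connectedComponent x) A) :
    ∃ g : X → ℝ, Continuous g ∧ (∀ a, g a ∈ Icc (0:ℝ) 1) ∧ EqOn g 1 A ∧
      ∀ ε : ℝ, 0 < ε → Adm {a | ε ≤ g a} := by
  classical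
  set C := connectedComponent x with hCdef
  set κ := ↥C
  set K : Set (StoneCech κ) := closure (stoneCechUnit '' (Subtype.val ⁻¹' A)) with hK
  have hdisj : Disjoint (SCset C) K := by
    rw [Set.disjoint_left]
    exact fun q hq hqK => hA.2.2 q hq hqK
  obtain ⟨G, hG0, hG1, hGicc⟩ :=
    exists_continuous_zero_one_of_isClosed (SCset_isClosed C) isClosed_closure hdisj
  have hg₁ : Continuous (fun c : κ => (G (stoneCechUnit c) : ℝ)) :=
    G.continuous.comp continuous_stoneCechUnit
  refine ⟨fun a => if h : a ∈ C then G (stoneCechUnit ⟨a, h⟩) else 0,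
    cont_extend0 (cc_clopen x) hg₁, ?_, ?_, ?_⟩
  · intro a; by_cases h : a ∈ C
    · simp only [dif_pos h]; exact hGicc _
    · simp only [dif_neg h]; exact ⟨le_refl 0, zero_le_one⟩
  · intro a ha
    have hc : a ∈ C := hA.2.1 ha
    simp only [dif_pos hc]
    have hmem : stoneCechUnit (⟨a, hc⟩ : κ) ∈ K := subset_closure ⟨⟨a, hc⟩, ha, rfl⟩
    simpa using hG1 hmem
  · refine adm_aux (cont_extend0 (cc_clopen x) hg₁) (fun a ha => dif_neg ha)
      (H := fun y => (G y : ℝ)) G.continuous ?_ ?_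
    · intro c
      simp [Subtype.coe_eta]
    · intro q hq
      simpa using le_of_eq (hG0 hq)

lemma R2aux [T35Space X] [LocallyConnectedSpace X] (s : Finset X) :
    ∀ A : Set X, IsClosed A → (A ⊆ ⋃ x ∈ s, connectedComponent x) →
    (∀ x : X, Small (connectedComponent x) (A ∩ connectedComponent x)) →
    ∃ g : X → ℝ, Continuous g ∧ (∀ a, g a ∈ Icc (0:ℝ) 1) ∧ EqOn g 1 A ∧
      ∀ ε : ℝ, 0 < ε → Adm {a | ε ≤ g a} := by
  classical
  induction s using Finset.induction_on with
  | empty =>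
    intro A hcl hs hsm
    have hAe : A = ∅ := by simpa using hs
    subst hAe
    refine ⟨fun _ => 0, continuous_const, fun a => ⟨le_refl 0, zero_le_one⟩,
      fun a ha => absurd ha (notMem_empty a), fun ε hε => ?_⟩
    have he : {a : X | ε ≤ (0:ℝ)} = ∅ := by ext a; simp [not_le, hε]
    rw [he]; exact Adm.empty
  | insert y s hy ih =>
    intro A hcl hs hsm
    set A₂ := A \ connectedComponent y with hA₂
    have hcl₂ : IsClosed A₂ := hcl.inter (isClosed_compl_iff.2 (cc_clopen y).2)
    have hs₂ : A₂ ⊆ ⋃ x ∈ s, connectedComponent x := by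
      intro a ha
      have := hs ha.1
      simp only [Finset.mem_insert, mem_iUnion, exists_prop] at this ⊢
      obtain ⟨x', hx', hax'⟩ := this
      rcases hx' with rfl | hx's
      · exact absurd hax' ha.2
      · exact ⟨x', hx's, hax'⟩
    have hsm₂ : ∀ x : X, Small (connectedComponent x) (A₂ ∩ connectedComponent x) :=
      fun x => (hsm x).mono (hcl₂.inter isClosed_connectedComponent)
        (inter_subset_inter_left _ diff_subset)
    obtain ⟨g₁, hg₁c, hg₁i, hg₁e, hg₁a⟩ := ih A₂ hcl₂ hs₂ hsm₂
    obtain ⟨g₂, hg₂c, hg₂i, hg₂e, hg₂a⟩ := R2single y (hsm y)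
    refine ⟨fun a => max (g₁ a) (g₂ a), hg₁c.max hg₂c, ?_, ?_, ?_⟩
    · exact fun a => ⟨le_trans (hg₁i a).1 (le_max_left _ _),
        max_le (hg₁i a).2 (hg₂i a).2⟩
    · intro a ha
      show max (g₁ a) (g₂ a) = (1 : X → ℝ) a
      simp only [Pi.one_apply]
      by_cases h : a ∈ connectedComponent y
      · have h2 : g₂ a = 1 := by simpa using hg₂e ⟨ha, h⟩
        exact le_antisymm (max_le (hg₁i a).2 (hg₂i a).2)
          (h2 ▸ le_max_right (g₁ a) (g₂ a))
      · have h1 : g₁ a = 1 := by simpa using hg₁e ⟨ha, h⟩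
        exact le_antisymm (max_le (hg₁i a).2 (hg₂i a).2)
          (h1 ▸ le_max_left (g₁ a) (g₂ a))
    · intro ε hε
      have hset : {a | ε ≤ max (g₁ a) (g₂ a)} = {a | ε ≤ g₁ a} ∪ {a | ε ≤ g₂ a} := by
        ext a; simp [le_max_iff]
      rw [hset]
      exact (hg₁a ε hε).union (hg₂a ε hε)

lemma R2 [T35Space X] [LocallyConnectedSpace X] {A : Set X} (hA : Adm A) :
    ∃ g : X → ℝ, Continuous g ∧ (∀ a, g a ∈ Icc (0:ℝ) 1) ∧ EqOn g 1 A ∧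
      ∀ ε : ℝ, 0 < ε → Adm {a | ε ≤ g a} := by
  obtain ⟨hcl, ⟨s, hs⟩, hsm⟩ := hA
  exact R2aux s A hcl hs hsm


/-! ### generic homeomorphism helpers -/

noncomputable def homeoImage {Z W : Type*} [TopologicalSpace Z] [TopologicalSpace W]
    (f : Z → W) (hf : Topology.IsInducing f) (hinj : Function.Injective f) (A : Set Z) :
    ↥A ≃ₜ ↥(f '' A) := by
  refine (Equiv.Set.image f A hinj).toHomeomorphOfIsInducing ?_
  have hcomp : (Subtype.val ∘ (Equiv.Set.image f A hinj)) = f ∘ (Subtype.val : ↥A → Z) := rfl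
  have h1 : Topology.IsInducing (f ∘ (Subtype.val : ↥A → Z)) :=
    hf.comp Topology.IsInducing.subtypeVal
  refine Topology.IsInducing.of_comp ?_ continuous_subtype_val (hcomp ▸ h1)
  exact Continuous.subtype_mk (hf.continuous.comp continuous_subtype_val) _

noncomputable def homeoPreimageInter {Z : Type*} [TopologicalSpace Z] (S T : Set Z) :
    ↥(Subtype.val ⁻¹' T : Set ↥S) ≃ₜ ↥(S ∩ T) := by
  refine Equiv.toHomeomorphOfIsInducing
    ⟨fun x => ⟨x.1.1, x.1.2, x.2⟩, fun y => ⟨⟨y.1, y.2.1⟩, y.2.2⟩,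
      fun x => rfl, fun y => rfl⟩ ?_
  have h1 : Topology.IsInducing ((Subtype.val : ↥S → Z) ∘
      (Subtype.val : ↥(Subtype.val ⁻¹' T : Set ↥S) → ↥S)) :=
    Topology.IsInducing.subtypeVal.comp Topology.IsInducing.subtypeVal
  refine Topology.IsInducing.of_comp ?_ continuous_subtype_val h1
  exact Continuous.subtype_mk (continuous_subtype_val.comp continuous_subtype_val) _

/-! ### the one-point connectification topology -/

variable (X) in
def yTop : TopologicalSpace (Option X) where
  IsOpen S := IsOpen (some ⁻¹' S) ∧ (none ∈ S → Adm ((some ⁻¹' S)ᶜ))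
  isOpen_univ := ⟨by simpa using isOpen_univ, fun _ => by simpa using Adm.empty⟩
  isOpen_inter S T hS hT := by
    refine ⟨by rw [preimage_inter]; exact hS.1.inter hT.1, fun h => ?_⟩
    rw [preimage_inter, compl_inter]
    exact (hS.2 h.1).union (hT.2 h.2)
  isOpen_sUnion 𝒮 h := by
    have hpre : some ⁻¹' ⋃₀ 𝒮 = ⋃ S ∈ 𝒮, some ⁻¹' S := by
      rw [preimage_sUnion]
    refine ⟨?_, fun hn => ?_⟩
    · rw [hpre]; exact isOpen_biUnion fun S hS => (h S hS).1
    · obtain ⟨S, hS, hnS⟩ := hn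
      refine ((h S hS).2 hnS).mono ?_ ?_
      · rw [hpre]
        exact (isOpen_biUnion fun S hS => (h S hS).1).isClosed_compl
      · rw [hpre]
        exact compl_subset_compl.2 (subset_biUnion_of_mem (u := fun S => some ⁻¹' S) hS)

instance yInst : TopologicalSpace (Option X) := yTop X

lemma yIsOpen_iff {S : Set (Option X)} :
    IsOpen S ↔ IsOpen (some ⁻¹' S) ∧ (none ∈ S → Adm ((some ⁻¹' S)ᶜ)) := Iff.rfl

lemma y_cont_some : Continuous (some : X → Option X) :=
  continuous_def.2 fun _ hS => hS.1

lemma y_isOpen_image {U : Set X} (hU : IsOpen U) : IsOpen (some '' U : Set (Option X)) := by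
  rw [yIsOpen_iff, preimage_image_eq U (Option.some_injective X)]
  exact ⟨hU, fun h => by simp at h⟩

lemma y_inducing : Topology.IsInducing (some : X → Option X) := by
  rw [Topology.isInducing_iff]
  refine TopologicalSpace.ext_iff.2 fun U => ?_
  rw [isOpen_induced_iff]
  constructor
  · intro hU
    exact ⟨some '' U, y_isOpen_image hU, preimage_image_eq U (Option.some_injective X)⟩
  · rintro ⟨S, hS, rfl⟩
    exact hS.1

lemma y_dense (hne : Nonempty X) : DenseRange (some : X → Option X) := by
  refine dense_iff_inter_open.2 fun U hU hUne => ?_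
  by_contra hcon
  rw [not_nonempty_iff_eq_empty] at hcon
  have hUsub : U ⊆ {none} := by
    intro y hy
    cases y with
    | none => rfl
    | some b =>
      exact absurd (mem_inter hy (Set.mem_range_self b)) (by rw [hcon]; exact notMem_empty _)
  obtain ⟨u, hu⟩ := hUne
  have hnone : none ∈ U := by
    have := hUsub hu
    rw [mem_singleton_iff] at this
    rwa [this] at hu
  have hAdm : Adm ((some ⁻¹' U)ᶜ) := hU.2 hnone
  have hpre : (some ⁻¹' U : Set X) = ∅ := by
    rw [eq_empty_iff_forall_notMem]
    intro b hb
    have := hUsub hb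
    simp at this
  rw [hpre, compl_empty] at hAdm
  obtain ⟨x₀⟩ := hne
  exact hAdm.not_cc_subset x₀ (subset_univ _)

lemma y_clopen_adm {S : Set (Option X)} (hS : IsClosed S) (hSo : IsOpen S)
    (hnone : none ∉ S) : Adm (some ⁻¹' S) := by
  have h1 : none ∈ Sᶜ := hnone
  have := (hS.isOpen_compl).2 h1
  rwa [preimage_compl, compl_compl] at this

lemma y_preconnected [T35Space X] [LocallyConnectedSpace X] :
    PreconnectedSpace (Option X) := by
  refine preconnectedSpace_of_forall_constant fun f hf x y => ?_
  suffices h : ∀ z, f z = f none by rw [h x, h y]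
  intro z
  by_contra hz
  have hzmem : z ∈ f ⁻¹' {b | b ≠ f none} := hz
  set S : Set (Option X) := f ⁻¹' {b | b ≠ f none} with hSdef
  have hclopen : IsClopen S := (isClopen_discrete _).preimage hf
  have hnone : none ∉ S := fun h => h rfl
  have hAdm : Adm (some ⁻¹' S) := y_clopen_adm hclopen.1 hclopen.2 hnone
  have hXclopen : IsClopen (some ⁻¹' S : Set X) :=
    ⟨hclopen.1.preimage y_cont_some, hclopen.2.preimage y_cont_some⟩
  obtain ⟨a, ha⟩ : (some ⁻¹' S : Set X).Nonempty := by
    cases z with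
    | none => exact absurd hzmem hnone
    | some a => exact ⟨a, hzmem⟩
  exact hAdm.not_cc_subset a (hXclopen.connectedComponent_subset ha)

lemma y_adm_singleton [T35Space X]
    (hnc : ∀ x : X, ¬ IsCompact (connectedComponent x)) (a : X) : Adm {a} := by
  refine ⟨isClosed_singleton, ⟨{a}, by simp [mem_connectedComponent]⟩, fun x => ?_⟩
  by_cases h : a ∈ connectedComponent x
  · have hinter : {a} ∩ connectedComponent x = {a} := by
      rw [inter_eq_self_of_subset_left]; simpa using h
    rw [hinter]
    refine ⟨isClosed_singleton, by simpa using h, fun q hq hmem => ?_⟩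
    have hsub : (Subtype.val ⁻¹' {a} : Set ↥(connectedComponent x)) ⊆ {⟨a, h⟩} := by
      intro c hc
      exact Subtype.ext hc
    have h2 : closure (stoneCechUnit '' (Subtype.val ⁻¹' {a} :
        Set ↥(connectedComponent x))) ⊆ {stoneCechUnit ⟨a, h⟩} := by
      refine closure_minimal ?_ isClosed_singleton
      rintro _ ⟨c, hc, rfl⟩
      have hca : c = ⟨a, h⟩ := hsub hc
      rw [mem_singleton_iff, hca]
    have := h2 hmem
    rw [mem_singleton_iff] at this
    exact SCset_spec (cc_rem (hnc x)) q hq (this ▸ ⟨_, rfl⟩)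
  · have hinter : {a} ∩ connectedComponent x = ∅ := by
      rw [eq_empty_iff_forall_notMem]
      rintro b ⟨rfl, hb⟩
      exact h hb
    rw [hinter]
    exact Small.empty _

lemma y_t1 [T35Space X]
    (hnc : ∀ x : X, ¬ IsCompact (connectedComponent x)) : T1Space (Option X) := by
  refine ⟨fun y => ?_⟩
  rw [← isOpen_compl_iff, yIsOpen_iff]
  cases y with
  | none =>
    refine ⟨?_, fun h => absurd rfl h⟩
    have : (some ⁻¹' ({none}ᶜ : Set (Option X)) : Set X) = univ := by
      ext a; simp
    rw [this]; exact isOpen_univ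
  | some a =>
    have hpre : (some ⁻¹' ({some a}ᶜ : Set (Option X)) : Set X) = {a}ᶜ := by
      ext b; simp
    rw [hpre]
    refine ⟨isClosed_singleton.isOpen_compl, fun _ => ?_⟩
    rw [compl_compl]
    exact y_adm_singleton hnc a

/-- extension by `0` at the point at infinity -/
lemma y_cont_ext {g : X → ℝ} (hg : Continuous g) (h0 : ∀ a, 0 ≤ g a)
    (hAdm : ∀ ε : ℝ, 0 < ε → Adm {a | ε ≤ g a}) :
    Continuous (fun y : Option X => y.elim 0 g) := by
  rw [continuous_def]
  intro V hV
  rw [yIsOpen_iff]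
  have hpre : (some ⁻¹' ((fun y : Option X => y.elim 0 g) ⁻¹' V) : Set X) = g ⁻¹' V := rfl
  constructor
  · rw [hpre]; exact hV.preimage hg
  · intro h0V
    have h0V' : (0:ℝ) ∈ V := h0V
    obtain ⟨ε, hε, hball⟩ := Metric.isOpen_iff.1 hV 0 h0V'
    rw [hpre]
    refine (hAdm ε hε).mono ((hV.preimage hg).isClosed_compl) ?_
    intro a ha
    simp only [mem_compl_iff, mem_preimage] at ha
    by_contra hlt
    rw [mem_setOf_eq, not_le] at hlt
    exact ha (hball (by
      rw [Metric.mem_ball, Real.dist_eq, sub_zero, abs_of_nonneg (h0 a)]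
      exact hlt))

lemma y_cr [T35Space X] [LocallyConnectedSpace X]
    (hnc : ∀ x : X, ¬ IsCompact (connectedComponent x)) :
    CompletelyRegularSpace (Option X) := by
  refine ⟨fun y K hK hyK => ?_⟩
  cases y with
  | some a =>
    have hUo : IsOpen (some ⁻¹' Kᶜ : Set X) := hK.isOpen_compl.1
    have haU : a ∈ (some ⁻¹' Kᶜ : Set X) := hyK
    obtain ⟨f, hfc, hf1, hfi, hfsupp, hfadm⟩ := R1 hnc a _ hUo haU
    have hcont : Continuous (fun y : Option X => y.elim 0 f) :=
      y_cont_ext hfc (fun b => (hfi b).1) hfadm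
    have hmem : ∀ y : Option X, 1 - y.elim 0 f ∈ I := by
      intro y
      cases y with
      | none =>
        rw [show (none : Option X).elim 0 f = 0 from rfl]
        exact ⟨by norm_num, by norm_num⟩
      | some b =>
        have := hfi b
        have hb : (some b : Option X).elim 0 f = f b := rfl
        rw [hb]
        simp only [mem_Icc] at this ⊢
        constructor <;> [linarith [this.2]; linarith [this.1]]
    refine ⟨fun y => ⟨1 - y.elim 0 f, hmem y⟩,
      Continuous.subtype_mk (continuous_const.sub hcont) hmem, ?_, ?_⟩
    · have : (some a : Option X).elim 0 f = 1 := hf1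
      exact Subtype.ext (by simp [this])
    · intro y hy
      have hval : y.elim 0 f = 0 := by
        cases y with
        | none => rfl
        | some b =>
          by_contra hb
          exact (hfsupp b hb) hy
      exact Subtype.ext (by simp [hval])
  | none =>
    have hAdm : Adm (some ⁻¹' K) := by
      have := hK.isOpen_compl.2 (by simpa using hyK)
      rwa [preimage_compl, compl_compl] at this
    obtain ⟨g, hgc, hgi, hge, hgadm⟩ := R2 hAdm
    have hcont : Continuous (fun y : Option X => y.elim 0 g) :=
      y_cont_ext hgc (fun b => (hgi b).1) hgadm
    have hmem : ∀ y : Option X, y.elim 0 g ∈ I := by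
      intro y
      cases y with
      | none => exact ⟨le_refl 0, zero_le_one⟩
      | some b => exact hgi b
    refine ⟨fun y => ⟨y.elim 0 g, hmem y⟩, Continuous.subtype_mk hcont hmem, ?_, ?_⟩
    · exact Subtype.ext rfl
    · intro y hy
      cases y with
      | none => exact absurd hy hyK
      | some b =>
        have : g b = 1 := by simpa using hge (hy : b ∈ (some ⁻¹' K : Set X))
        exact Subtype.ext (by simp [this])


/-! ### transferring the property `P` -/

section Pprop

variable (P : (Z : Type u) → [TopologicalSpace Z] → Prop)

lemma P_isEmpty
    (hadd : ∀ (Z : Type u) [TopologicalSpace Z] (n : ℕ) (F : Fin n → Set Z),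
      (∀ i, IsClosed (F i)) → (∀ i, P (F i)) →
      Pairwise (Function.onFun Disjoint F) → (⋃ i, F i) = Set.univ → P Z)
    (Z : Type u) [TopologicalSpace Z] [hZ : IsEmpty Z] : P Z := by
  refine hadd Z 0 Fin.elim0 (fun i => i.elim0) (fun i => i.elim0) ?_ ?_
  · intro i; exact i.elim0
  · rw [Set.iUnion_of_empty]
    exact (Set.univ_eq_empty_iff.2 hZ).symm

lemma P_adm
    (hhomeo : ∀ (Z W : Type u) [TopologicalSpace Z] [TopologicalSpace W],
      Z ≃ₜ W → P Z → P W)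
    (hclosed : ∀ (Z : Type u) [TopologicalSpace Z], P Z →
      ∀ F : Set Z, IsClosed F → P F)
    (hadd : ∀ (Z : Type u) [TopologicalSpace Z] (n : ℕ) (F : Fin n → Set Z),
      (∀ i, IsClosed (F i)) → (∀ i, P (F i)) →
      Pairwise (Function.onFun Disjoint F) → (⋃ i, F i) = Set.univ → P Z)
    {X : Type u} [TopologicalSpace X]
    (hP : ∀ x : X, P ↥(connectedComponent x))
    {A : Set X} (hcl : IsClosed A) {s : Finset X}
    (hs : A ⊆ ⋃ x ∈ s, connectedComponent x) : P ↥A := by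
  classical
  set n := s.card with hn
  set e : Fin n → X := fun i => ((s.equivFin.symm i : ↥s) : X) with he
  have hesurj : ∀ x ∈ s, ∃ i : Fin n, e i = x := by
    intro x hx
    exact ⟨s.equivFin ⟨x, hx⟩, by simp [he]⟩
  set F : Fin n → Set ↥A := fun i =>
    if h : ∃ j : Fin n, j < i ∧ connectedComponent (e j) = connectedComponent (e i)
    then ∅ else Subtype.val ⁻¹' connectedComponent (e i) with hF
  have hFcases : ∀ i : Fin n,
      (F i = ∅ ∧ ∃ j : Fin n, j < i ∧ connectedComponent (e j) = connectedComponent (e i)) ∨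
      (F i = Subtype.val ⁻¹' connectedComponent (e i) ∧
        ¬ ∃ j : Fin n, j < i ∧ connectedComponent (e j) = connectedComponent (e i)) := by
    intro i
    by_cases h : ∃ j : Fin n, j < i ∧ connectedComponent (e j) = connectedComponent (e i)
    · exact Or.inl ⟨by rw [hF]; exact dif_pos h, h⟩
    · right; exact ⟨by rw [hF]; exact dif_neg h, h⟩
  have hFclosed : ∀ i, IsClosed (F i) := by
    intro i
    rcases hFcases i with ⟨h, -⟩ | ⟨h, -⟩ <;> rw [h]
    · exact isClosed_empty
    · exact isClosed_connectedComponent.preimage continuous_subtype_val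
  have hFP : ∀ i, P (F i) := by
    intro i
    rcases hFcases i with ⟨h, -⟩ | ⟨h, -⟩
    · haveI : IsEmpty ↥(∅ : Set ↥A) := Set.isEmpty_coe_sort.mpr rfl
      exact hhomeo _ _ (Homeomorph.setCongr h.symm) (P_isEmpty P hadd ↥(∅ : Set ↥A))
    · have h1 : P ↥(Subtype.val ⁻¹' A : Set ↥(connectedComponent (e i))) :=
        hclosed _ (hP (e i)) _ (hcl.preimage continuous_subtype_val)
      have h2 := homeoPreimageInter (connectedComponent (e i)) A
      have h3 : ↥(connectedComponent (e i) ∩ A) ≃ₜ ↥(A ∩ connectedComponent (e i)) :=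
        Homeomorph.setCongr (inter_comm _ A)
      have h4 := (homeoPreimageInter A (connectedComponent (e i))).symm
      have h5 : ↥(Subtype.val ⁻¹' connectedComponent (e i) : Set ↥A) ≃ₜ ↥(F i) :=
        Homeomorph.setCongr h.symm
      exact hhomeo _ _ (h2.trans (h3.trans (h4.trans h5))) h1
  have hFdisj : Pairwise (Function.onFun Disjoint F) := by
    intro i j hne
    rw [Function.onFun]
    rcases hFcases i with ⟨hi, -⟩ | ⟨hi, hi2⟩
    · rw [hi]; exact empty_disjoint _
    rcases hFcases j with ⟨hj, -⟩ | ⟨hj, hj2⟩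
    · rw [hj]; exact disjoint_empty _
    rw [hi, hj]
    have hccne : connectedComponent (e i) ≠ connectedComponent (e j) := by
      intro hcc
      rcases lt_or_gt_of_ne hne with hlt | hgt
      · exact hj2 ⟨i, hlt, hcc⟩
      · exact hi2 ⟨j, hgt, hcc.symm⟩
    rw [Set.disjoint_left]
    intro c hci hcj
    exact hccne ((connectedComponent_eq hci).trans (connectedComponent_eq hcj).symm)
  have hFcover : (⋃ i, F i) = Set.univ := by
    rw [eq_univ_iff_forall]
    rintro ⟨a, ha⟩
    have hmem := hs ha
    simp only [mem_iUnion, exists_prop] at hmem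
    obtain ⟨x, hx, hax⟩ := hmem
    obtain ⟨i, rfl⟩ := hesurj x hx
    have hIdx : (Finset.univ.filter fun i : Fin n => a ∈ connectedComponent (e i)).Nonempty :=
      ⟨i, by simp [hax]⟩
    set i₀ := (Finset.univ.filter fun i : Fin n => a ∈ connectedComponent (e i)).min' hIdx
      with hi₀
    have hi₀mem : a ∈ connectedComponent (e i₀) := by
      have := Finset.min'_mem _ hIdx
      rw [Finset.mem_filter] at this
      exact this.2
    have hnowit : ¬ ∃ j : Fin n, j < i₀ ∧
        connectedComponent (e j) = connectedComponent (e i₀) := by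
      rintro ⟨j, hj, hjeq⟩
      have hjmem : j ∈ Finset.univ.filter fun i : Fin n => a ∈ connectedComponent (e i) := by
        rw [Finset.mem_filter]
        exact ⟨Finset.mem_univ j, by rw [hjeq]; exact hi₀mem⟩
      exact absurd (Finset.min'_le _ j hjmem) (not_le.2 hj)
    rw [mem_iUnion]
    refine ⟨i₀, ?_⟩
    rcases hFcases i₀ with ⟨-, hwit⟩ | ⟨h, -⟩
    · exact absurd hwit hnowit
    · rw [h]; exact hi₀mem
  exact hadd (↥A) n F hFclosed hFP hFdisj hFcover

lemma P_Y
    (hhomeo : ∀ (Z W : Type u) [TopologicalSpace Z] [TopologicalSpace W],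
      Z ≃ₜ W → P Z → P W)
    (hclosed : ∀ (Z : Type u) [TopologicalSpace Z], P Z →
      ∀ F : Set Z, IsClosed F → P F)
    (hadd : ∀ (Z : Type u) [TopologicalSpace Z] (n : ℕ) (F : Fin n → Set Z),
      (∀ i, IsClosed (F i)) → (∀ i, P (F i)) →
      Pairwise (Function.onFun Disjoint F) → (⋃ i, F i) = Set.univ → P Z)
    (hcoloc : ∀ (Z : Type u) [TopologicalSpace Z] (q : Z) (B : Set (Set Z)),
      (∀ b ∈ B, IsOpen b ∧ q ∈ b) →
      (∀ U : Set Z, IsOpen U → q ∈ U → ∃ b ∈ B, b ⊆ U) →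
      (∀ b ∈ B, P (↥(bᶜ))) → P Z)
    {X : Type u} [TopologicalSpace X]
    (hP : ∀ x : X, P ↥(connectedComponent x)) :
    P (Option X) := by
  refine hcoloc (Option X) none {b | IsOpen b ∧ none ∈ b} (fun b hb => hb)
    (fun U hU hq => ⟨U, ⟨hU, hq⟩, subset_rfl⟩) ?_
  rintro b ⟨hbo, hbn⟩
  set A : Set X := (some ⁻¹' b)ᶜ with hA
  obtain ⟨hcl, ⟨s, hs⟩, -⟩ : Adm A := hbo.2 hbn
  have hPA : P ↥A := P_adm P hhomeo hclosed hadd hP hcl hs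
  have himg : some '' A = bᶜ := by
    ext y
    cases y with
    | none => simp [hbn]
    | some a =>
      simp only [mem_image, mem_compl_iff]
      constructor
      · rintro ⟨a', ha', he⟩
        obtain rfl : a' = a := Option.some_injective X he
        exact ha'
      · intro hab
        exact ⟨a, hab, rfl⟩
  have hhom : ↥A ≃ₜ ↥(bᶜ) :=
    (homeoImage some y_inducing (Option.some_injective X) A).trans
      (Homeomorph.setCongr himg)
  exact hhomeo _ _ hhom hPA

end Pprop

end OPC

end OPCsec

/-- Let `P` be a topological property that is invariant under homeomorphism,
closed hereditary, finitely additive, and co-local.  If `X` is a nonempty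
locally connected Tychonoff space with no compact connected component all of
whose connected components have `P`, then `X` has a Tychonoff one-point
connectification with `P`. -/
theorem one_point_connectification_with_property
    (P : (Z : Type u) → [TopologicalSpace Z] → Prop)
    (hhomeo : ∀ (Z W : Type u) [TopologicalSpace Z] [TopologicalSpace W],
      Z ≃ₜ W → P Z → P W)
    (hclosed : ∀ (Z : Type u) [TopologicalSpace Z], P Z →
      ∀ F : Set Z, IsClosed F → P F)
    (hadd : ∀ (Z : Type u) [TopologicalSpace Z] (n : ℕ) (F : Fin n → Set Z),
      (∀ i, IsClosed (F i)) → (∀ i, P (F i)) →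
      Pairwise (Function.onFun Disjoint F) → (⋃ i, F i) = Set.univ → P Z)
    (hcoloc : ∀ (Z : Type u) [TopologicalSpace Z] (q : Z) (B : Set (Set Z)),
      (∀ b ∈ B, IsOpen b ∧ q ∈ b) →
      (∀ U : Set Z, IsOpen U → q ∈ U → ∃ b ∈ B, b ⊆ U) →
      (∀ b ∈ B, P (↥(bᶜ))) → P Z)
    (X : Type u) [TopologicalSpace X] [Nonempty X] [T35Space X]
    [LocallyConnectedSpace X]
    (hnc : ∀ x : X, ¬ IsCompact (connectedComponent x))
    (hP : ∀ x : X, P (connectedComponent x)) :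
    ∃ (Y : Type u) (_ : TopologicalSpace Y), ConnectedSpace Y ∧ T35Space Y ∧ P Y ∧
      ∃ e : X → Y, IsDenseEmbedding e ∧ ∃ p : Y, (Set.range e)ᶜ = {p} := by
  classical
  refine ⟨Option X, OPC.yInst, ?_, ?_, ?_, some, ?_, none, ?_⟩
  · haveI : PreconnectedSpace (Option X) := OPC.y_preconnected
    exact { toNonempty := ⟨none⟩ }
  · haveI : T1Space (Option X) := OPC.y_t1 hnc
    haveI : CompletelyRegularSpace (Option X) := OPC.y_cr hnc
    exact {}
  · exact OPC.P_Y P hhomeo hclosed hadd hcoloc hP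
  · exact ⟨⟨OPC.y_inducing, OPC.y_dense ‹Nonempty X›⟩, Option.some_injective X⟩
  · ext y
    cases y <;> simp
end

section
/- Let X be a nonempty locally connected Lindelöf Tychonoff (completely regular Hausdorff) topological space with no compact connected component. Then X has a Tychonoff one-point connectification Y which is Lindelöf: there exist a connected Lindelöf Tychonoff space Y and a dense embedding of X into Y whose complement is a singleton. -/
open Set Topology Filter

universe u

section Aux

/-- In a T1 space, a Lindelöf, non-compact set contains a countable infinite
subset that is locally finite (every point of the ambient space... here: every
point of `C` has an open neighborhood meeting it in a finite set). -/
lemma exists_escape_set {X : Type u} [TopologicalSpace X] [T1Space X]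
    {C : Set X} (hL : IsLindelof C) (hnc : ¬ IsCompact C) (hne : C.Nonempty) :
    ∃ S : Set X, S ⊆ C ∧ S.Countable ∧ S.Infinite ∧
      ∀ x ∈ C, ∃ U : Set X, IsOpen U ∧ x ∈ U ∧ (U ∩ S).Finite := by
  classical
  rw [isCompact_iff_finite_subcover] at hnc
  push_neg at hnc
  obtain ⟨ι, U, hUo, hUc, hUnf⟩ := hnc
  obtain ⟨r, hrcnt, hrcov⟩ := hL.elim_countable_subcover U hUo hUc
  have hrne : r.Nonempty := by
    obtain ⟨x, hx⟩ := hne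
    obtain ⟨i, hi, -⟩ := mem_iUnion₂.1 (hrcov hx)
    exact ⟨i, hi⟩
  obtain ⟨g, hg⟩ := hrcnt.exists_eq_range hrne
  set W : ℕ → Set X := fun n => ⋃ i ∈ Finset.range (n + 1), U (g i) with hW
  have hWo : ∀ n, IsOpen (W n) := fun n => isOpen_biUnion fun i _ => hUo (g i)
  have hWmono : ∀ {n m : ℕ}, n ≤ m → W n ⊆ W m := by
    intro n m hnm x hx
    rw [hW, mem_iUnion₂] at hx ⊢
    obtain ⟨i, hi, hxi⟩ := hx
    exact ⟨i, Finset.mem_range.2 (lt_of_lt_of_le (Finset.mem_range.1 hi) (by omega)), hxi⟩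
  have hWnot : ∀ n, ¬ C ⊆ W n := by
    intro n hsub
    refine hUnf ((Finset.range (n + 1)).image g) ?_
    intro x hx
    have := hsub hx
    rw [hW, mem_iUnion₂] at this
    obtain ⟨i, hi, hxi⟩ := this
    exact mem_iUnion₂.2 ⟨g i, Finset.mem_image_of_mem g hi, hxi⟩
  choose d hdC hdW using fun n => Set.not_subset.1 (hWnot n)
  have hcover : ∀ x ∈ C, ∃ n, x ∈ W n := by
    intro x hx
    obtain ⟨i, hi, hxi⟩ := mem_iUnion₂.1 (hrcov hx)
    obtain ⟨n, rfl⟩ : ∃ n, g n = i := by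
      have : i ∈ range g := hg ▸ hi
      exact this
    exact ⟨n, mem_iUnion₂.2 ⟨n, Finset.self_mem_range_succ n, hxi⟩⟩
  refine ⟨Set.range d, range_subset_iff.2 hdC, countable_range d, ?_, ?_⟩
  · intro hfin
    have key : ∀ s : Set X, s.Finite → (∀ y ∈ s, ∃ n, y ∈ W n) → ∃ N, s ⊆ W N := by
      intro s hs
      refine Set.Finite.induction_on s hs (fun _ => ⟨0, empty_subset _⟩) ?_
      intro a t _ _ ih hins
      obtain ⟨n₁, hn₁⟩ := hins a (mem_insert a t)
      obtain ⟨N, hN⟩ := ih fun y hy => hins y (mem_insert_of_mem a hy)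
      refine ⟨max n₁ N, insert_subset (hWmono (le_max_left _ _) hn₁)
        (hN.trans (hWmono (le_max_right _ _)))⟩
    obtain ⟨N, hN⟩ := key _ hfin fun y hy => by
      obtain ⟨m, rfl⟩ := hy; exact hcover _ (hdC m)
    exact hdW N (hN (mem_range_self N))
  · intro x hx
    obtain ⟨n, hn⟩ := hcover x hx
    refine ⟨W n, hWo n, hn, ?_⟩
    refine ((Set.finite_Iio n).image d).subset ?_
    rintro y ⟨hyW, m, rfl⟩
    refine mem_image_of_mem d ?_
    by_contra hmn
    exact hdW m (hWmono (by simpa using hmn) hyW)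

lemma exists_good_D {X : Type u} [TopologicalSpace X] [Nonempty X] [T1Space X]
    [LocallyConnectedSpace X] [LindelofSpace X]
    (hnc : ∀ x : X, ¬ IsCompact (connectedComponent x)) :
    ∃ D : Set X, D.Countable ∧
      (∀ x : X, (D ∩ connectedComponent x).Infinite) ∧
      (∀ x : X, ∃ U : Set X, IsOpen U ∧ x ∈ U ∧ (U ∩ D).Finite) := by
  classical
  have hSx : ∀ x : X, ∃ S : Set X, S ⊆ connectedComponent x ∧ S.Countable ∧ S.Infinite ∧
      ∀ y ∈ connectedComponent x, ∃ U : Set X, IsOpen U ∧ y ∈ U ∧ (U ∩ S).Finite :=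
    fun x => exists_escape_set isClosed_connectedComponent.isLindelof (hnc x)
      ⟨x, mem_connectedComponent⟩
  choose S hS1 hS2 hS3 hS4 using hSx
  set h : Set X → X := fun C => if hc : ∃ y, y ∈ C then hc.choose else Classical.arbitrary X
    with hh
  set g : X → X := fun x => h (connectedComponent x) with hg
  have hgmem : ∀ x : X, g x ∈ connectedComponent x := by
    intro x
    have hc : ∃ y, y ∈ connectedComponent x := ⟨x, mem_connectedComponent⟩
    simp only [hg, hh, dif_pos hc]
    exact hc.choose_spec
  have hcompg : ∀ x : X, connectedComponent (g x) = connectedComponent x :=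
    fun x => (connectedComponent_eq (hgmem x)).symm
  have hginv : ∀ x y : X, connectedComponent x = connectedComponent y → g x = g y := by
    intro x y hxy
    simp only [hg, hxy]
  set D : Set X := ⋃ x : X, S (g x) with hD
  have hDcomp : ∀ x : X, (D ∩ connectedComponent x).Infinite := by
    intro x
    refine (hS3 (g x)).mono ?_
    intro y hy
    exact ⟨mem_iUnion.2 ⟨x, hy⟩, (hcompg x) ▸ hS1 (g x) hy⟩
  refine ⟨D, ?_, hDcomp, ?_⟩
  · obtain ⟨r, hrc, hrcov⟩ := isLindelof_univ.elim_countable_subcover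
      (fun x : X => connectedComponent x) (fun _ => isOpen_connectedComponent)
      (fun x _ => mem_iUnion.2 ⟨x, mem_connectedComponent⟩)
    have hDeq : D = ⋃ t ∈ r, S (g t) := by
      apply Subset.antisymm
      · intro y hy
        obtain ⟨x, hx⟩ := mem_iUnion.1 hy
        obtain ⟨t, ht, hxt⟩ := mem_iUnion₂.1 (hrcov (mem_univ x))
        have : g x = g t := hginv x t ((connectedComponent_eq hxt).symm)
        exact mem_iUnion₂.2 ⟨t, ht, this ▸ hx⟩
      · intro y hy
        obtain ⟨t, _, hyt⟩ := mem_iUnion₂.1 hy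
        exact mem_iUnion.2 ⟨t, hyt⟩
    rw [hDeq]
    exact hrc.biUnion fun t _ => hS2 (g t)
  · intro x
    obtain ⟨U₀, hU₀o, hxU₀, hU₀f⟩ := hS4 (g x) x ((hcompg x) ▸ mem_connectedComponent)
    refine ⟨U₀ ∩ connectedComponent x, hU₀o.inter isOpen_connectedComponent,
      ⟨hxU₀, mem_connectedComponent⟩, hU₀f.subset ?_⟩
    rintro y ⟨⟨hyU₀, hyC⟩, hyD⟩
    obtain ⟨z, hz⟩ := mem_iUnion.1 hyD
    have h1 : y ∈ connectedComponent z := (hcompg z) ▸ hS1 (g z) hz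
    have h2 : connectedComponent x = connectedComponent z :=
      (connectedComponent_eq hyC).trans (connectedComponent_eq h1).symm
    exact ⟨hyU₀, hginv z x h2.symm ▸ hz⟩

variable {X : Type u} [TopologicalSpace X]

/-- The one-point connectification topology on `Option X` determined by a set `D ⊆ X`. -/
def connTop (D : Set X) : TopologicalSpace (Option X) where
  IsOpen O := IsOpen (some ⁻¹' O) ∧ (none ∈ O → (D \ some ⁻¹' O).Finite)
  isOpen_univ := ⟨isOpen_univ, fun _ => by simp⟩
  isOpen_inter := by
    rintro s t ⟨hs1, hs2⟩ ⟨ht1, ht2⟩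
    refine ⟨hs1.inter ht1, fun hn => ?_⟩
    have : D \ some ⁻¹' (s ∩ t) ⊆ (D \ some ⁻¹' s) ∪ (D \ some ⁻¹' t) := by
      intro x hx
      simp only [mem_diff, mem_preimage, mem_inter_iff, not_and_or] at hx
      rcases hx.2 with h | h
      · exact Or.inl ⟨hx.1, h⟩
      · exact Or.inr ⟨hx.1, h⟩
    exact ((hs2 hn.1).union (ht2 hn.2)).subset this
  isOpen_sUnion := by
    intro s hs
    refine ⟨by rw [preimage_sUnion]; exact isOpen_biUnion fun t ht => (hs t ht).1, fun hn => ?_⟩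
    obtain ⟨t, ht, hnt⟩ := mem_sUnion.1 hn
    refine ((hs t ht).2 hnt).subset ?_
    intro x hx
    exact ⟨hx.1, fun hmem => hx.2 (mem_sUnion.2 ⟨t, ht, hmem⟩)⟩

lemma connTop_isOpen {D : Set X} {O : Set (Option X)} :
    IsOpen[connTop D] O ↔ IsOpen (some ⁻¹' O) ∧ (none ∈ O → (D \ some ⁻¹' O).Finite) :=
  Iff.rfl

end Aux

/-- A nonempty locally connected Lindelöf Tychonoff space with no compact
connected component has a Lindelöf Tychonoff one-point connectification. -/
theorem one_point_connectification_lindelof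
    (X : Type u) [TopologicalSpace X] [Nonempty X] [T35Space X]
    [LocallyConnectedSpace X] [LindelofSpace X]
    (hnc : ∀ x : X, ¬ IsCompact (connectedComponent x)) :
    ∃ (Y : Type u) (_ : TopologicalSpace Y), ConnectedSpace Y ∧ T35Space Y ∧
      LindelofSpace Y ∧
      ∃ e : X → Y, IsDenseEmbedding e ∧ ∃ p : Y, (Set.range e)ᶜ = {p} := by
  classical
  obtain ⟨D, hDcnt, hDcomp, hDloc⟩ := exists_good_D hnc
  have hDinf : D.Infinite :=
    ((hDcomp (Classical.arbitrary X)).mono inter_subset_left)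
  -- every subset of D is closed in X
  have hsubD_closed : ∀ E : Set X, E ⊆ D → IsClosed E := by
    intro E hE
    rw [← isOpen_compl_iff, isOpen_iff_forall_mem_open]
    intro x hx
    obtain ⟨U, hUo, hxU, hUf⟩ := hDloc x
    refine ⟨U \ (U ∩ E), fun y hy hyE => hy.2 ⟨hy.1, hyE⟩,
      hUo.sdiff ((hUf.subset (inter_subset_inter_right U hE)).isClosed), ⟨hxU, fun h => hx h.2⟩⟩
  letI tY : TopologicalSpace (Option X) := connTop D
  have hcont : Continuous (some : X → Option X) :=
    continuous_def.2 fun O hO => (connTop_isOpen.1 hO).1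
  have hopenmap : IsOpenMap (some : X → Option X) := by
    intro U hU
    refine connTop_isOpen.2 ⟨?_, ?_⟩
    · rw [preimage_image_eq U (Option.some_injective X)]; exact hU
    · rintro ⟨x, -, h⟩; exact (Option.some_ne_none x h).elim
  have hemb : IsOpenEmbedding (some : X → Option X) :=
    IsOpenEmbedding.of_continuous_injective_isOpenMap hcont (Option.some_injective X) hopenmap
  have hdense : DenseRange (some : X → Option X) := by
    rw [DenseRange, dense_iff_inter_open]
    rintro U hU ⟨y, hy⟩
    cases y with
    | some x => exact ⟨some x, hy, mem_range_self x⟩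
    | none =>
      have hfin := (connTop_isOpen.1 hU).2 hy
      obtain ⟨z, hz⟩ := (hDinf.diff hfin).nonempty
      have hzU : some z ∈ U := by
        by_contra hnot
        exact hz.2 ⟨hz.1, hnot⟩
      exact ⟨some z, hzU, mem_range_self z⟩
  have hT1 : T1Space (Option X) := by
    constructor
    intro y
    rw [← isOpen_compl_iff]
    cases y with
    | none =>
      refine connTop_isOpen.2 ⟨?_, fun h => (h rfl).elim⟩
      have : (some : X → Option X) ⁻¹' ({none}ᶜ) = univ := by
        ext x; simp
      rw [this]; exact isOpen_univ
    | some x =>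
      refine connTop_isOpen.2 ⟨?_, fun _ => ?_⟩
      · have : (some : X → Option X) ⁻¹' ({some x}ᶜ) = {x}ᶜ := by
          ext z; simp
        rw [this]; exact isOpen_compl_singleton
      · refine ((finite_singleton x).subset ?_)
        intro z hz
        simp only [mem_diff, mem_preimage, mem_compl_iff, mem_singleton_iff, not_not] at hz
        simpa using hz.2
  haveI := hT1
  -- key: clopen sets containing `none` are everything
  have hkey : ∀ s : Set (Option X), IsClopen s → none ∈ s → s = univ := by
    intro s hs hns
    have topen : IsOpen ((some : X → Option X) ⁻¹' s) := (connTop_isOpen.1 hs.2).1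
    have tfin : (D \ (some : X → Option X) ⁻¹' s).Finite := (connTop_isOpen.1 hs.2).2 hns
    have htuniv : (some : X → Option X) ⁻¹' s = univ := by
      by_contra ht
      obtain ⟨x, hx⟩ := (ne_univ_iff_exists_notMem _).1 ht
      have hclopen : IsClopen ((some : X → Option X) ⁻¹' s)ᶜ :=
        ⟨topen.isClosed_compl, (hs.1.preimage hcont).isOpen_compl⟩
      have hsub := hclopen.connectedComponent_subset hx
      have : D ∩ connectedComponent x ⊆ D \ (some : X → Option X) ⁻¹' s :=
        fun y hy => ⟨hy.1, hsub hy.2⟩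
      exact ((hDcomp x).mono this) tfin
    ext y
    simp only [mem_univ, iff_true]
    cases y with
    | none => exact hns
    | some x =>
      have hx : x ∈ (some : X → Option X) ⁻¹' s := by rw [htuniv]; exact mem_univ x
      exact hx
  have hconn : ConnectedSpace (Option X) := by
    refine { toNonempty := ⟨none⟩, isPreconnected_univ := ?_ }
    rintro u v hu hv hcov ⟨a, -, hau⟩ ⟨b, -, hbv⟩
    by_contra hc
    rw [not_nonempty_iff_eq_empty, univ_inter] at hc
    have hdisj : ∀ y : Option X, y ∈ u → y ∈ v → False := fun y hyu hyv =>
      (eq_empty_iff_forall_notMem.1 hc y) ⟨hyu, hyv⟩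
    have huv : u = vᶜ := by
      ext y
      constructor
      · exact fun hyu hyv => hdisj y hyu hyv
      · intro hyv
        rcases hcov (mem_univ y) with h | h
        · exact h
        · exact (hyv h).elim
    have hvu : v = uᶜ := by
      rw [huv]; simp
    rcases hcov (mem_univ none) with hn | hn
    · have : u = univ := hkey u ⟨huv ▸ hv.isClosed_compl, hu⟩ hn
      exact hdisj b (this ▸ mem_univ b) hbv
    · have : v = univ := hkey v ⟨hvu ▸ hu.isClosed_compl, hv⟩ hn
      exact hdisj a hau (this ▸ mem_univ a)
  have hlin : LindelofSpace (Option X) := by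
    constructor
    have huniv : (univ : Set (Option X)) = range (some : X → Option X) ∪ {none} := by
      ext y; cases y <;> simp
    rw [huniv, ← image_univ]
    exact ((isLindelof_univ (X := X)).image hcont).union (finite_singleton none).isLindelof
  have hCR : CompletelyRegularSpace (Option X) := by
    constructor
    intro y K hK hy
    have hAcl : IsClosed ((some : X → Option X) ⁻¹' K) := hK.preimage hcont
    set A : Set X := (some : X → Option X) ⁻¹' K with hA
    cases y with
    | some x₀ =>
      have hx₀A : x₀ ∉ A := hy
      obtain ⟨U₀, hU₀o, hxU₀, hU₀f⟩ := hDloc x₀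
      have hBcl : IsClosed (A ∪ (D \ U₀)) := hAcl.union (hsubD_closed _ diff_subset)
      have hx₀B : x₀ ∉ A ∪ (D \ U₀) := by
        rintro (h | h)
        · exact hx₀A h
        · exact h.2 hxU₀
      obtain ⟨f, hfc, hf0, hf1⟩ :=
        CompletelyRegularSpace.completely_regular x₀ _ hBcl hx₀B
      refine ⟨fun y => y.elim 1 f, ?_, hf0, ?_⟩
      · rw [continuous_def]
        intro V hV
        refine connTop_isOpen.2 ⟨?_, fun hn => ?_⟩
        · show IsOpen (f ⁻¹' V)
          exact hV.preimage hfc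
        · have h1V : (1 : unitInterval) ∈ V := hn
          refine hU₀f.subset ?_
          rintro z ⟨hzD, hzV⟩
          rw [mem_preimage] at hzV
          by_contra hzU₀
          have hzB : z ∈ A ∪ (D \ U₀) := Or.inr ⟨hzD, fun h => hzU₀ ⟨h, hzD⟩⟩
          exact hzV (by show f z ∈ V; rw [hf1 hzB]; exact h1V)
      · intro k hk
        cases k with
        | none => rfl
        | some a => exact hf1 (Or.inl hk)
    | none =>
      have hfin : (D ∩ A).Finite := by
        have h2 := (connTop_isOpen.1 hK.isOpen_compl).2 hy
        refine h2.subset ?_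
        rintro z ⟨hzD, hzA⟩
        exact ⟨hzD, fun h => h hzA⟩
      have hDA : (D \ A).Infinite := by
        have := hDinf.diff hfin
        rwa [diff_self_inter] at this
      obtain ⟨d, hd⟩ := (hDcnt.mono diff_subset).exists_eq_range hDA.nonempty
      have hdmem : ∀ m : ℕ, d m ∈ D \ A := fun m => hd ▸ mem_range_self m
      set w : ℕ → ℝ := fun n => 1 / 2 / 2 ^ n with hw
      have hwpos : ∀ n, 0 ≤ w n := fun n => by positivity
      have hwsum : Summable w := summable_geometric_two' 1
      have hwtot : ∑' n, w n = 1 := tsum_geometric_two' 1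
      have hUry : ∀ n : ℕ, ∃ f : C(X, ℝ),
          EqOn f 0 (d '' Ici n) ∧ EqOn f 1 A ∧ ∀ z, f z ∈ Icc (0 : ℝ) 1 := by
        intro n
        refine exists_continuous_zero_one_of_isClosed
          (hsubD_closed _ ?_) hAcl ?_
        · rintro y ⟨m, -, rfl⟩; exact (hdmem m).1
        · rw [disjoint_left]; rintro y ⟨m, -, rfl⟩; exact (hdmem m).2
      choose h h0 h1 hmem using hUry
      set g : X → ℝ := fun z => ∑' n, w n * h n z with hg
      have hterm_nonneg : ∀ n z, 0 ≤ w n * h n z := fun n z =>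
        mul_nonneg (hwpos n) (hmem n z).1
      have hterm_le : ∀ n z, w n * h n z ≤ w n := fun n z =>
        mul_le_of_le_one_right (hwpos n) (hmem n z).2
      have htermsummable : ∀ z, Summable fun n => w n * h n z := fun z =>
        Summable.of_nonneg_of_le (fun n => hterm_nonneg n z) (fun n => hterm_le n z) hwsum
      have hg01 : ∀ z, g z ∈ Icc (0 : ℝ) 1 := fun z =>
        ⟨tsum_nonneg fun n => hterm_nonneg n z,
          le_trans ((htermsummable z).tsum_le_tsum (fun n => hterm_le n z) hwsum) hwtot.le⟩
      have hgc : Continuous g := by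
        refine continuous_tsum (fun n => continuous_const.mul (h n).continuous) hwsum ?_
        intro n z
        rw [Real.norm_eq_abs, abs_of_nonneg (hterm_nonneg n z)]
        exact hterm_le n z
      have hgA : ∀ a ∈ A, g a = 1 := by
        intro a ha
        have hterms : (fun n => w n * h n a) = w := by
          funext n; rw [h1 n ha, Pi.one_apply, mul_one]
        rw [hg]
        show (∑' n, w n * h n a) = 1
        rw [hterms, hwtot]
      have harith : ∀ m n : ℕ, w (n + (m + 1)) = (1 / 2) ^ (m + 1) * w n := by
        intro m n
        show (1 : ℝ) / 2 / 2 ^ (n + (m + 1)) = (1 / 2) ^ (m + 1) * (1 / 2 / 2 ^ n)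
        rw [pow_add, one_div, inv_pow]
        field_simp
      have hwm : ∀ m : ℕ, w m = (1 / 2 : ℝ) ^ (m + 1) := by
        intro m
        show (1 : ℝ) / 2 / 2 ^ m = (1 / 2) ^ (m + 1)
        rw [one_div, inv_pow, pow_succ]
        field_simp
      have hgd : ∀ m : ℕ, g (d m) ≤ w m := by
        intro m
        set w' : ℕ → ℝ := fun n => if m < n then w n else 0 with hw'
        have hle : ∀ n, w n * h n (d m) ≤ w' n := by
          intro n
          by_cases hmn : m < n
          · rw [hw']; simp only [if_pos hmn]; exact hterm_le n (d m)
          · rw [hw']; simp only [if_neg hmn]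
            have hz : h n (d m) = 0 := by
              have := h0 n ⟨m, by simp [mem_Ici]; omega, rfl⟩
              simpa using this
            rw [hz, mul_zero]
        have hw'nonneg : ∀ n, 0 ≤ w' n := by
          intro n; rw [hw']; dsimp only; split
          · exact hwpos n
          · exact le_rfl
        have hw'le : ∀ n, w' n ≤ w n := by
          intro n; rw [hw']; dsimp only; split
          · exact le_rfl
          · exact hwpos n
        have hw'sum : Summable w' := Summable.of_nonneg_of_le hw'nonneg hw'le hwsum
        have hw'tot : (∑' n, w' n) = w m := by
          have hsplit := (Summable.sum_add_tsum_nat_add (f := w') (m + 1) hw'sum).symm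
          have hzero : (∑ i ∈ Finset.range (m + 1), w' i) = 0 := by
            refine Finset.sum_eq_zero fun i hi => ?_
            rw [hw']; dsimp only
            rw [if_neg (by simp at hi; omega)]
          have hshift : (fun n => w' (n + (m + 1))) = fun n => (1 / 2 : ℝ) ^ (m + 1) * w n := by
            funext n
            rw [hw']; dsimp only
            rw [if_pos (by omega), harith m n]
          rw [hsplit, hzero, zero_add]
          calc (∑' n, w' (n + (m + 1))) = ∑' n, (1 / 2 : ℝ) ^ (m + 1) * w n := by rw [hshift]
            _ = (1 / 2 : ℝ) ^ (m + 1) * ∑' n, w n := tsum_mul_left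
            _ = w m := by rw [hwtot, mul_one, hwm m]
        calc g (d m) = ∑' n, w n * h n (d m) := rfl
          _ ≤ ∑' n, w' n := (htermsummable _).tsum_le_tsum hle hw'sum
          _ = w m := hw'tot
      set F : Option X → ℝ := fun y => y.elim 0 g with hF
      have hFmem : ∀ y, F y ∈ Icc (0 : ℝ) 1 := by
        rintro (_ | z)
        · exact ⟨le_rfl, zero_le_one⟩
        · exact hg01 z
      have hFc : Continuous F := by
        rw [continuous_def]
        intro V hV
        refine connTop_isOpen.2 ⟨?_, fun hn => ?_⟩
        · show IsOpen (g ⁻¹' V)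
          exact hV.preimage hgc
        · have h0V : (0 : ℝ) ∈ V := hn
          obtain ⟨ε, hε, hball⟩ := Metric.isOpen_iff.1 hV 0 h0V
          have hfinset : {m : ℕ | ε ≤ w m}.Finite := by
            obtain ⟨n₀, hn₀⟩ := exists_pow_lt_of_lt_one hε (by norm_num : (1 : ℝ) / 2 < 1)
            refine (finite_Iio n₀).subset ?_
            intro m hm
            show m < n₀
            by_contra hge
            push_neg at hge
            have h2 : ((1 : ℝ) / 2) ^ m ≤ (1 / 2) ^ n₀ :=
              pow_le_pow_of_le_one (by norm_num) (by norm_num) hge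
            have : ε ≤ (1 / 2 : ℝ) ^ n₀ := le_trans (le_trans hm (hwm m).le)
              (le_trans (pow_le_pow_of_le_one (by norm_num) (by norm_num) (by omega)) le_rfl)
            exact absurd (lt_of_le_of_lt this hn₀) (lt_irrefl ε)
          refine ((hfin.union (hfinset.image d)).subset ?_)
          rintro z ⟨hzD, hzV⟩
          by_cases hzA : z ∈ A
          · exact Or.inl ⟨hzD, hzA⟩
          · have hzr : z ∈ range d := hd ▸ (⟨hzD, hzA⟩ : z ∈ D \ A)
            obtain ⟨m, rfl⟩ := hzr
            refine Or.inr (mem_image_of_mem d ?_)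
            show ε ≤ w m
            by_contra hlt
            push_neg at hlt
            have hlt2 : g (d m) < ε := lt_of_le_of_lt (hgd m) hlt
            refine hzV ?_
            show g (d m) ∈ V
            refine hball ?_
            rw [Metric.mem_ball, Real.dist_eq, sub_zero,
              abs_of_nonneg (hg01 (d m)).1]
            exact hlt2
      refine ⟨fun y => ⟨F y, hFmem y⟩, hFc.subtype_mk hFmem, Subtype.ext rfl, ?_⟩
      intro k hk
      cases k with
      | none => exact absurd hk hy
      | some a => exact Subtype.ext (hgA a hk)
  haveI := hCR
  have hT35 : T35Space (Option X) := { }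
  refine ⟨Option X, tY, hconn, hT35, hlin, some, ?_, none, ?_⟩
  · exact ⟨⟨hemb.toIsEmbedding.toIsInducing, hdense⟩, Option.some_injective X⟩
  · ext y
    cases y with
    | none => simp
    | some x => simp
end

section
/- Let X be a nonempty locally connected paracompact Tychonoff (completely regular Hausdorff) topological space with no compact connected component. Then X has a Tychonoff one-point connectification Y which is paracompact: there exist a connected paracompact Tychonoff space Y and a dense embedding of X into Y whose complement is a singleton. -/
open Set Function Topology

/-- On a noncompact paracompact Hausdorff space there is a nonnegative continuous
real-valued function that is unbounded. -/
theorem exists_unbounded_continuous {C : Type*} [TopologicalSpace C] [T2Space C]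
    [ParacompactSpace C] (hC : ¬ CompactSpace C) :
    ∃ g : C → ℝ, Continuous g ∧ (∀ y, 0 ≤ g y) ∧ ∀ r : ℝ, ∃ y, r < g y := by
  classical
  have hnc : ¬ IsCompact (univ : Set C) := fun h => hC ⟨h⟩
  rw [isCompact_iff_finite_subcover] at hnc
  push_neg at hnc
  obtain ⟨ι, U, hUo, hUc, hU⟩ := hnc
  obtain ⟨v, hvo, hvU, hvlf, hvu⟩ := precise_refinement U hUo (univ_subset_iff.1 hUc)
  have hnofin : ∀ t : Finset ι, ¬ (univ : Set C) ⊆ ⋃ i ∈ t, v i := by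
    intro t ht
    exact hU t (ht.trans (Set.iUnion₂_mono fun i _ => hvu i))
  -- pick a point avoiding all sets of the cover that meet a given finite set
  have hpick : ∀ F : Finset C, ∃ y : C, ∀ i, y ∈ v i → ∀ z ∈ F, z ∉ v i := by
    intro F
    have hT : {i : ι | ∃ z ∈ F, z ∈ v i}.Finite := by
      have h1 : {i : ι | ∃ z ∈ F, z ∈ v i} = ⋃ z ∈ F, {i | z ∈ v i} := by
        ext i; simp
      rw [h1]
      exact F.finite_toSet.biUnion fun z _ => hvlf.point_finite z
    obtain ⟨y, hy⟩ : ∃ y : C, y ∉ ⋃ i ∈ hT.toFinset, v i := by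
      by_contra h
      push_neg at h
      exact hnofin hT.toFinset fun y _ => h y
    refine ⟨y, fun i hyi z hz hzv => hy ?_⟩
    exact Set.mem_biUnion (hT.mem_toFinset.2 ⟨z, hz, hzv⟩) hyi
  choose pick hpickspec using hpick
  set FF : ℕ → Finset C := fun n => Nat.rec ∅ (fun _ F => insert (pick F) F) n with hFF
  set x : ℕ → C := fun n => pick (FF n) with hx
  have hFFsucc : ∀ n, FF (n + 1) = insert (x n) (FF n) := fun n => rfl
  have hmem : ∀ m n, m < n → x m ∈ FF n := by
    intro m n
    induction n with
    | zero => intro h; exact absurd h (Nat.not_lt_zero m)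
    | succ k ih =>
      intro h
      rw [hFFsucc]
      rcases Nat.lt_succ_iff_lt_or_eq.1 h with h' | h'
      · exact Finset.mem_insert_of_mem (ih h')
      · subst h'; exact Finset.mem_insert_self _ _
  have hsep : ∀ m n, m < n → ∀ i, x n ∈ v i → x m ∉ v i := by
    intro m n h i hni
    exact hpickspec (FF n) i hni (x m) (hmem m n h)
  have hcov : ∀ y : C, ∃ i, y ∈ v i := by
    intro y
    have : y ∈ ⋃ i, v i := hvU ▸ mem_univ y
    exact Set.mem_iUnion.1 this
  choose J hJ using fun n => hcov (x n)
  have hJinj : Function.Injective J := by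
    intro m n h
    by_contra hne
    rcases lt_or_gt_of_ne hne with h' | h'
    · exact hsep m n h' (J n) (hJ n) (h ▸ hJ m)
    · exact hsep n m h' (J m) (hJ m) (h ▸ hJ n)
  -- bump functions
  have hphi : ∀ n : ℕ, ∃ φ : C → ℝ, Continuous φ ∧ φ (x n) = 1 ∧
      (∀ y, y ∉ v (J n) → φ y = 0) ∧ ∀ y, φ y ∈ Icc (0:ℝ) 1 := by
    intro n
    have hd : Disjoint ({x n} : Set C) (v (J n))ᶜ := by
      rw [Set.disjoint_singleton_left]
      simp [hJ n]
    obtain ⟨f, hf0, hf1, hf01⟩ := exists_continuous_zero_one_of_isClosed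
      isClosed_singleton (hvo (J n)).isClosed_compl hd
    refine ⟨fun y => 1 - f y, continuous_const.sub f.continuous, ?_, ?_, ?_⟩
    · show 1 - f (x n) = 1
      rw [hf0 rfl]; norm_num
    · intro y hy
      show 1 - f y = 0
      rw [hf1 hy]; norm_num
    · intro y
      have := hf01 y
      constructor
      · show 0 ≤ 1 - f y
        linarith [this.2]
      · show 1 - f y ≤ 1
        linarith [this.1]
  choose φ hφc hφ1 hφ0 hφI using hphi
  have hterm : ∀ (n : ℕ) (y : C), 0 ≤ (n : ℝ) * φ n y :=
    fun n y => mul_nonneg (Nat.cast_nonneg n) (hφI n y).1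
  have hsupp : ∀ n : ℕ, (support fun y => (n : ℝ) * φ n y) ⊆ (v ∘ J) n := by
    intro n y hy
    by_contra h
    exact hy (by simp [hφ0 n y h])
  have hlf2 : LocallyFinite fun n : ℕ => support fun y => (n : ℝ) * φ n y :=
    (hvlf.comp_injective hJinj).subset hsupp
  refine ⟨fun y => ∑ᶠ n : ℕ, (n : ℝ) * φ n y,
    continuous_finsum (fun n : ℕ => continuous_const.mul (hφc n)) hlf2,
    fun y => finsum_nonneg fun n : ℕ => hterm n y, ?_⟩
  intro r
  set n : ℕ := ⌈max r 0⌉₊ + 1 with hn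
  have hrn : r < (n : ℝ) := by
    have h1 : max r 0 ≤ (⌈max r 0⌉₊ : ℝ) := Nat.le_ceil _
    have h2 : ((⌈max r 0⌉₊ : ℝ)) < (n : ℝ) := by
      rw [hn]; push_cast; linarith
    calc r ≤ max r 0 := le_max_left r 0
    _ ≤ (⌈max r 0⌉₊ : ℝ) := h1
    _ < (n : ℝ) := h2
  refine ⟨x n, lt_of_lt_of_le hrn ?_⟩
  have hfin : (support fun k : ℕ => (k : ℝ) * φ k (x n)).Finite := by
    refine ((hvlf.comp_injective hJinj).point_finite (x n)).subset ?_
    intro k hk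
    by_contra h
    exact hk (by simp [hφ0 k (x n) h])
  have := single_le_finsum n hfin fun k => hterm k (x n)
  calc (n : ℝ) = (n : ℝ) * φ n (x n) := by rw [hφ1 n]; ring
  _ ≤ ∑ᶠ k : ℕ, (k : ℝ) * φ k (x n) := this

/-- A nonempty locally connected paracompact Tychonoff space with no compact
connected component has a paracompact Tychonoff one-point connectification. -/
theorem one_point_connectification_paracompact
    (X : Type u) [TopologicalSpace X] [Nonempty X] [T35Space X]
    [LocallyConnectedSpace X] [ParacompactSpace X]
    (hnc : ∀ x : X, ¬ IsCompact (connectedComponent x)) :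
    ∃ (Y : Type u) (_ : TopologicalSpace Y), ConnectedSpace Y ∧ T35Space Y ∧
      ParacompactSpace Y ∧
      ∃ e : X → Y, IsDenseEmbedding e ∧ ∃ p : Y, (Set.range e)ᶜ = {p} := by
  classical
  -- Step 1: a continuous function on X, unbounded on every connected component.
  have hcomp : ∀ x : X, ∃ h : X → ℝ, Continuous h ∧
      ∀ r : ℝ, ∃ y ∈ connectedComponent x, r < h y := by
    intro x
    set C := connectedComponent x with hCdef
    have hCcl : IsClosed C := isClosed_connectedComponent
    have hCop : IsOpen C := isOpen_connectedComponent
    haveI : ParacompactSpace C := hCcl.isClosedEmbedding_subtypeVal.paracompactSpace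
    have hCnc : ¬ CompactSpace C := fun h => hnc x (isCompact_iff_compactSpace.2 h)
    obtain ⟨g, hgc, hg0, hgu⟩ := exists_unbounded_continuous hCnc
    refine ⟨fun y => if hy : y ∈ C then g ⟨y, hy⟩ else 0, ?_, ?_⟩
    · rw [continuous_iff_continuousAt]
      intro y
      by_cases hy : y ∈ C
      · have hco : ContinuousOn (fun y => if hy : y ∈ C then g ⟨y, hy⟩ else 0) C := by
          rw [continuousOn_iff_continuous_restrict]
          have : C.domRestrict (fun y => if hy : y ∈ C then g ⟨y, hy⟩ else 0) = g := by
            ext z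
            show (if hy : (z : X) ∈ C then g ⟨z, hy⟩ else 0) = g z
            rw [dif_pos z.2]
          rw [this]; exact hgc
        exact hco.continuousAt (hCop.mem_nhds hy)
      · have hco : ContinuousOn (fun y => if hy : y ∈ C then g ⟨y, hy⟩ else 0) Cᶜ := by
          rw [continuousOn_iff_continuous_restrict]
          have : Cᶜ.domRestrict (fun y => if hy : y ∈ C then g ⟨y, hy⟩ else 0) =
              fun _ => (0 : ℝ) := by
            ext z
            show (if hy : (z : X) ∈ C then g ⟨z, hy⟩ else 0) = 0
            rw [dif_neg z.2]
          rw [this]; exact continuous_const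
        exact hco.continuousAt (hCcl.isOpen_compl.mem_nhds hy)
    · intro r
      obtain ⟨p, hp⟩ := hgu r
      refine ⟨(p : X), p.2, ?_⟩
      simpa [p.2] using hp
  choose h hhc hhu using hcomp
  choose rep hrep using (ConnectedComponents.surjective_coe (α := X))
  set f : X → ℝ := fun y => h (rep (ConnectedComponents.mk y)) y with hfdef
  have hsame : ∀ y z : X, z ∈ connectedComponent y →
      rep (ConnectedComponents.mk z) = rep (ConnectedComponents.mk y) := by
    intro y z hz
    have : (ConnectedComponents.mk z) = ConnectedComponents.mk y :=
      ConnectedComponents.coe_eq_coe'.2 hz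
    rw [this]
  have hfc : Continuous f := by
    rw [continuous_iff_continuousAt]
    intro y
    have hco : ContinuousAt (h (rep (ConnectedComponents.mk y))) y :=
      (hhc _).continuousAt
    refine hco.congr ?_
    refine Filter.eventuallyEq_of_mem
      (isOpen_connectedComponent.mem_nhds mem_connectedComponent) ?_
    intro z hz
    simp only [hfdef]
    rw [hsame y z hz]
  have hfu : ∀ (y : X) (r : ℝ), ∃ z ∈ connectedComponent y, r < f z := by
    intro y r
    set w := rep (ConnectedComponents.mk y) with hw
    have hwy : connectedComponent w = connectedComponent y :=
      ConnectedComponents.coe_eq_coe.1 (hrep (ConnectedComponents.mk y))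
    obtain ⟨z, hz, hzr⟩ := hhu w r
    rw [hwy] at hz
    refine ⟨z, hz, ?_⟩
    have : rep (ConnectedComponents.mk z) = w := by rw [hw]; exact hsame y z hz
    simp only [hfdef]
    rw [this]
    exact hzr
  -- Step 2: the one-point connectification topology on `Option X`.
  letI tY : TopologicalSpace (Option X) :=
    { IsOpen := fun S => IsOpen (some ⁻¹' S) ∧
        (none ∈ S → ∃ r : ℝ, ∀ x : X, r < f x → some x ∈ S)
      isOpen_univ := ⟨isOpen_univ, fun _ => ⟨0, fun _ _ => mem_univ _⟩⟩
      isOpen_inter := fun S T hS hT => by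
        refine ⟨hS.1.inter hT.1, fun hn => ?_⟩
        obtain ⟨r, hr⟩ := hS.2 hn.1
        obtain ⟨s, hs⟩ := hT.2 hn.2
        exact ⟨max r s, fun x hx =>
          ⟨hr x ((le_max_left r s).trans_lt hx), hs x ((le_max_right r s).trans_lt hx)⟩⟩
      isOpen_sUnion := fun 𝒮 hS => by
        constructor
        · rw [Set.preimage_sUnion]
          exact isOpen_biUnion fun t ht => (hS t ht).1
        · intro hn
          rw [Set.mem_sUnion] at hn
          obtain ⟨T, hT𝒮, hnT⟩ := hn
          obtain ⟨r, hr⟩ := (hS T hT𝒮).2 hnT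
          exact ⟨r, fun x hx => Set.mem_sUnion.2 ⟨T, hT𝒮, hr x hx⟩⟩ }
  have hopen : ∀ S : Set (Option X), IsOpen S ↔ IsOpen (some ⁻¹' S) ∧
      (none ∈ S → ∃ r : ℝ, ∀ x : X, r < f x → some x ∈ S) := fun _ => Iff.rfl
  have hXopen : ∀ U : Set X, IsOpen U → IsOpen (some '' U : Set (Option X)) := by
    intro U hU
    rw [hopen]
    constructor
    · rw [preimage_image_eq U (Option.some_injective X)]; exact hU
    · rintro ⟨z, -, hz⟩
      exact absurd hz (Option.some_ne_none z)
  have hWpre : ∀ r : ℝ, (some ⁻¹' (insert none (some '' (f ⁻¹' Ioi r)) : Set (Option X)))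
      = f ⁻¹' Ioi r := by
    intro r; ext z; simp
  have hWopen : ∀ r : ℝ, IsOpen (insert none (some '' (f ⁻¹' Ioi r)) : Set (Option X)) := by
    intro r
    rw [hopen]
    refine ⟨?_, fun _ => ⟨r, fun z hz => Set.mem_insert_of_mem _ ⟨z, hz, rfl⟩⟩⟩
    rw [hWpre r]
    exact isOpen_Ioi.preimage hfc
  -- the embedding
  have hind : Topology.IsInducing (some : X → Option X) := by
    refine ⟨TopologicalSpace.ext_iff.2 fun s => ?_⟩
    rw [isOpen_induced_iff]
    constructor
    · intro hs
      exact ⟨some '' s, hXopen s hs, preimage_image_eq s (Option.some_injective X)⟩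
    · rintro ⟨t, ht, rfl⟩
      exact ((hopen t).1 ht).1
  -- Hausdorff
  have hsepn : ∀ x : X, ∃ u v : Set (Option X), IsOpen u ∧ IsOpen v ∧
      some x ∈ u ∧ none ∈ v ∧ Disjoint u v := by
    intro x
    refine ⟨some '' (f ⁻¹' Iio (f x + 1)), insert none (some '' (f ⁻¹' Ioi (f x + 1))),
      hXopen _ (isOpen_Iio.preimage hfc), hWopen _, ⟨x, by simp, rfl⟩,
      Set.mem_insert _ _, ?_⟩
    rw [Set.disjoint_left]
    rintro w hw1 hw2
    obtain ⟨z, hz, rfl⟩ := hw1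
    rcases Set.mem_insert_iff.1 hw2 with hw | ⟨q, hq, hqw⟩
    · exact Option.some_ne_none z hw
    · have hqz : q = z := Option.some_injective X hqw
      rw [hqz] at hq
      have h1 : f z < f x + 1 := hz
      have h2 : f x + 1 < f z := hq
      linarith
  haveI hT2 : T2Space (Option X) := by
    constructor
    intro a b hab
    match a, b with
    | some x, some y =>
      have hxy : x ≠ y := fun hxy => hab (by rw [hxy])
      obtain ⟨u, v, hu, hv, hxu, hyv, huv⟩ := t2_separation hxy
      exact ⟨some '' u, some '' v, hXopen u hu, hXopen v hv, ⟨x, hxu, rfl⟩, ⟨y, hyv, rfl⟩,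
        (Set.disjoint_image_iff (Option.some_injective X)).2 huv⟩
    | some x, none =>
      obtain ⟨u, v, hu, hv, hxu, hnv, huv⟩ := hsepn x
      exact ⟨u, v, hu, hv, hxu, hnv, huv⟩
    | none, some x =>
      obtain ⟨u, v, hu, hv, hxu, hnv, huv⟩ := hsepn x
      exact ⟨v, u, hv, hu, hnv, hxu, huv.symm⟩
    | none, none => exact absurd rfl hab
  -- Connectedness
  have hkey : ∀ u v : Set (Option X), IsOpen u → IsOpen v → univ ⊆ u ∪ v → none ∈ u →
      v.Nonempty → Disjoint u v → False := by
    intro u v hu hv hcov hnu hvne hd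
    obtain ⟨b, hb⟩ := hvne
    have hbn : b ≠ none := fun hbe => Set.disjoint_left.1 hd hnu (hbe ▸ hb)
    obtain ⟨bx, rfl⟩ := Option.ne_none_iff_exists'.1 hbn
    set V : Set X := some ⁻¹' v with hV
    have hVo : IsOpen V := ((hopen v).1 hv).1
    have hVcompl : Vᶜ = some ⁻¹' u := by
      ext z
      constructor
      · intro hz
        rcases hcov (mem_univ (some z)) with h | h
        · exact h
        · exact absurd h hz
      · intro hz hzv
        exact Set.disjoint_left.1 hd hz hzv
    have hVc : IsClosed V := by
      rw [← isOpen_compl_iff, hVcompl]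
      exact ((hopen u).1 hu).1
    obtain ⟨r, hr⟩ := ((hopen u).1 hu).2 hnu
    obtain ⟨z, hz, hzr⟩ := hfu bx r
    have hzV : z ∈ V := IsClopen.connectedComponent_subset ⟨hVc, hVo⟩ hb hz
    exact Set.disjoint_left.1 hd (hr z hzr) hzV
  have hpre : IsPreconnected (univ : Set (Option X)) := by
    intro u v hu hv hcov hune hvne
    obtain ⟨a, -, hau⟩ := hune
    obtain ⟨b, -, hbv⟩ := hvne
    by_contra hne
    have hd : Disjoint u v := by
      rw [Set.disjoint_iff_inter_eq_empty]
      by_contra hne'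
      obtain ⟨w, hw⟩ := Set.nonempty_iff_ne_empty.2 hne'
      exact hne ⟨w, mem_univ w, hw⟩
    rcases hcov (mem_univ none) with hnu | hnv
    · exact hkey u v hu hv hcov hnu ⟨b, hbv⟩ hd
    · exact hkey v u hv hu (by rwa [Set.union_comm]) hnv ⟨a, hau⟩ hd.symm
  haveI : ConnectedSpace (Option X) :=
    { isPreconnected_univ := hpre
      toNonempty := ⟨none⟩ }
  -- Paracompactness
  haveI hpara : ParacompactSpace (Option X) := by
    constructor
    intro α s hso hsc
    obtain ⟨a₀, ha₀⟩ : ∃ a, none ∈ s a := by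
      have : none ∈ ⋃ a, s a := hsc ▸ mem_univ none
      exact mem_iUnion.1 this
    obtain ⟨r₀, hr₀⟩ := ((hopen (s a₀)).1 (hso a₀)).2 ha₀
    set u : Option α → Set X := fun o => match o with
      | none => f ⁻¹' Ioi r₀
      | some a => some ⁻¹' s a ∩ f ⁻¹' Iio (r₀ + 1) with hudef
    have huo : ∀ o, IsOpen (u o) := by
      rintro (_ | a)
      · exact isOpen_Ioi.preimage hfc
      · exact (((hopen (s a)).1 (hso a)).1).inter (isOpen_Iio.preimage hfc)
    have huc : ⋃ o, u o = univ := by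
      rw [eq_univ_iff_forall]
      intro z
      rcases lt_or_ge (f z) (r₀ + 1) with hlt | hle
      · have : some z ∈ ⋃ a, s a := hsc ▸ mem_univ _
        obtain ⟨a, ha⟩ := mem_iUnion.1 this
        exact mem_iUnion.2 ⟨some a, ⟨ha, hlt⟩⟩
      · exact mem_iUnion.2 ⟨none, lt_of_lt_of_le (lt_add_one r₀) hle⟩
    obtain ⟨v, hvo, hvc, hvlf, hvu⟩ := precise_refinement u huo huc
    refine ⟨Option (Option α), fun o => match o with
      | none => insert none (some '' (f ⁻¹' Ioi r₀))
      | some i => some '' v i, ?_, ?_, ?_, ?_⟩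
    · rintro (_ | i)
      · exact hWopen r₀
      · exact hXopen _ (hvo i)
    · rw [eq_univ_iff_forall]
      rintro (_ | z)
      · exact mem_iUnion.2 ⟨none, Set.mem_insert _ _⟩
      · have : z ∈ ⋃ i, v i := hvc ▸ mem_univ z
        obtain ⟨i, hi⟩ := mem_iUnion.1 this
        exact mem_iUnion.2 ⟨some i, ⟨z, hi, rfl⟩⟩
    · rintro (_ | z)
      · refine ⟨insert none (some '' (f ⁻¹' Ioi (r₀ + 1))),
          (hWopen (r₀ + 1)).mem_nhds (Set.mem_insert _ _), ?_⟩
        refine Set.Finite.subset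
          ((Set.finite_singleton (some none)).insert none) ?_
        rintro (_ | i) ⟨w, hw1, hw2⟩
        · exact Set.mem_insert _ _
        · match i with
          | none => exact Set.mem_insert_of_mem _ rfl
          | some a =>
            exfalso
            obtain ⟨q, hq, rfl⟩ := hw1
            rcases Set.mem_insert_iff.1 hw2 with hw2 | ⟨p, hp, hpq⟩
            · exact Option.some_ne_none q hw2
            · have hpq' : p = q := Option.some_injective X hpq
              rw [hpq'] at hp
              have h1 : f q < r₀ + 1 := (hvu (some a) hq).2
              have h2 : r₀ + 1 < f q := hp
              linarith
      · obtain ⟨N, hN, hNfin⟩ := hvlf z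
        obtain ⟨O, hON, hOo, hzO⟩ := mem_nhds_iff.1 hN
        refine ⟨some '' O, (hXopen O hOo).mem_nhds ⟨z, hzO, rfl⟩, ?_⟩
        refine Set.Finite.subset ((hNfin.image some).insert none) ?_
        rintro (_ | i) ⟨w, hw1, hw2⟩
        · exact Set.mem_insert _ _
        · obtain ⟨q, hq, rfl⟩ := hw2
          obtain ⟨p, hp, hpq⟩ := hw1
          have hpq' : p = q := Option.some_injective X hpq
          rw [hpq'] at hp
          exact Set.mem_insert_of_mem _ ⟨i, ⟨q, hp, hON hq⟩, rfl⟩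
    · rintro (_ | i)
      · refine ⟨a₀, ?_⟩
        intro w hw
        rcases Set.mem_insert_iff.1 hw with rfl | ⟨z, hz, rfl⟩
        · exact ha₀
        · exact hr₀ z hz
      · match i with
        | none =>
          refine ⟨a₀, ?_⟩
          rintro w ⟨z, hz, rfl⟩
          exact hr₀ z (hvu none hz)
        | some a =>
          refine ⟨a, ?_⟩
          rintro w ⟨z, hz, rfl⟩
          exact (hvu (some a) hz).1
  haveI : T35Space (Option X) := inferInstance
  -- Conclusion
  refine ⟨Option X, tY, inferInstance, inferInstance, inferInstance, some, ?_, ?_⟩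
  · refine ⟨⟨hind, ?_⟩, Option.some_injective X⟩
    rw [DenseRange, dense_iff_inter_open]
    intro U hU hUne
    obtain ⟨w, hw⟩ := hUne
    match w with
    | some z => exact ⟨some z, hw, mem_range_self z⟩
    | none =>
      obtain ⟨r, hr⟩ := ((hopen U).1 hU).2 hw
      obtain ⟨z, -, hzr⟩ := hfu (Classical.arbitrary X) r
      exact ⟨some z, hr z hzr, mem_range_self z⟩
  · refine ⟨none, ?_⟩
    ext w
    match w with
    | some z => simp
    | none => simp [Option.some_ne_none]
end

section
/- Let X be a nonempty locally connected T1 topological space with no compact connected component. Then X has a T1 one-point connectification: there exist a connected T1 space Y and a dense embedding of X into Y whose complement Y \ X is a singleton. -/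
open OnePoint Set Topology

/-- A nonempty locally connected T₁ space with no compact connected component
has a T₁ one-point connectification. -/
theorem one_point_connectification_t1
    (X : Type u) [TopologicalSpace X] [Nonempty X] [T1Space X]
    [LocallyConnectedSpace X]
    (hnc : ∀ x : X, ¬ IsCompact (connectedComponent x)) :
    ∃ (Y : Type u) (_ : TopologicalSpace Y), ConnectedSpace Y ∧ T1Space Y ∧
      ∃ e : X → Y, IsDenseEmbedding e ∧ ∃ p : Y, (Set.range e)ᶜ = {p} := by
  haveI : NoncompactSpace X := by
    refine ⟨fun h => hnc (Classical.arbitrary X) ?_⟩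
    exact h.of_isClosed_subset isClosed_connectedComponent (subset_univ _)
  -- Key: any clopen set in `OnePoint X` not containing `∞` is empty.
  have key : ∀ w : Set (OnePoint X), IsOpen w → IsClosed w → (∞ : OnePoint X) ∉ w →
      w = ∅ := by
    intro w hwo hwc hinf
    have hwr : w ⊆ range ((↑) : X → OnePoint X) := by
      intro z hz
      rcases z with _ | x
      · exact absurd hz hinf
      · exact ⟨x, rfl⟩
    have hwcpt : IsCompact w := hwc.isCompact
    set W : Set X := ((↑) : X → OnePoint X) ⁻¹' w with hW
    have hWcpt : IsCompact W :=
      isOpenEmbedding_coe.isInducing.isCompact_preimage' hwcpt hwr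
    have hWo : IsOpen W := hwo.preimage continuous_coe
    have hWc : IsClosed W := hwc.preimage continuous_coe
    rcases W.eq_empty_or_nonempty with hWe | ⟨x, hx⟩
    · have : w = ((↑) : X → OnePoint X) '' W := by
        rw [hW, image_preimage_eq_iff.2 hwr]
      rw [this, hWe, image_empty]
    · exfalso
      apply hnc x
      have hsub : connectedComponent x ⊆ W :=
        IsClopen.connectedComponent_subset ⟨hWc, hWo⟩ hx
      exact hWcpt.of_isClosed_subset isClosed_connectedComponent hsub
  have hconn : ConnectedSpace (OnePoint X) := by
    haveI : PreconnectedSpace (OnePoint X) := by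
      constructor
      rw [isPreconnected_iff_subset_of_disjoint]
      intro u v hu hv hcov hdisj
      have hdisj' : u ∩ v = ∅ := by
        rw [univ_inter] at hdisj; exact hdisj
      have hcov' : u ∪ v = univ := univ_subset_iff.1 hcov
      rcases (mem_union _ _ _).1 (hcov (mem_univ (∞ : OnePoint X))) with hinf | hinf
      · left
        have hvc : v = uᶜ := by
          apply Subset.antisymm
          · intro z hz hzu
            exact (hdisj'.le (⟨hzu, hz⟩ : z ∈ u ∩ v))
          · intro z hz
            rcases (mem_union _ _ _).1 (hcov (mem_univ z)) with h | h
            · exact absurd h hz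
            · exact h
        have hvinf : (∞ : OnePoint X) ∉ v := by rw [hvc]; simpa using hinf
        have : v = ∅ := key v hv (by rw [hvc]; exact hu.isClosed_compl) hvinf
        intro z _
        rcases (mem_union _ _ _).1 (hcov (mem_univ z)) with h | h
        · exact h
        · rw [this] at h; exact absurd h (notMem_empty z)
      · right
        have huc : u = vᶜ := by
          apply Subset.antisymm
          · intro z hz hzv
            exact (hdisj'.le (⟨hz, hzv⟩ : z ∈ u ∩ v))
          · intro z hz
            rcases (mem_union _ _ _).1 (hcov (mem_univ z)) with h | h
            · exact h
            · exact absurd h hz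
        have huinf : (∞ : OnePoint X) ∉ u := by rw [huc]; simpa using hinf
        have : u = ∅ := key u hu (by rw [huc]; exact hv.isClosed_compl) huinf
        intro z _
        rcases (mem_union _ _ _).1 (hcov (mem_univ z)) with h | h
        · rw [this] at h; exact absurd h (notMem_empty z)
        · exact h
    exact ⟨inferInstance⟩
  refine ⟨OnePoint X, inferInstance, hconn, inferInstance,
    ((↑·) : X → OnePoint X), isDenseEmbedding_coe, ∞, ?_⟩
  exact compl_range_coe
end

section
/- Let 𝒫 be a topological property (a class of topological spaces closed under homeomorphism) that is: (i) closed hereditary — every closed subspace of a space with 𝒫 has 𝒫; (ii) finitely additive — every space expressible as a finite disjoint union of closed subspaces each having 𝒫 has 𝒫; and (iii) co-local — a space Z has 𝒫 whenever Z contains a point q with an open neighborhood base ℬ at q such that Z \ B has 𝒫 for every B ∈ ℬ. Let X be a nonempty locally connected T1 topological space with no compact connected component such that every connected component of X (as a subspace) has 𝒫. Then X has a T1 one-point connectification Y which has 𝒫. -/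
open Set Topology

/-- A set-within-a-subtype is homeomorphic to the corresponding intersection. -/
noncomputable def subtypePreimageHomeo {X : Type u} [TopologicalSpace X] (t s : Set X) :
    (↥(Subtype.val ⁻¹' s : Set ↥t)) ≃ₜ ↥(t ∩ s) := by
  have hemb : Topology.IsEmbedding (fun z : ↥(Subtype.val ⁻¹' s : Set ↥t) => (z.1.1 : X)) :=
    Topology.IsEmbedding.subtypeVal.comp Topology.IsEmbedding.subtypeVal
  refine (Topology.IsEmbedding.toHomeomorph hemb).trans (Homeomorph.setCongr ?_)
  ext x
  constructor
  · rintro ⟨z, rfl⟩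
    exact ⟨z.1.2, z.2⟩
  · rintro ⟨hxt, hxs⟩
    exact ⟨⟨⟨x, hxt⟩, hxs⟩, rfl⟩

/-- Let `P` be a topological property that is invariant under homeomorphism,
closed hereditary, finitely additive, and co-local.  If `X` is a nonempty
locally connected T₁ space with no compact connected component all of whose
connected components have `P`, then `X` has a T₁ one-point connectification
with `P`. -/
theorem one_point_connectification_t1_with_property
    (P : (Z : Type u) → [TopologicalSpace Z] → Prop)
    (hhomeo : ∀ (Z W : Type u) [TopologicalSpace Z] [TopologicalSpace W],
      Z ≃ₜ W → P Z → P W)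
    (hclosed : ∀ (Z : Type u) [TopologicalSpace Z], P Z →
      ∀ F : Set Z, IsClosed F → P F)
    (hadd : ∀ (Z : Type u) [TopologicalSpace Z] (n : ℕ) (F : Fin n → Set Z),
      (∀ i, IsClosed (F i)) → (∀ i, P (F i)) →
      Pairwise (Function.onFun Disjoint F) → (⋃ i, F i) = Set.univ → P Z)
    (hcoloc : ∀ (Z : Type u) [TopologicalSpace Z] (q : Z) (B : Set (Set Z)),
      (∀ b ∈ B, IsOpen b ∧ q ∈ b) →
      (∀ U : Set Z, IsOpen U → q ∈ U → ∃ b ∈ B, b ⊆ U) →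
      (∀ b ∈ B, P (↥(bᶜ))) → P Z)
    (X : Type u) [TopologicalSpace X] [Nonempty X] [T1Space X]
    [LocallyConnectedSpace X]
    (hnc : ∀ x : X, ¬ IsCompact (connectedComponent x))
    (hP : ∀ x : X, P (connectedComponent x)) :
    ∃ (Y : Type u) (_ : TopologicalSpace Y), ConnectedSpace Y ∧ T1Space Y ∧ P Y ∧
      ∃ e : X → Y, IsDenseEmbedding e ∧ ∃ p : Y, (Set.range e)ᶜ = {p} := by
  -- X is noncompact
  have hnoncompact : NoncompactSpace X := by
    refine ⟨fun h => hnc (Classical.arbitrary X) ?_⟩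
    exact h.of_isClosed_subset isClosed_connectedComponent (subset_univ _)
  -- every compact closed subset of X has P
  have hPK : ∀ K : Set X, IsCompact K → IsClosed K → P ↥K := by
    intro K hKc hKcl
    classical
    have hcover : K ⊆ ⋃ x : X, connectedComponent x :=
      fun x _ => mem_iUnion.2 ⟨x, mem_connectedComponent⟩
    obtain ⟨t, ht⟩ := hKc.elim_finite_subcover (fun x : X => connectedComponent x)
      (fun x => isOpen_connectedComponent) hcover
    set S : Finset (Set X) := t.image connectedComponent with hS
    have hSmem : ∀ C ∈ S, ∃ x : X, C = connectedComponent x := by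
      intro C hC
      obtain ⟨x, _, hx⟩ := Finset.mem_image.1 hC
      exact ⟨x, hx.symm⟩
    set n := S.card
    set e := S.equivFin
    set F : Fin n → Set ↥K := fun i => Subtype.val ⁻¹' ((e.symm i : Set X)) with hF
    have hFclosed : ∀ i, IsClosed (F i) := by
      intro i
      obtain ⟨x, hx⟩ := hSmem _ (e.symm i).2
      rw [hF]
      simp only [hx]
      exact isClosed_connectedComponent.preimage continuous_subtype_val
    have hFP : ∀ i, P (F i) := by
      intro i
      obtain ⟨x, hx⟩ := hSmem _ (e.symm i).2
      have hD : IsClosed (Subtype.val ⁻¹' K : Set ↥(connectedComponent x)) :=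
        hKcl.preimage continuous_subtype_val
      have hPD := hclosed _ (hP x) _ hD
      have h1 := hhomeo _ _ (subtypePreimageHomeo (connectedComponent x) K) hPD
      have h2 := hhomeo _ _ (Homeomorph.setCongr (inter_comm (connectedComponent x) K)) h1
      have h3 := hhomeo _ _ (subtypePreimageHomeo K (connectedComponent x)).symm h2
      have : F i = (Subtype.val ⁻¹' (connectedComponent x) : Set ↥K) := by
        rw [hF]; simp only [hx]
      rw [this]
      exact h3
    have hFdisj : Pairwise (Function.onFun Disjoint F) := by
      intro i j hij
      have hne : (e.symm i : Set X) ≠ (e.symm j : Set X) := by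
        intro h
        exact hij (e.symm.injective (Subtype.val_injective h) ▸ rfl)
      obtain ⟨x, hx⟩ := hSmem _ (e.symm i).2
      obtain ⟨y, hy⟩ := hSmem _ (e.symm j).2
      have : Disjoint (e.symm i : Set X) (e.symm j : Set X) := by
        rw [hx, hy]
        exact connectedComponent_disjoint (by rw [← hx, ← hy]; exact hne)
      exact this.preimage _
    have hFunion : (⋃ i, F i) = Set.univ := by
      ext k
      simp only [mem_univ, iff_true, mem_iUnion]
      have := ht k.2
      simp only [mem_iUnion] at this
      obtain ⟨x, hxt, hk⟩ := this
      have hmem : connectedComponent x ∈ S := Finset.mem_image_of_mem _ hxt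
      refine ⟨e ⟨connectedComponent x, hmem⟩, ?_⟩
      rw [hF]
      simp only [Equiv.symm_apply_apply]
      exact hk
    exact hadd _ n F hFclosed hFP hFdisj hFunion
  -- key fact: clopen sets avoiding ∞ are empty
  have key : ∀ s : Set (OnePoint X), IsClopen s → OnePoint.infty ∉ s → s = ∅ := by
    intro s hs hinf
    set U : Set X := (↑) ⁻¹' s with hU
    have hUopen : IsOpen U := (OnePoint.isOpen_iff_of_notMem hinf).1 hs.2
    have hUclosed : IsClosed U := hs.1.preimage OnePoint.continuous_coe
    have hUcompact : IsCompact U := by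
      have hmem : OnePoint.infty ∈ sᶜ := hinf
      have := (OnePoint.isOpen_iff_of_mem hmem).1 hs.1.isOpen_compl
      have h2 : ((↑) ⁻¹' sᶜ : Set X)ᶜ = U := by
        rw [hU, preimage_compl, compl_compl]
      rw [h2] at this
      exact this.2
    have hUempty : U = ∅ := by
      by_contra h
      obtain ⟨x, hx⟩ := nonempty_iff_ne_empty.2 h
      have hsub : connectedComponent x ⊆ U :=
        IsClopen.connectedComponent_subset ⟨hUclosed, hUopen⟩ hx
      exact hnc x (hUcompact.of_isClosed_subset isClosed_connectedComponent hsub)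
    ext z
    simp only [mem_empty_iff_false, iff_false]
    intro hz
    rcases eq_or_ne z OnePoint.infty with rfl | hzne
    · exact hinf hz
    · obtain ⟨x, rfl⟩ := OnePoint.ne_infty_iff_exists.1 hzne
      have : x ∈ U := hz
      rw [hUempty] at this
      exact this
  -- connectedness of OnePoint X
  have hconn : ConnectedSpace (OnePoint X) := by
    have hpre : PreconnectedSpace (OnePoint X) := by
      refine { isPreconnected_univ := ?_ }
      intro u v hu hv hcov ⟨a, _, ha⟩ ⟨b, _, hb⟩
      by_contra hne
      have hdisj : ∀ z, z ∈ u → z ∈ v → False := by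
        intro z hzu hzv
        exact hne ⟨z, mem_univ z, hzu, hzv⟩
      have hvcompl : v = uᶜ := by
        ext z
        constructor
        · intro hzv hzu
          exact hdisj z hzu hzv
        · intro hzu
          rcases hcov (mem_univ z) with h | h
          · exact absurd h hzu
          · exact h
      have hucl : IsClopen u := ⟨by rw [← compl_compl u, ← hvcompl]; exact hv.isClosed_compl, hu⟩
      have hvcl : IsClopen v := by rw [hvcompl]; exact hucl.compl
      rcases Classical.em (OnePoint.infty ∈ u) with h | h
      · have : v = ∅ := key v hvcl (by rw [hvcompl]; simpa using h)
        rw [this] at hb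
        exact hb
      · have : u = ∅ := key u hucl h
        rw [this] at ha
        exact ha
    exact { toPreconnectedSpace := hpre, toNonempty := inferInstance }
  -- P holds for OnePoint X
  have hPY : P (OnePoint X) := by
    refine hcoloc _ OnePoint.infty {s | IsOpen s ∧ OnePoint.infty ∈ s}
      (fun b hb => hb) (fun U hUo hUm => ⟨U, ⟨hUo, hUm⟩, subset_rfl⟩) ?_
    rintro b ⟨hbo, hbm⟩
    set K : Set X := (↑) ⁻¹' bᶜ with hK
    have hKc : IsCompact K := by
      have := (OnePoint.isOpen_iff_of_mem hbm).1 hbo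
      have h2 : ((↑) ⁻¹' b : Set X)ᶜ = K := by rw [hK, preimage_compl]
      rw [h2] at this
      exact this.2
    have hKcl : IsClosed K := hbo.isClosed_compl.preimage OnePoint.continuous_coe
    have hPKb := hPK K hKc hKcl
    -- homeomorphism ↥K ≃ₜ ↥(bᶜ)
    have hemb : Topology.IsEmbedding (fun k : ↥K => ((k.1 : X) : OnePoint X)) :=
      OnePoint.isOpenEmbedding_coe.isEmbedding.comp Topology.IsEmbedding.subtypeVal
    have hrange : Set.range (fun k : ↥K => ((k.1 : X) : OnePoint X)) = bᶜ := by
      ext z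
      constructor
      · rintro ⟨k, rfl⟩
        exact k.2
      · intro hz
        rcases eq_or_ne z OnePoint.infty with rfl | hzne
        · exact absurd hbm hz
        · obtain ⟨x, rfl⟩ := OnePoint.ne_infty_iff_exists.1 hzne
          exact ⟨⟨x, hz⟩, rfl⟩
    exact hhomeo _ _ ((Topology.IsEmbedding.toHomeomorph hemb).trans (Homeomorph.setCongr hrange)) hPKb
  refine ⟨OnePoint X, inferInstance, hconn, inferInstance, hPY,
    ((↑) : X → OnePoint X), OnePoint.isDenseEmbedding_coe, OnePoint.infty, ?_⟩
  exact OnePoint.compl_range_coe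
end
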